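/- arXiv:math/0307355 — 16 statements merged into one kernel-verified Lean document; each statement's English description precedes it below -/
import Mathlib

section
/- Let N be a free ℤ-module of rank 2 with a nondegenerate even symmetric bilinear form B whose Gram matrix with respect to a ℤ-basis has negative determinant, and let H ∈ N satisfy B(H,H) = 2rs, where r,s ≥ 1 are integers, and suppose x ↦ B(H,x) is surjective from N onto ℤ. Then there exist δ ∈ N, a positive integer d, and an integer μ such that: the determinant of the Gram matrix equals −d; the orthogonal complement {x ∈ N : B(H,x) = 0} equals ℤ·δ; B(δ,δ) = −2rsd; gcd(μ, 2rs) = 1; μ² ≡ d (mod 4rs); there exists v ∈ N with 2rs·v = μH + δ and N = ℤH + ℤδ + ℤv; and every z ∈ N satisfies 2rs·z = xH + yδ for unique integers x, y with x ≡ μy (mod 2rs), in which case B(z,z) = (x² − dy²)/(2rs). -/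
/-!
Choose `f` with `B(H, f) = 1`. Then `N = ℤ f ⊕ H^⊥`, and in coordinates for the basis `e`,
`H^⊥ = ℤ δ` with `δ = B(H, e₁) e₀ - B(H, e₀) e₁`, so `(f, δ)` is a basis. A unimodular change of
basis does not change the Gram determinant, so it is `B(f, f) B(δ, δ) - B(f, δ)² =: -d`.
Writing `H = n f + t δ` with `n = 2rs`, the relations `n B(f, f) + t B(f, δ) = 1` and
`n B(f, δ) + t B(δ, δ) = 0` give `B(δ, δ) = -n d`, show that `μ := -B(f, δ)` is prime to `n`,
and make `v := μ f + B(f, f) δ` satisfy `n v = μ H + δ`. Finally `n B(v, v) = μ² - d`, and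
`B(v, v)` is even, so `μ² ≡ d (mod 2n)`.
-/

open LinearMap (BilinForm)
open Module (Basis)

theorem LinearMap.exists_eq_apply_smul_add_smul {R M : Type*} [CommRing R] [AddCommGroup M]
    [Module R M] {φ : M →ₗ[R] R} {f δ : M} (hf : φ f = 1) (hker : LinearMap.ker φ = R ∙ δ)
    (x : M) : ∃ m : R, x = φ x • f + m • δ := by
  have hx : x - φ x • f ∈ R ∙ δ := by
    rw [← hker, LinearMap.mem_ker, map_sub, map_smul, hf, smul_eq_mul, mul_one, sub_self]
  obtain ⟨m, hm⟩ := Submodule.mem_span_singleton.mp hx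
  exact ⟨m, by rw [hm, add_sub_cancel]⟩

namespace Module.Basis

variable {R M : Type*} [CommRing R] [AddCommGroup M] [Module R M]

noncomputable def kerGenerator (e : Basis (Fin 2) R M) (φ : M →ₗ[R] R) : M :=
  φ (e 1) • e 0 - φ (e 0) • e 1

variable (e : Basis (Fin 2) R M) {φ : M →ₗ[R] R} {f : M}

theorem apply_eq_repr_mul_add (x : M) :
    φ x = e.repr x 0 * φ (e 0) + e.repr x 1 * φ (e 1) := by
  conv_lhs => rw [← e.sum_repr x]
  simp only [Fin.sum_univ_two, map_add, map_smul, smul_eq_mul]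

theorem repr_kerGenerator_zero : e.repr (e.kerGenerator φ) 0 = φ (e 1) := by
  simp [kerGenerator]

theorem repr_kerGenerator_one : e.repr (e.kerGenerator φ) 1 = -φ (e 0) := by
  simp [kerGenerator]

theorem apply_kerGenerator : φ (e.kerGenerator φ) = 0 := by
  simp [kerGenerator, mul_comm]

theorem ker_eq_span_kerGenerator (hf : φ f = 1) : LinearMap.ker φ = R ∙ e.kerGenerator φ := by
  refine le_antisymm (fun x hx => ?_) ?_
  · have hφf := e.apply_eq_repr_mul_add (φ := φ) f
    have hφx := e.apply_eq_repr_mul_add (φ := φ) x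
    rw [hf] at hφf
    rw [LinearMap.mem_ker.mp hx] at hφx
    refine Submodule.mem_span_singleton.mpr ⟨e.repr f 1 * e.repr x 0 - e.repr f 0 * e.repr x 1, ?_⟩
    refine e.ext_elem_iff.mpr (Fin.forall_fin_two.mpr ⟨?_, ?_⟩) <;>
      simp only [map_smul, Finsupp.smul_apply, smul_eq_mul, repr_kerGenerator_zero,
        repr_kerGenerator_one]
    · linear_combination -e.repr x 0 * hφf + e.repr f 0 * hφx
    · linear_combination -e.repr x 1 * hφf + e.repr f 1 * hφx
  · rw [Submodule.span_singleton_le_iff_mem, LinearMap.mem_ker]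
    exact e.apply_kerGenerator

theorem smul_kerGenerator_injective (hf : φ f = 1) :
    Function.Injective (· • e.kerGenerator φ : R → M) := by
  intro a b hab
  have hφf := e.apply_eq_repr_mul_add (φ := φ) f
  rw [hf] at hφf
  have h₀ := congrArg (fun x => e.repr x 0) hab
  have h₁ := congrArg (fun x => e.repr x 1) hab
  simp only [map_smul, Finsupp.smul_apply, smul_eq_mul, repr_kerGenerator_zero,
    repr_kerGenerator_one] at h₀ h₁
  linear_combination (a - b) * hφf + e.repr f 1 * h₀ - e.repr f 0 * h₁

theorem linearIndependent_pair_kerGenerator (hf : φ f = 1) :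
    LinearIndependent R ![f, e.kerGenerator φ] := by
  refine LinearIndependent.pair_iff.mpr fun a b hab => ?_
  have ha : a = 0 := by simpa [e.apply_kerGenerator, hf] using congrArg φ hab
  subst ha
  exact ⟨rfl, e.smul_kerGenerator_injective hf (by simpa using hab)⟩

theorem top_le_span_pair_kerGenerator (hf : φ f = 1) :
    ⊤ ≤ Submodule.span R (Set.range ![f, e.kerGenerator φ]) := by
  rintro x -
  obtain ⟨m, hx⟩ := LinearMap.exists_eq_apply_smul_add_smul hf (e.ker_eq_span_kerGenerator hf) x
  rw [hx]
  exact add_mem (Submodule.smul_mem _ _ (Submodule.subset_span ⟨0, rfl⟩))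
    (Submodule.smul_mem _ _ (Submodule.subset_span ⟨1, rfl⟩))

noncomputable def ofApplyEqOne (hf : φ f = 1) : Basis (Fin 2) R M :=
  .mk (e.linearIndependent_pair_kerGenerator hf) (e.top_le_span_pair_kerGenerator hf)

end Module.Basis

namespace LinearMap.BilinForm

theorem det_gram_eq_of_basis {ι M : Type*} [Fintype ι] [DecidableEq ι] [AddCommGroup M]
    (b c : Basis ι ℤ M) (B : BilinForm ℤ M) :
    (Matrix.of fun i j => B (c i) (c j)).det = (Matrix.of fun i j => B (b i) (b j)).det := by
  have hgram (b : Basis ι ℤ M) : Matrix.of (fun i j => B (b i) (b j)) = toMatrix b B := by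
    ext; simp [toMatrix_apply]
  rw [hgram, hgram, ← toMatrix_mul_basis_toMatrix b c, Matrix.det_mul, Matrix.det_mul,
    Matrix.det_transpose, ← Basis.det_apply]
  linear_combination (toMatrix b B).det * Int.isUnit_sq (b.isUnit_det c)

variable {N : Type*} [AddCommGroup N] {B : BilinForm ℤ N} {H f δ : N}

theorem det_gram_eq_of_apply_eq_one (hB : B.IsSymm) (e : Basis (Fin 2) ℤ N) {φ : N →ₗ[ℤ] ℤ}
    (hf : φ f = 1) :
    (Matrix.of fun i j => B (e i) (e j)).det =
      B f f * B (e.kerGenerator φ) (e.kerGenerator φ) - B f (e.kerGenerator φ) ^ 2 := by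
  rw [det_gram_eq_of_basis (e.ofApplyEqOne hf), Matrix.det_fin_two]
  simp [Module.Basis.ofApplyEqOne, hB.eq (e.kerGenerator φ) f, sq]

theorem exists_gram_relations (hB : B.IsSymm) (hf : B H f = 1) (hker : ker (B H) = ℤ ∙ δ) :
    ∃ t : ℤ, H = B H H • f + t • δ ∧
      B H H * B f f + t * B f δ = 1 ∧ B H H * B f δ + t * B δ δ = 0 := by
  obtain ⟨t, hH⟩ := exists_eq_apply_smul_add_smul hf hker H
  have hδ : B H δ = 0 := mem_ker.mp (hker ▸ Submodule.mem_span_singleton_self δ)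
  refine ⟨t, hH, ?_, ?_⟩
  · have h := congrArg (B · f) hH
    simp only [map_add, map_smul, LinearMap.add_apply, LinearMap.smul_apply, smul_eq_mul, hf,
      hB.eq δ f] at h
    linear_combination -h
  · have h := congrArg (B · δ) hH
    simp only [map_add, map_smul, LinearMap.add_apply, LinearMap.smul_apply, smul_eq_mul, hδ] at h
    linear_combination -h

theorem apply_self_eq_neg_mul_of_ker_eq (hB : B.IsSymm) (hf : B H f = 1)
    (hker : ker (B H) = ℤ ∙ δ) : B δ δ = -(B H H * (B f δ ^ 2 - B f f * B δ δ)) := by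
  obtain ⟨t, -, h₁, h₀⟩ := exists_gram_relations hB hf hker
  linear_combination (-B δ δ) * h₁ + B f δ * h₀

theorem isCoprime_apply_of_ker_eq (hB : B.IsSymm) (hf : B H f = 1)
    (hker : ker (B H) = ℤ ∙ δ) : IsCoprime (B f δ) (B H H) := by
  obtain ⟨t, -, h₁, -⟩ := exists_gram_relations hB hf hker
  exact ⟨t, B f f, by linear_combination h₁⟩

theorem exists_smul_eq_and_span_eq_top (hB : B.IsSymm) (hf : B H f = 1)
    (hker : ker (B H) = ℤ ∙ δ) :
    ∃ v : N, B H H • v = (-B f δ) • H + δ ∧ Submodule.span ℤ {H, δ, v} = ⊤ := by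
  obtain ⟨t, hH, h₁, -⟩ := exists_gram_relations hB hf hker
  set v := (-B f δ) • f + B f f • δ
  have hv : B H H • v = (-B f δ) • H + δ := by
    linear_combination (norm := module) B f δ • hH + h₁ • δ
  have hfv : f = B f f • H - t • v := by
    linear_combination (norm := module) -B f f • hH - h₁ • f
  refine ⟨v, hv, eq_top_iff.mpr fun x _ => ?_⟩
  have mem {y : N} (hy : y ∈ ({H, δ, v} : Set N)) : y ∈ Submodule.span ℤ {H, δ, v} :=
    Submodule.subset_span hy
  obtain ⟨m, hx⟩ := exists_eq_apply_smul_add_smul hf hker x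
  rw [hx, hfv]
  refine add_mem (Submodule.smul_mem _ _ (sub_mem ?_ ?_)) (Submodule.smul_mem _ _ (mem (by simp)))
  · exact Submodule.smul_mem _ _ (mem (by simp))
  · exact Submodule.smul_mem _ _ (mem (by simp))

theorem mul_apply_self_eq_of_smul_eq (hB : B.IsSymm) (hHδ : B H δ = 0) {d : ℤ}
    (hδδ : B δ δ = -(B H H * d)) (hn : B H H ≠ 0) {z : N} {x y : ℤ}
    (hz : B H H • z = x • H + y • δ) : B H H * B z z = x ^ 2 - d * y ^ 2 := by
  have h := congrArg (fun w => B w w) hz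
  simp only [map_add, map_smul, LinearMap.add_apply, LinearMap.smul_apply, smul_eq_mul, hHδ,
    hB.eq δ H, hδδ] at h
  refine mul_left_cancel₀ hn ?_
  linear_combination h

theorem eq_and_eq_of_smul_add_smul_eq (hHδ : B H δ = 0) (hn : B H H ≠ 0)
    (hδ : Function.Injective (· • δ : ℤ → N)) {x y x' y' : ℤ}
    (h : x • H + y • δ = x' • H + y' • δ) : x = x' ∧ y = y' := by
  have hx : x = x' := by
    have h' := congrArg (B H) h
    simp only [map_add, map_smul, smul_eq_mul, hHδ, mul_zero, add_zero] at h'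
    exact mul_right_cancel₀ hn h'
  subst hx
  exact ⟨rfl, hδ (add_left_cancel h)⟩

theorem exists_smul_eq_smul_add_smul_and_dvd (hB : B.IsSymm) (hf : B H f = 1)
    (hker : ker (B H) = ℤ ∙ δ) (z : N) :
    ∃ x y : ℤ, B H H • z = x • H + y • δ ∧ B H H ∣ x - (-B f δ) * y := by
  obtain ⟨t, hH, h₁, -⟩ := exists_gram_relations hB hf hker
  obtain ⟨m, hz⟩ := exists_eq_apply_smul_add_smul hf hker z
  refine ⟨B H z, B H H * m - t * B H z, ?_, B f f * B H z + B f δ * m, ?_⟩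
  · linear_combination (norm := module) B H H • hz - B H z • hH
  · linear_combination -B H z * h₁

end LinearMap.BilinForm

open LinearMap.BilinForm in
theorem picard_lattice_rank_two_structure_general
    {N : Type*} [AddCommGroup N] [Module ℤ N]
    (e : Module.Basis (Fin 2) ℤ N)
    (B : LinearMap.BilinForm ℤ N) (hsymm : B.IsSymm)
    (heven : ∀ x : N, 2 ∣ B x x)
    (hdet : (Matrix.of fun i j => B (e i) (e j)).det < 0)
    (r s : ℤ) (hr : 1 ≤ r) (hs : 1 ≤ s)
    (H : N) (hH : B H H = 2 * r * s)
    (hsurj : Function.Surjective (B H)) :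
    ∃ (δ : N) (d μ : ℤ), 0 < d ∧
      (Matrix.of fun i j => B (e i) (e j)).det = -d ∧
      LinearMap.ker (B H) = Submodule.span ℤ {δ} ∧
      B δ δ = -(2 * r * s * d) ∧
      Int.gcd μ (2 * r * s) = 1 ∧
      (4 * r * s) ∣ (μ ^ 2 - d) ∧
      (∃ v : N, (2 * r * s) • v = μ • H + δ ∧
        Submodule.span ℤ ({H, δ, v} : Set N) = ⊤) ∧
      ∀ z : N, ∃! xy : ℤ × ℤ,
        (2 * r * s) • z = xy.1 • H + xy.2 • δ ∧
        (2 * r * s) ∣ (xy.1 - μ * xy.2) ∧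
        2 * r * s * B z z = xy.1 ^ 2 - d * xy.2 ^ 2 := by
  -- The `•` on `N` in the statement is `zsmul`, while `B` and `span` use the given module
  -- structure; the two agree because `ℤ`-module structures are unique.
  obtain rfl : ‹Module ℤ N› = AddCommGroup.toIntModule N := Subsingleton.elim _ _
  obtain ⟨f, hf⟩ := hsurj 1
  have hker := e.ker_eq_span_kerGenerator hf
  have hgram := det_gram_eq_of_apply_eq_one hsymm e hf
  set δ := e.kerGenerator (B H)
  obtain ⟨d, hd⟩ : ∃ d, d = B f δ ^ 2 - B f f * B δ δ := ⟨_, rfl⟩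
  have hn : B H H ≠ 0 := by rw [hH]; positivity
  have hδδ : B δ δ = -(B H H * d) := hd ▸ apply_self_eq_neg_mul_of_ker_eq hsymm hf hker
  obtain ⟨v, hv, hspan⟩ := exists_smul_eq_and_span_eq_top hsymm hf hker
  obtain ⟨w, hw⟩ := heven v
  have hvv := mul_apply_self_eq_of_smul_eq (x := -B f δ) (y := 1) hsymm e.apply_kerGenerator hδδ
    hn (by rw [hv, one_smul])
  rw [← hH]
  refine ⟨δ, d, -B f δ, by linarith, by linear_combination hgram + hd, hker, hδδ,
    Int.isCoprime_iff_gcd_eq_one.mp (isCoprime_apply_of_ker_eq hsymm hf hker).neg_left,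
    ⟨w, by linear_combination -hvv + B H H * hw + 2 * w * hH⟩, ⟨v, hv, hspan⟩, fun z => ?_⟩
  obtain ⟨x, y, hz, hdvd⟩ := exists_smul_eq_smul_add_smul_and_dvd hsymm hf hker z
  refine ⟨(x, y), ⟨hz, hdvd, mul_apply_self_eq_of_smul_eq hsymm e.apply_kerGenerator hδδ hn hz⟩,
    fun ⟨x', y'⟩ h => ?_⟩
  obtain ⟨rfl, rfl⟩ := eq_and_eq_of_smul_add_smul_eq e.apply_kerGenerator hn
    (e.smul_kerGenerator_injective hf) (h.1.symm.trans hz)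
  rfl

/-- Proposition 3.1.1 of the paper.  Let `N` be a rank-2 free ℤ-module with
a nondegenerate even symmetric bilinear form `B` whose Gram matrix (w.r.t. a ℤ-basis `e`) has
negative determinant (hyperbolicity), and let `H ∈ N` satisfy `B H H = 2rs` with `r, s ≥ 1`;
suppose `x ↦ B H x` is surjective onto ℤ (`γ(H) = 1`).  Then there are `δ ∈ N`, `d ∈ ℕ`,
`d > 0`, and `μ ∈ ℤ` with: `det (Gram) = -d`; `H^⊥ = ℤ·δ`; `B δ δ = -2rsd`;
`gcd(μ, 2rs) = 1`; `μ² ≡ d (mod 4rs)`; there is `v ∈ N` with `2rs·v = μH + δ` and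
`N = ℤH + ℤδ + ℤv`; and every `z ∈ N` satisfies `2rs·z = xH + yδ` for unique integers
`x, y`, which moreover satisfy `x ≡ μy (mod 2rs)` and `2rs·B z z = x² − dy²`. -/
theorem picard_lattice_rank_two_structure
    {N : Type*} [AddCommGroup N] [Module ℤ N] [Module.Free ℤ N]
    (e : Module.Basis (Fin 2) ℤ N)
    (B : LinearMap.BilinForm ℤ N) (hsymm : B.IsSymm) (hnd : B.Nondegenerate)
    (heven : ∀ x : N, 2 ∣ B x x)
    (hdet : (Matrix.of fun i j => B (e i) (e j)).det < 0)
    (r s : ℤ) (hr : 1 ≤ r) (hs : 1 ≤ s)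
    (H : N) (hH : B H H = 2 * r * s)
    (hsurj : Function.Surjective (B H)) :
    ∃ (δ : N) (d μ : ℤ), 0 < d ∧
      (Matrix.of fun i j => B (e i) (e j)).det = -d ∧
      LinearMap.ker (B H) = Submodule.span ℤ {δ} ∧
      B δ δ = -(2 * r * s * d) ∧
      Int.gcd μ (2 * r * s) = 1 ∧
      (4 * r * s) ∣ (μ ^ 2 - d) ∧
      (∃ v : N, (2 * r * s) • v = μ • H + δ ∧
        Submodule.span ℤ ({H, δ, v} : Set N) = ⊤) ∧
      ∀ z : N, ∃! xy : ℤ × ℤ,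
        (2 * r * s) • z = xy.1 • H + xy.2 • δ ∧
        (2 * r * s) ∣ (xy.1 - μ * xy.2) ∧
        2 * r * s * B z z = xy.1 ^ 2 - d * xy.2 ^ 2 :=
  picard_lattice_rank_two_structure_general e B hsymm heven hdet r s hr hs H hH hsurj
end

section
/- Let a, b, c ≥ 1 be integers with gcd(a,b) = 1, set r = ac and s = bc, let μ ∈ ℤ with gcd(μ, 2rs) = 1 and let d be an integer with d ≡ μ² (mod 4rs). Let l be a prime and x, y ∈ ℤ satisfy x² − dy² = 4a²b²c², l ∣ x, l ∣ y, and 2rs·l ∣ x − μy. Then l² ∣ ab. -/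
/-!
Write `N = rs`. From `y = l y'` and `x = μ y + 2N l t` one gets `x = l (μ y' + 2N t)`, and
`d ≡ μ² (mod 4N)` then makes `x² - d y²` divisible by `4N l²`. Since `x² - d y² = 4a²b²c² = 4N · ab`,
cancelling `4N` leaves `l² ∣ ab`.
-/

theorem four_mul_mul_sq_dvd_sq_sub_mul_sq {R : Type*} [CommRing R] {N μ d l x y : R}
    (hd : 4 * N ∣ d - μ ^ 2) (hly : l ∣ y) (hcong : 2 * N * l ∣ x - μ * y) :
    4 * N * l ^ 2 ∣ x ^ 2 - d * y ^ 2 := by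
  obtain ⟨e, he⟩ := hd
  obtain ⟨y', rfl⟩ := hly
  obtain ⟨t, ht⟩ := hcong
  exact ⟨μ * y' * t + N * t ^ 2 - e * y' ^ 2, by
    linear_combination (x + μ * (l * y') + 2 * N * l * t) * ht - l ^ 2 * y' ^ 2 * he⟩

theorem mu_divisible_prime_sq_dvd_general
    (a b c : ℤ) (ha : 1 ≤ a) (hb : 1 ≤ b) (hc : 1 ≤ c)
    (μ d : ℤ)
    (hd : (4 * (a * c) * (b * c)) ∣ (d - μ ^ 2))
    (l : ℤ) (x y : ℤ)
    (hxy : x ^ 2 - d * y ^ 2 = 4 * a ^ 2 * b ^ 2 * c ^ 2)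
    (hly : l ∣ y)
    (hcong : (2 * (a * c) * (b * c) * l) ∣ (x - μ * y)) :
    l ^ 2 ∣ a * b := by
  have hN : 4 * (a * c * (b * c)) ≠ 0 := by positivity
  have hdvd := four_mul_mul_sq_dvd_sq_sub_mul_sq (N := a * c * (b * c))
    (by simpa only [mul_assoc] using hd) hly (by simpa only [mul_assoc] using hcong)
  rw [hxy, show 4 * a ^ 2 * b ^ 2 * c ^ 2 = 4 * (a * c * (b * c)) * (a * b) by ring,
    mul_dvd_mul_iff_left hN] at hdvd
  exact hdvd

/-- divisibility claim of Proposition 3.1.2.  Let `a, b, c ≥ 1` with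
`gcd(a,b) = 1`, `r = ac`, `s = bc` (so `2rs = 2abc²`), `μ` with `gcd(μ, 2rs) = 1`, and
`d ≡ μ² (mod 4rs)`.  If a prime `l` and integers `x, y` satisfy `x² − dy² = 4a²b²c²`,
`l ∣ x`, `l ∣ y` and `2rs·l ∣ x − μy`, then `l² ∣ ab`. -/
theorem mu_divisible_prime_sq_dvd
    (a b c : ℤ) (ha : 1 ≤ a) (hb : 1 ≤ b) (hc : 1 ≤ c)
    (hab : Int.gcd a b = 1) (μ d : ℤ)
    (hμ : Int.gcd μ (2 * (a * c) * (b * c)) = 1)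
    (hd : (4 * (a * c) * (b * c)) ∣ (d - μ ^ 2))
    (l : ℤ) (hl : Prime l) (x y : ℤ)
    (hxy : x ^ 2 - d * y ^ 2 = 4 * a ^ 2 * b ^ 2 * c ^ 2)
    (hlx : l ∣ x) (hly : l ∣ y)
    (hcong : (2 * (a * c) * (b * c) * l) ∣ (x - μ * y)) :
    l ^ 2 ∣ a * b :=
  mu_divisible_prime_sq_dvd_general a b c ha hb hc μ d hd l x y hxy hly hcong
end

section
/- Let a, c, k, y, d be integers with k ≠ 0 and d·k² = y² + 4ack. If l is a prime such that the l-adic valuation of k is odd, then l divides 4ac. -/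
/-! Since `y² = k (d k - 4ac)`, `l^(2n+1) ∣ y²`, hence `l^(n+1) ∣ y` and `l^(2n+2) ∣ y²`.
Then `l^(2n+2)` divides `4ack = d k² - y²`; as it does not divide `k`, the prime `l` must
divide `4ac`. -/

theorem Prime.pow_succ_dvd_of_pow_dvd_sq {α : Type*} [CommMonoidWithZero α] [IsCancelMulZero α]
    {p y : α} (hp : Prime p) {n : ℕ} (h : p ^ (2 * n + 1) ∣ y ^ 2) : p ^ (n + 1) ∣ y := by
  rw [pow_dvd_iff_le_emultiplicity, emultiplicity_pow hp] at h
  rw [pow_dvd_iff_le_emultiplicity]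
  cases hy : emultiplicity p y with
  | top => exact le_top
  | coe m =>
    rw [hy] at h
    norm_cast at h ⊢
    omega

theorem prime_odd_valuation_dvd_four_mul_general
    (a c k y d : ℤ) (h : d * k ^ 2 = y ^ 2 + 4 * a * c * k)
    (l : ℤ) (hl : Prime l) (n : ℕ)
    (h1 : l ^ (2 * n + 1) ∣ k) (h2 : ¬ l ^ (2 * n + 2) ∣ k) :
    l ∣ 4 * a * c := by
  have hy_sq : l ^ (2 * n + 1) ∣ y ^ 2 := by
    rw [show y ^ 2 = k * (d * k - 4 * a * c) by linear_combination -h]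
    exact h1.mul_right _
  have hy : l ^ (2 * (n + 1)) ∣ y ^ 2 := by
    rw [pow_mul']
    exact pow_dvd_pow_of_dvd (hl.pow_succ_dvd_of_pow_dvd_sq hy_sq) 2
  have hk_sq : l ^ (2 * (n + 1)) ∣ k ^ 2 := by
    rw [pow_mul']
    exact pow_dvd_pow_of_dvd ((pow_dvd_pow l (by omega)).trans h1) 2
  have hack : l ^ (2 * n + 2) ∣ 4 * a * c * k := by
    rw [show 4 * a * c * k = d * k ^ 2 - y ^ 2 by linear_combination -h]
    exact (hk_sq.mul_left d).sub hy
  by_contra hl_ac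
  exact h2 (hl.pow_dvd_of_dvd_mul_left _ hl_ac hack)

/-- auxiliary arithmetic claim.  Let `a, c, k, y, d` be integers with
`k ≠ 0` and `d·k² = y² + 4ack`.  If `l` is a prime whose `l`-adic valuation of `k` is odd
(i.e. `l^(2n+1) ∣ k` and `l^(2n+2) ∤ k` for some `n`), then `l ∣ 4ac`. -/
theorem prime_odd_valuation_dvd_four_mul
    (a c k y d : ℤ) (hk : k ≠ 0) (h : d * k ^ 2 = y ^ 2 + 4 * a * c * k)
    (l : ℤ) (hl : Prime l) (n : ℕ)
    (h1 : l ^ (2 * n + 1) ∣ k) (h2 : ¬ l ^ (2 * n + 2) ∣ k) :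
    l ∣ 4 * a * c :=
  prime_odd_valuation_dvd_four_mul_general a c k y d h l hl n h1 h2
end

section
/- Let a, c ≥ 1 be integers and let d be a positive integer. A pair (x₁, y₁) ∈ ℤ² satisfies x₁² − d·y₁² = 4a²c² and x₁ ≡ 2ac (mod d) if and only if there exist a nonzero squarefree integer α (possibly negative) dividing 2ac and integers p, q such that α·p² − α·d·q² = 4ac, x₁ = 2ac + α·d·q², and y₁ = α·p·q. -/
/-!
Write `x₁ = 2ac + dm`. Then `d y₁² = (x₁ - 2ac)(x₁ + 2ac) = d · m(dm + 4ac)`, so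
`y₁² = m · (dm + 4ac)`. Whenever a square factors as `y² = mn`, the two factors share one
squarefree part: `m = αq²`, `n = αp²` and `y = αpq`. Then `αp² - αdq² = n - dm = 4ac`, and
`α ∣ 4ac` forces `α ∣ 2ac` because `α` is squarefree.
-/

namespace Int

theorem exists_squarefree_mul_sq (m : ℤ) : ∃ α q : ℤ, Squarefree α ∧ m = α * q ^ 2 := by
  obtain ⟨A, B, hBA, hA⟩ := Nat.sq_mul_squarefree m.natAbs
  rcases Int.natAbs_eq m with hm | hm
  · exact ⟨A, B, Int.squarefree_natCast.2 hA, by rw [hm, ← hBA]; push_cast; ring⟩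
  · refine ⟨-A, B, Int.squarefree_natAbs.1 (by simpa using hA), ?_⟩
    rw [hm, ← hBA]; push_cast; ring

theorem exists_squarefree_of_sq_eq_mul {y m n : ℤ} (h : y ^ 2 = m * n) :
    ∃ α p q : ℤ, Squarefree α ∧ m = α * q ^ 2 ∧ n = α * p ^ 2 ∧ y = α * p * q := by
  obtain ⟨α, q, hα, rfl⟩ := exists_squarefree_mul_sq m
  rcases eq_or_ne q 0 with rfl | hq
  · obtain ⟨β, p, hβ, rfl⟩ := exists_squarefree_mul_sq n
    have hy : y = 0 := pow_eq_zero_iff two_ne_zero |>.mp (by rw [h]; ring)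
    exact ⟨β, p, 0, hβ, by ring, rfl, by rw [hy]; ring⟩
  obtain ⟨t, rfl⟩ : q ∣ y := (Int.pow_dvd_pow_iff two_ne_zero).1 ⟨α * n, by rw [h]; ring⟩
  have ht : t ^ 2 = α * n :=
    mul_left_cancel₀ (pow_ne_zero 2 hq) (by linear_combination h)
  obtain ⟨p, rfl⟩ : α ∣ t := hα.isRadical 2 t ⟨n, ht⟩
  have hn : α * p ^ 2 = n := mul_left_cancel₀ hα.ne_zero (by linear_combination ht)
  exact ⟨α, p, q, hα, rfl, hn.symm, by ring⟩

end Int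

theorem associated_solutions_parametrization_general
    (a c : ℤ) (d : ℤ) (hd : 0 < d) (x₁ y₁ : ℤ) :
    (x₁ ^ 2 - d * y₁ ^ 2 = 4 * a ^ 2 * c ^ 2 ∧ d ∣ (x₁ - 2 * a * c)) ↔
      ∃ α p q : ℤ, α ≠ 0 ∧ Squarefree α ∧ α ∣ 2 * a * c ∧
        α * p ^ 2 - α * d * q ^ 2 = 4 * a * c ∧
        x₁ = 2 * a * c + α * d * q ^ 2 ∧ y₁ = α * p * q := by
  constructor
  · rintro ⟨hx, m, hm⟩
    have hy : y₁ ^ 2 = m * (d * m + 4 * a * c) :=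
      mul_left_cancel₀ hd.ne' (by linear_combination -hx + (x₁ + 2 * a * c + d * m) * hm)
    obtain ⟨α, p, q, hα, rfl, hn, rfl⟩ := Int.exists_squarefree_of_sq_eq_mul hy
    have hkey : α * p ^ 2 - α * d * q ^ 2 = 4 * a * c := by linear_combination -hn
    have h4ac : α ∣ 4 * a * c := ⟨p ^ 2 - d * q ^ 2, by linear_combination -hkey⟩
    exact ⟨α, p, q, hα.ne_zero, hα, hα.isRadical 2 _ (h4ac.trans ⟨a * c, by ring⟩), hkey,
      by linear_combination hm, rfl⟩
  · rintro ⟨α, p, q, -, -, -, hkey, rfl, rfl⟩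
    exact ⟨by linear_combination (-(α * d * q ^ 2)) * hkey, α * q ^ 2, by ring⟩

/-- the parametrization (3.1.26)–(3.1.29) by associated solutions.
Let `a, c ≥ 1` and `d > 0`.  A pair `(x₁, y₁)` satisfies `x₁² − dy₁² = 4a²c²` and
`x₁ ≡ 2ac (mod d)` if and only if there exist a nonzero squarefree integer `α`
(possibly negative) dividing `2ac` and integers `p, q` with `αp² − αdq² = 4ac`
(i.e. `p² − dq² = 4ac/α`), `x₁ = 2ac + αdq²` and `y₁ = αpq`. -/
theorem associated_solutions_parametrization
    (a c : ℤ) (ha : 1 ≤ a) (hc : 1 ≤ c) (d : ℤ) (hd : 0 < d) (x₁ y₁ : ℤ) :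
    (x₁ ^ 2 - d * y₁ ^ 2 = 4 * a ^ 2 * c ^ 2 ∧ d ∣ (x₁ - 2 * a * c)) ↔
      ∃ α p q : ℤ, α ≠ 0 ∧ Squarefree α ∧ α ∣ 2 * a * c ∧
        α * p ^ 2 - α * d * q ^ 2 = 4 * a * c ∧
        x₁ = 2 * a * c + α * d * q ^ 2 ∧ y₁ = α * p * q :=
  associated_solutions_parametrization_general a c d hd x₁ y₁
end

section
/- Let a, b, c ≥ 1 be integers with gcd(a,b) = 1, let μ ∈ ℤ with gcd(μ, 2abc²) = 1, and let d be a positive integer with d ≡ μ² (mod 4abc²). Let α be a nonzero squarefree integer dividing 2ac and let p, q ∈ ℤ satisfy α·p² − α·d·q² = 4ac. Then 2ac² divides (2ac + α·d·q²) − μ·α·p·q if and only if α divides 2a and (4ac²/α) divides (p − μq)² (equivalently, 4ac² divides α(p − μq)²). -/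
/-!
Put `r = p - μq` and `e = d - μ²`. Expanding with `αp² - αdq² = 4ac` gives
`α r² = 2((2ac + αdq²) - μαpq) - αq²e`, and `4ac² ∣ e`, so the congruence is equivalent to
`4ac² ∣ α r²`. It remains to see that this forces `α ∣ 2a`. Split `α = βg` with
`g = gcd(α, 2a)`; as `α` is squarefree, `β` is squarefree and coprime to `4a` and to `g`.
The same identity in the form `4ac = β(r · g(p + μq) - gq² · e)`, together with `c² ∣ βg r²`,
lets one lift `βⁿ ∣ r, βⁿ ∣ c` to `βⁿ⁺¹ ∣ r, βⁿ⁺¹ ∣ c`. So every power of `β` divides `c ≠ 0`,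
and `β` is a unit.
-/

theorem dvd_iff_mul_dvd_of_eq_mul_sub {R : Type*} [CommRing R] [IsDomain R] {k m x y z : R}
    (hk : k ≠ 0) (h : y = k * x - z) (hz : k * m ∣ z) : m ∣ x ↔ k * m ∣ y := by
  rw [h, dvd_sub_left hz, mul_dvd_mul_iff_left hk]

namespace Squarefree

theorem pow_dvd_of_mul_eq_mul_sub {R : Type*} [CommRing R] [IsDomain R] [DecompositionMonoid R]
    {β g N c e r s t : R} (hβ : Squarefree β) (hβg : IsCoprime β g)
    (hβN : IsCoprime β N) (hce : c ∣ e) (hNc : N * c = β * (r * s - t * e))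
    (hsq : c ^ 2 ∣ β * g * r ^ 2) : ∀ n : ℕ, β ^ n ∣ r ∧ β ^ n ∣ c
  | 0 => by simp
  | n + 1 => by
    obtain ⟨hr, hc⟩ := pow_dvd_of_mul_eq_mul_sub hβ hβg hβN hce hNc hsq n
    have hc' : β ^ (n + 1) ∣ c := by
      refine hβN.pow_left.dvd_of_dvd_mul_left ?_
      rw [hNc, pow_succ']
      exact mul_dvd_mul_left β (dvd_sub (hr.mul_right s) ((hc.trans hce).mul_left t))
    obtain ⟨u, rfl⟩ := hr
    have hu : β ∣ u := by
      have h : β ^ (2 * n + 1) * β ∣ β ^ (2 * n + 1) * (g * u ^ 2) := by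
        rw [show β ^ (2 * n + 1) * β = (β ^ (n + 1)) ^ 2 by ring,
          show β ^ (2 * n + 1) * (g * u ^ 2) = β * g * (β ^ n * u) ^ 2 by ring]
        exact (pow_dvd_pow_of_dvd hc' 2).trans hsq
      have hgu := (mul_dvd_mul_iff_left (pow_ne_zero _ hβ.ne_zero)).mp h
      exact (hβ.dvd_pow_iff_dvd two_ne_zero).mp (hβg.dvd_of_dvd_mul_left hgu)
    exact ⟨pow_succ β n ▸ mul_dvd_mul_left _ hu, hc'⟩

theorem isUnit_of_mul_eq_mul_sub {β g N c e r s t : ℤ} (hβ : Squarefree β) (hβg : IsCoprime β g)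
    (hβN : IsCoprime β N) (hce : c ∣ e) (hNc : N * c = β * (r * s - t * e))
    (hsq : c ^ 2 ∣ β * g * r ^ 2) (hc : c ≠ 0) : IsUnit β := by
  rw [Int.isUnit_iff_natAbs_eq]
  by_contra hβ1
  refine FiniteMultiplicity.not_iff_forall.mpr (fun n => ?_)
    (Int.finiteMultiplicity_iff.mpr ⟨hβ1, hc⟩)
  exact (hβ.pow_dvd_of_mul_eq_mul_sub hβg hβN hce hNc hsq n).2

end Squarefree

theorem dvd_two_mul_of_four_mul_sq_dvd {a c μ d α p q : ℤ} (hc : c ≠ 0) (hα : Squarefree α)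
    (hcd : c ∣ d - μ ^ 2) (hpq : α * p ^ 2 - α * d * q ^ 2 = 4 * a * c)
    (hsq : 4 * a * c ^ 2 ∣ α * (p - μ * q) ^ 2) : α ∣ 2 * a := by
  obtain ⟨g, β, m, -, hβm, rfl, ha⟩ :=
    Int.exists_gcd_one' (Int.gcd_pos_of_ne_zero_left (2 * a) hα.ne_zero)
  obtain ⟨hβg, hβ, -⟩ := squarefree_mul_iff.mp hα
  replace hβg : IsCoprime β g := hβg.isCoprime
  have hβ2a : IsCoprime β (2 * a) := by
    rw [ha]
    exact (Int.isCoprime_iff_gcd_eq_one.mpr hβm).mul_right hβg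
  have hβ4a : IsCoprime β (4 * a) := by
    rw [show 4 * a = 2 * (2 * a) by ring]
    exact (hβ2a.of_isCoprime_of_dvd_right (dvd_mul_right 2 a)).mul_right hβ2a
  have hunit : IsUnit β :=
    hβ.isUnit_of_mul_eq_mul_sub (s := g * (p + μ * q)) (t := g * q ^ 2) hβg hβ4a hcd
      (by linear_combination -hpq) (dvd_of_mul_left_dvd hsq) hc
  rw [ha, hunit.mul_left_dvd]
  exact dvd_mul_left _ _

theorem congruence_iff_alpha_dvd_and_square_dvd_general
    (a b c : ℤ) (hc : 1 ≤ c)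
    (μ : ℤ)
    (d : ℤ) (hdμ : (4 * a * b * c ^ 2) ∣ (d - μ ^ 2))
    (α : ℤ) (hαsf : Squarefree α)
    (p q : ℤ) (hpq : α * p ^ 2 - α * d * q ^ 2 = 4 * a * c) :
    (2 * a * c ^ 2) ∣ ((2 * a * c + α * d * q ^ 2) - μ * (α * p * q)) ↔
      (α ∣ 2 * a ∧ (4 * a * c ^ 2) ∣ α * (p - μ * q) ^ 2) := by
  have hcd : 4 * a * c ^ 2 ∣ d - μ ^ 2 := (Dvd.intro b (by ring)).trans hdμ
  have hsq_iff : (2 * a * c ^ 2) ∣ ((2 * a * c + α * d * q ^ 2) - μ * (α * p * q)) ↔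
      (4 * a * c ^ 2) ∣ α * (p - μ * q) ^ 2 := by
    rw [show 4 * a * c ^ 2 = 2 * (2 * a * c ^ 2) by ring] at hcd ⊢
    exact dvd_iff_mul_dvd_of_eq_mul_sub two_ne_zero (z := α * q ^ 2 * (d - μ ^ 2))
      (by linear_combination hpq) (hcd.mul_left _)
  refine ⟨fun h => ⟨?_, hsq_iff.mp h⟩, fun h => hsq_iff.mpr h.2⟩
  exact dvd_two_mul_of_four_mul_sq_dvd (by omega) hαsf
    ((Dvd.intro_left (4 * a * c) (by ring)).trans hcd) hpq (hsq_iff.mp h)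

/-- equivalence (3.1.30) ⇔ (3.1.38) in the proof of Theorem 3.1.4.
Let `a, b, c ≥ 1` with `gcd(a,b) = 1`, `μ` with `gcd(μ, 2abc²) = 1`, and `d > 0` with
`d ≡ μ² (mod 4abc²)`.  Let `α` be a nonzero squarefree integer dividing `2ac` and `p, q`
satisfy `αp² − αdq² = 4ac`.  Then `2ac² ∣ (2ac + αdq²) − μ·αpq` if and only if
`α ∣ 2a` and `4ac² ∣ α(p − μq)²` (equivalently, `(4ac²/α) ∣ (p − μq)²`). -/
theorem congruence_iff_alpha_dvd_and_square_dvd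
    (a b c : ℤ) (ha : 1 ≤ a) (hb : 1 ≤ b) (hc : 1 ≤ c)
    (hab : Int.gcd a b = 1)
    (μ : ℤ) (hμ : Int.gcd μ (2 * a * b * c ^ 2) = 1)
    (d : ℤ) (hd : 0 < d) (hdμ : (4 * a * b * c ^ 2) ∣ (d - μ ^ 2))
    (α : ℤ) (hα0 : α ≠ 0) (hαsf : Squarefree α) (hαdvd : α ∣ 2 * a * c)
    (p q : ℤ) (hpq : α * p ^ 2 - α * d * q ^ 2 = 4 * a * c) :
    (2 * a * c ^ 2) ∣ ((2 * a * c + α * d * q ^ 2) - μ * (α * p * q)) ↔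
      (α ∣ 2 * a ∧ (4 * a * c ^ 2) ∣ α * (p - μ * q) ^ 2) :=
  congruence_iff_alpha_dvd_and_square_dvd_general a b c hc μ d hdμ α hαsf p q hpq
end

section
/- Let a, c ≥ 1 be integers, μ ∈ ℤ, and d an integer with d ≡ μ² (mod 4ac²). Let α be a nonzero squarefree integer such that α divides 2a but α does not divide a (equivalently, 2a/α is an odd integer). Then there exist no integers p, q with α·p² − α·d·q² = 4ac and (4ac²/α) dividing (p − μq)². -/
/-!
Write `2a = αk`; since `α ∤ a`, `k` is odd, so `α` is even. Cancelling `α`, the numbers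
`x = p - μq` and `y = p + μq` satisfy `xy = 2kc·u` with `u = 1 + αcsq²` odd (where
`d - μ² = 4ac²s`), and `β = 2kc²` divides `x²`. Then `x` is even, hence so is `y = x + 2μq`,
and comparing `(xy)² = x²y²` leaves `ku² = 2·(x²/β)·(y/2)²`, contradicting `ku²` odd.
-/

theorem Prime.not_mul_mul_sq_dvd_sq {R : Type*} [CommRing R] [IsDomain R] {r m n u x y : R}
    (hr : Prime r) (hmn : m * n ≠ 0) (hmu : ¬ r ∣ m * u) (hxy : x * y = r * m * n * u)
    (hyx : r ∣ y - x) : ¬ r * m * n ^ 2 ∣ x ^ 2 := by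
  rintro ⟨t, ht⟩
  have hrx : r ∣ x := hr.dvd_of_dvd_pow ⟨m * n ^ 2 * t, by rw [ht]; ring⟩
  obtain ⟨y', rfl⟩ : r ∣ y := by simpa using dvd_add hyx hrx
  have hne : r ^ 2 * m * n ^ 2 ≠ 0 :=
    mul_ne_zero (mul_ne_zero (pow_ne_zero 2 hr.ne_zero) (left_ne_zero_of_mul hmn))
      (pow_ne_zero 2 (right_ne_zero_of_mul hmn))
  have hcancel : m * u ^ 2 = r * (t * y' ^ 2) :=
    mul_left_cancel₀ hne
      (by linear_combination (-(r * m * n * u) - x * (r * y')) * hxy + r ^ 2 * y' ^ 2 * ht)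
  have hdvd : r ∣ m * u * u := by rw [mul_assoc, ← sq, hcancel]; exact dvd_mul_right _ _
  exact hmu ((hr.dvd_or_dvd hdvd).elim id (dvd_mul_of_dvd_right · m))

theorem Int.exists_odd_mul_eq_two_mul {α a : ℤ} (h2a : α ∣ 2 * a) (ha : ¬ α ∣ a) :
    ∃ k, 2 * a = α * k ∧ Odd k := by
  obtain ⟨k, hk⟩ := h2a
  refine ⟨k, hk, Int.not_even_iff_odd.mp ?_⟩
  rintro ⟨j, rfl⟩
  exact ha ⟨j, by linarith⟩

theorem no_solution_when_alpha_not_dvd_a_general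
    (a c : ℤ) (hc : 1 ≤ c) (μ d : ℤ)
    (hdμ : (4 * a * c ^ 2) ∣ (d - μ ^ 2))
    (α : ℤ) (hα0 : α ≠ 0)
    (hα2a : α ∣ 2 * a) (hαa : ¬ α ∣ a) :
    ¬ ∃ p q : ℤ, α * p ^ 2 - α * d * q ^ 2 = 4 * a * c ∧
      ∃ β : ℤ, α * β = 4 * a * c ^ 2 ∧ β ∣ (p - μ * q) ^ 2 := by
  rintro ⟨p, q, heq, β, hβ, hβdvd⟩
  obtain ⟨k, hk, hk_odd⟩ := Int.exists_odd_mul_eq_two_mul hα2a hαa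
  obtain ⟨s, hs⟩ := hdμ
  have hα_even : Even α :=
    (Int.even_mul.mp (hk ▸ even_two_mul a)).resolve_right (Int.not_even_iff_odd.mpr hk_odd)
  have hβk : β = 2 * k * c ^ 2 := mul_left_cancel₀ hα0 (by linear_combination hβ + 2 * c ^ 2 * hk)
  set u := 1 + α * c * s * q ^ 2
  have hu_odd : Odd u := (hα_even.mul_right _).mul_right _ |>.mul_right _ |>.one_add
  have hprod : (p - μ * q) * (p + μ * q) = 2 * k * c * u :=
    mul_left_cancel₀ hα0
      (by linear_combination heq + α * q ^ 2 * hs + (2 * c + 2 * α * c ^ 2 * s * q ^ 2) * hk)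
  refine Int.prime_two.not_mul_mul_sq_dvd_sq (mul_ne_zero ?_ ?_) ?_ hprod ?_
    (hβk ▸ hβdvd)
  · rintro rfl
    simp at hk_odd
  · omega
  · exact (Int.not_even_iff_odd.mpr (hk_odd.mul hu_odd)) ∘ even_iff_two_dvd.mpr
  · exact ⟨μ * q, by ring⟩

/-- claim in the proof of Theorem 3.1.4 that `α ∣ a`.
Let `a, c ≥ 1`, `μ ∈ ℤ`, and `d ≡ μ² (mod 4ac²)`.  Let `α` be a nonzero squarefree
integer with `α ∣ 2a` but `α ∤ a` (equivalently `2a/α` is an odd integer).  Then there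
are no integers `p, q` with `αp² − αdq² = 4ac` (i.e. `p² − dq² = 4ac/α`) such that
`4ac²/α` divides `(p − μq)²`; here `β = 4ac²/α` is the integer with `αβ = 4ac²`. -/
theorem no_solution_when_alpha_not_dvd_a
    (a c : ℤ) (ha : 1 ≤ a) (hc : 1 ≤ c) (μ d : ℤ)
    (hdμ : (4 * a * c ^ 2) ∣ (d - μ ^ 2))
    (α : ℤ) (hα0 : α ≠ 0) (hαsf : Squarefree α)
    (hα2a : α ∣ 2 * a) (hαa : ¬ α ∣ a) :
    ¬ ∃ p q : ℤ, α * p ^ 2 - α * d * q ^ 2 = 4 * a * c ∧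
      ∃ β : ℤ, α * β = 4 * a * c ^ 2 ∧ β ∣ (p - μ * q) ^ 2 :=
  no_solution_when_alpha_not_dvd_a_general a c hc μ d hdμ α hα0 hα2a hαa
end

section
/- Let a, c ≥ 1 be integers, α ∈ {1, −1}, μ ∈ ℤ, and d an integer with d ≡ μ² (mod 4a²c²). Let p, q ∈ ℤ satisfy p² − d·q² = 4αac. Then 2a²c² divides (2ac + α·d·q²) − μ·(α·p·q) if and only if 2ac divides p − μq. -/
/-!
Using `p² − dq² = 4αac` and `α² = 1`, one has
`2α·((2ac + αdq²) − μαpq) = (p − μq)² + (d − μ²)q²`.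
Since `4a²c² = (2ac)²` divides `d − μ²`, the congruence modulo `2a²c²`, doubled and multiplied by
the unit `α`, becomes `(2ac)² ∣ (p − μq)²`, i.e. `2ac ∣ p − μq`.
-/

theorem two_mul_mul_sub_eq_sq_add {R : Type*} [CommRing R] {α n d μ p q : R} (hα : α ^ 2 = 1)
    (hpq : p ^ 2 - d * q ^ 2 = 2 * α * n) :
    2 * α * ((n + α * d * q ^ 2) - μ * (α * p * q)) = (p - μ * q) ^ 2 + (d - μ ^ 2) * q ^ 2 := by
  linear_combination (-1 : R) * hpq + (2 * d * q ^ 2 - 2 * μ * p * q) * hα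

theorem Int.sq_dvd_sq_add_iff_dvd {n x y : ℤ} (hy : n ^ 2 ∣ y) : n ^ 2 ∣ x ^ 2 + y ↔ n ∣ x :=
  (dvd_add_left hy).trans (Int.pow_dvd_pow_iff two_ne_zero)

theorem a_series_congruence_iff_general
    (a c : ℤ)
    (α : ℤ) (hα : α = 1 ∨ α = -1)
    (μ d : ℤ) (hdμ : (4 * a ^ 2 * c ^ 2) ∣ (d - μ ^ 2))
    (p q : ℤ) (hpq : p ^ 2 - d * q ^ 2 = 4 * α * a * c) :
    (2 * a ^ 2 * c ^ 2) ∣ ((2 * a * c + α * d * q ^ 2) - μ * (α * p * q)) ↔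
      (2 * a * c) ∣ (p - μ * q) := by
  have hαunit : IsUnit α := Int.isUnit_iff.mpr hα
  have hdμq : (2 * a * c) ^ 2 ∣ (d - μ ^ 2) * q ^ 2 :=
    ((by ring : (2 * a * c) ^ 2 = 4 * a ^ 2 * c ^ 2) ▸ hdμ).mul_right _
  have key := two_mul_mul_sub_eq_sq_add (Int.isUnit_sq hαunit) (n := 2 * a * c) (μ := μ)
    (by rw [hpq]; ring)
  have hsq : (2 * a * c) ^ 2 = 2 * (2 * a ^ 2 * c ^ 2) := by ring
  rw [← Int.sq_dvd_sq_add_iff_dvd hdμq, ← key, hsq, mul_assoc 2 α,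
    mul_dvd_mul_iff_left two_ne_zero, hαunit.dvd_mul_left]

/-- equivalence (3.1.41) ⇔ (3.1.46) in the proof of Theorem 3.1.4.
Let `a, c ≥ 1`, `α = ±1`, `μ ∈ ℤ`, and `d ≡ μ² (mod 4a²c²)`.  If `p² − dq² = 4αac`,
then `2a²c² ∣ (2ac + αdq²) − μ·αpq` if and only if `2ac ∣ p − μq`. -/
theorem a_series_congruence_iff
    (a c : ℤ) (ha : 1 ≤ a) (hc : 1 ≤ c)
    (α : ℤ) (hα : α = 1 ∨ α = -1)
    (μ d : ℤ) (hdμ : (4 * a ^ 2 * c ^ 2) ∣ (d - μ ^ 2))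
    (p q : ℤ) (hpq : p ^ 2 - d * q ^ 2 = 4 * α * a * c) :
    (2 * a ^ 2 * c ^ 2) ∣ ((2 * a * c + α * d * q ^ 2) - μ * (α * p * q)) ↔
      (2 * a * c) ∣ (p - μ * q) :=
  a_series_congruence_iff_general a c α hα μ d hdμ p q hpq
end

section
/- Let a, b, c ≥ 1 be integers with gcd(a,b) = 1, let l be a prime dividing b, let α ∈ {1, −1}, let μ ∈ ℤ with gcd(μ, 2abc²) = 1, and let d be an integer with d ≡ μ² (mod 4a²bc²). Let p, q ∈ ℤ satisfy p² − d·q² = 4αac. Then 2a²c²·l divides (2ac + α·d·q²) − μ·(α·p·q) if and only if 2ac·l divides p − μq. -/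
/-!
Writing `X = (2ac + αdq²) − μ·αpq`, the relation `p² − dq² = 4αac` and `α² = 1` give the identity
`2X = α((p − μq)² + (d − μ²)q²)`. Since `4a²c²l ∣ d − μ²`, the divisibility `2a²c²l ∣ X` is therefore
equivalent to `(2ac)²l ∣ (p − μq)²`, and for a prime `l` this is `2acl ∣ p − μq`.
-/

theorem sq_mul_dvd_sq_iff_mul_dvd {R : Type*} [CommRing R] [IsDomain R] [IsIntegrallyClosed R]
    {n x l : R} (hl : Prime l) : n ^ 2 * l ∣ x ^ 2 ↔ n * l ∣ x := by
  constructor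
  · intro h
    obtain ⟨s, rfl⟩ : n ∣ x :=
      (IsIntegrallyClosed.pow_dvd_pow_iff two_ne_zero).mp (dvd_of_mul_right_dvd h)
    rcases eq_or_ne n 0 with rfl | hn
    · simp
    · rw [mul_pow, mul_dvd_mul_iff_left (pow_ne_zero 2 hn)] at h
      exact mul_dvd_mul_left n (hl.dvd_of_dvd_pow h)
  · intro h
    calc n ^ 2 * l ∣ (n * l) ^ 2 := ⟨l, by ring⟩
      _ ∣ x ^ 2 := pow_dvd_pow_of_dvd h 2

theorem two_mul_sub_eq_mul_sq_add {R : Type*} [CommRing R] {a c d α μ p q : R}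
    (hα : α ^ 2 = 1) (hpq : p ^ 2 - d * q ^ 2 = 4 * α * a * c) :
    2 * ((2 * a * c + α * d * q ^ 2) - μ * (α * p * q)) =
      α * ((p - μ * q) ^ 2 + (d - μ ^ 2) * q ^ 2) := by
  linear_combination (-α) * hpq - 4 * a * c * hα

theorem a_series_congruence_prime_iff_general
    (a b c : ℤ)
    (l : ℤ) (hl : Prime l) (hlb : l ∣ b)
    (α : ℤ) (hα : α = 1 ∨ α = -1)
    (μ : ℤ)
    (d : ℤ) (hdμ : (4 * a ^ 2 * b * c ^ 2) ∣ (d - μ ^ 2))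
    (p q : ℤ) (hpq : p ^ 2 - d * q ^ 2 = 4 * α * a * c) :
    (2 * a ^ 2 * c ^ 2 * l) ∣ ((2 * a * c + α * d * q ^ 2) - μ * (α * p * q)) ↔
      (2 * a * c * l) ∣ (p - μ * q) := by
  have hα2 : α ^ 2 = 1 := by rcases hα with rfl | rfl <;> norm_num
  have hdq : 4 * a ^ 2 * c ^ 2 * l ∣ (d - μ ^ 2) * q ^ 2 := by
    obtain ⟨k, rfl⟩ := hlb
    exact ((Dvd.intro k (by ring)).trans hdμ).mul_right _
  calc (2 * a ^ 2 * c ^ 2 * l) ∣ ((2 * a * c + α * d * q ^ 2) - μ * (α * p * q))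
      ↔ 2 * (2 * a ^ 2 * c ^ 2 * l) ∣ 2 * ((2 * a * c + α * d * q ^ 2) - μ * (α * p * q)) :=
        (mul_dvd_mul_iff_left two_ne_zero).symm
    _ ↔ 4 * a ^ 2 * c ^ 2 * l ∣ α * ((p - μ * q) ^ 2 + (d - μ ^ 2) * q ^ 2) := by
        rw [two_mul_sub_eq_mul_sq_add hα2 hpq, ← mul_assoc, ← mul_assoc, ← mul_assoc]
        norm_num
    _ ↔ 4 * a ^ 2 * c ^ 2 * l ∣ (p - μ * q) ^ 2 + (d - μ ^ 2) * q ^ 2 :=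
        (IsUnit.of_pow_eq_one hα2 two_ne_zero).dvd_mul_left
    _ ↔ (2 * a * c) ^ 2 * l ∣ (p - μ * q) ^ 2 := by
        rw [dvd_add_left hdq, mul_pow, mul_pow]
        norm_num
    _ ↔ (2 * a * c * l) ∣ (p - μ * q) := sq_mul_dvd_sq_iff_mul_dvd hl

/-- equivalence (3.1.49) ⇔ (3.1.52) in the proof of Theorem 3.1.4.
Let `a, b, c ≥ 1` with `gcd(a,b) = 1`, let `l` be a prime dividing `b`, `α = ±1`,
`μ` with `gcd(μ, 2abc²) = 1`, and `d ≡ μ² (mod 4a²bc²)`.  If `p² − dq² = 4αac`, then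
`2a²c²·l ∣ (2ac + αdq²) − μ·αpq` if and only if `2ac·l ∣ p − μq`. -/
theorem a_series_congruence_prime_iff
    (a b c : ℤ) (ha : 1 ≤ a) (hb : 1 ≤ b) (hc : 1 ≤ c)
    (hab : Int.gcd a b = 1)
    (l : ℤ) (hl : Prime l) (hlb : l ∣ b)
    (α : ℤ) (hα : α = 1 ∨ α = -1)
    (μ : ℤ) (hμ : Int.gcd μ (2 * a * b * c ^ 2) = 1)
    (d : ℤ) (hdμ : (4 * a ^ 2 * b * c ^ 2) ∣ (d - μ ^ 2))
    (p q : ℤ) (hpq : p ^ 2 - d * q ^ 2 = 4 * α * a * c) :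
    (2 * a ^ 2 * c ^ 2 * l) ∣ ((2 * a * c + α * d * q ^ 2) - μ * (α * p * q)) ↔
      (2 * a * c * l) ∣ (p - μ * q) :=
  a_series_congruence_prime_iff_general a b c l hl hlb α hα μ d hdμ p q hpq
end

section
/- Let a, b, c ≥ 1 be integers with gcd(a,b) = 1, let d be a positive integer, and let μ ∈ ℤ with gcd(μ, 2abc²) = 1 and μ² ≡ d (mod 4a²bc²). Then a pair (x,y) ∈ ℤ² satisfies all of: x² − d·y² = 4a²b²c²; x ≡ μy (mod 2abc²); x ≡ 2abc (mod d) or x ≡ −2abc (mod d); b ∣ x and b ∣ y; x ≡ μy (mod 2a²bc²); and gcd(x, y, (x − μy)/(2abc²)) = 1 — if and only if there exist ε, α ∈ {1, −1} and p, q ∈ ℤ with (x, y) = (ε(2abc + α·b·d·q²), ε·α·b·p·q), p² − d·q² = 4αac, 2ac ∣ p − μq, gcd(a, p, q) = 1, and for every prime l dividing b one has 2ac·l ∤ p − μq. -/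
private lemma isCoprime_of_forall_prime {m n : ℤ}
    (h : ∀ l : ℤ, Prime l → l ∣ m → l ∣ n → False) : IsCoprime m n := by
  rw [Int.isCoprime_iff_gcd_eq_one]
  by_contra hg
  obtain ⟨p, hp, hpd⟩ := Nat.exists_prime_and_dvd hg
  exact h p (Nat.prime_iff_prime_int.mp hp)
    (dvd_trans (Int.natCast_dvd_natCast.mpr hpd) (Int.gcd_dvd_left _ _))
    (dvd_trans (Int.natCast_dvd_natCast.mpr hpd) (Int.gcd_dvd_right _ _))

private lemma two_dvd_of_prime_dvd_two {l : ℤ} (hl : Prime l) (h : l ∣ 2) : (2:ℤ) ∣ l := by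
  have h1 : l.natAbs ∣ 2 := by
    have := Int.natAbs_dvd_natAbs.mpr h
    simpa using this
  have h2 : l.natAbs = 2 :=
    (Nat.prime_dvd_prime_iff_eq (Int.prime_iff_natAbs_prime.mp hl) Nat.prime_two).mp h1
  have h3 : ((l.natAbs : ℤ)) ∣ l := Int.natAbs_dvd.mpr dvd_rfl
  rwa [h2] at h3

private lemma dvd_of_dvd_sign_mul {l ε k : ℤ} (hε : ε = 1 ∨ ε = -1) (h : l ∣ ε * k) : l ∣ k := by
  rcases hε with rfl | rfl
  · simpa using h
  · rw [neg_one_mul] at h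
    exact dvd_neg.mp h

private lemma exists_sq_form (z : ℤ) : ∃ j, z ^ 2 = 4 * j ∨ z ^ 2 = 4 * j + 1 := by
  rcases Int.even_or_odd z with ⟨k, hk⟩ | ⟨k, hk⟩
  · exact ⟨k ^ 2, Or.inl (by rw [hk]; ring)⟩
  · exact ⟨k ^ 2 + k, Or.inr (by rw [hk]; ring)⟩


set_option maxHeartbeats 4000000 in
/-- arithmetic content of Theorem 3.1.4, a-series.  Let `a, b, c ≥ 1`
with `gcd(a,b) = 1`, `d > 0`, and `μ` with `gcd(μ, 2abc²) = 1` and `μ² ≡ d (mod 4a²bc²)`.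
A pair `(x,y)` satisfies: `x² − dy² = 4a²b²c²`; `x ≡ μy (mod 2abc²)`;
`x ≡ ±2abc (mod d)`; `b ∣ x` and `b ∣ y`; `x ≡ μy (mod 2a²bc²)`; and
`gcd(x, y, (x − μy)/(2abc²)) = 1` — if and only if there are signs `ε, α = ±1` and
integers `p, q` with `(x,y) = (ε(2abc + αbdq²), εαbpq)`, `p² − dq² = 4αac`,
`2ac ∣ p − μq`, `gcd(a, p, q) = 1`, and `2acl ∤ p − μq` for every prime `l ∣ b`. -/
theorem a_series_solutions_iff_associated
    (a b c : ℤ) (ha : 1 ≤ a) (hb : 1 ≤ b) (hc : 1 ≤ c)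
    (hab : Int.gcd a b = 1) (d : ℤ) (hd : 0 < d)
    (μ : ℤ) (hμ : Int.gcd μ (2 * a * b * c ^ 2) = 1)
    (hdμ : (4 * a ^ 2 * b * c ^ 2) ∣ (μ ^ 2 - d)) (x y : ℤ) :
    (x ^ 2 - d * y ^ 2 = 4 * a ^ 2 * b ^ 2 * c ^ 2 ∧
     (2 * a * b * c ^ 2) ∣ (x - μ * y) ∧
     (d ∣ (x - 2 * a * b * c) ∨ d ∣ (x + 2 * a * b * c)) ∧
     (b ∣ x ∧ b ∣ y) ∧
     (2 * a ^ 2 * b * c ^ 2) ∣ (x - μ * y) ∧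
     Int.gcd x (Int.gcd y ((x - μ * y) / (2 * a * b * c ^ 2))) = 1) ↔
    (∃ ε α p q : ℤ, (ε = 1 ∨ ε = -1) ∧ (α = 1 ∨ α = -1) ∧
      x = ε * (2 * a * b * c + α * b * d * q ^ 2) ∧
      y = ε * (α * b * p * q) ∧
      p ^ 2 - d * q ^ 2 = 4 * α * a * c ∧
      (2 * a * c) ∣ (p - μ * q) ∧
      Int.gcd a (Int.gcd p q) = 1 ∧
      ∀ l : ℤ, Prime l → l ∣ b → ¬ (2 * a * c * l) ∣ (p - μ * q)) := by
  have ha0 : (a : ℤ) ≠ 0 := by omega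
  have hb0 : (b : ℤ) ≠ 0 := by omega
  have hc0 : (c : ℤ) ≠ 0 := by omega
  have hd0 : (d : ℤ) ≠ 0 := by omega
  obtain ⟨t, ht⟩ := hdμ
  have hcop_μ : IsCoprime μ (2 * a * b * c ^ 2) := Int.isCoprime_iff_gcd_eq_one.mpr hμ
  have hcop_ab : IsCoprime a b := Int.isCoprime_iff_gcd_eq_one.mpr hab
  have hμodd : ¬ (2:ℤ) ∣ μ := by
    intro h2
    have h2' : (2:ℤ) ∣ 2 * a * b * c ^ 2 := ⟨a * b * c ^ 2, by ring⟩
    have h3 := Int.dvd_gcd h2 h2'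
    rw [hμ] at h3
    norm_num at h3
  obtain ⟨μ0, hμ0⟩ : ∃ m, μ = 2 * m + 1 := by
    rcases Int.even_or_odd μ with ⟨k, hk⟩ | ⟨k, hk⟩
    · exact absurd ⟨k, by omega⟩ hμodd
    · exact ⟨k, hk⟩
  obtain ⟨k4, hd4k⟩ : ∃ k, d = 4 * k + 1 := by
    have h4 : (4:ℤ) ∣ μ ^ 2 - d := ⟨a ^ 2 * b * c ^ 2 * t, by rw [ht]; ring⟩
    obtain ⟨j, hj⟩ := h4
    exact ⟨μ0 ^ 2 + μ0 - j, by linear_combination (-1) * hj + (μ + 2 * μ0 + 1) * hμ0⟩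
  have hdodd : ¬ (2:ℤ) ∣ d := by omega
  have hcop_db : IsCoprime d b := by
    have h1 : IsCoprime (μ ^ 2) b :=
      (hcop_μ.of_isCoprime_of_dvd_right ⟨2 * a * c ^ 2, by ring⟩).pow_left
    have h2 := h1.add_mul_left_left (-(4 * a ^ 2 * c ^ 2 * t))
    have h3 : μ ^ 2 + b * -(4 * a ^ 2 * c ^ 2 * t) = d := by linear_combination ht
    rwa [h3] at h2
  have hcop_da : IsCoprime d a := by
    have h1 : IsCoprime (μ ^ 2) a :=
      (hcop_μ.of_isCoprime_of_dvd_right ⟨2 * b * c ^ 2, by ring⟩).pow_left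
    have h2 := h1.add_mul_left_left (-(4 * a * b * c ^ 2 * t))
    have h3 : μ ^ 2 + a * -(4 * a * b * c ^ 2 * t) = d := by linear_combination ht
    rwa [h3] at h2
  have hcop_μ2ac : IsCoprime μ (2 * a * c) :=
    hcop_μ.of_isCoprime_of_dvd_right ⟨b * c, by ring⟩
  have hapos : (0:ℤ) < a := by omega
  have hbpos : (0:ℤ) < b := by omega
  have hcpos : (0:ℤ) < c := by omega
  have h2a2c2 : (2 * a ^ 2 * c ^ 2 : ℤ) ≠ 0 := ne_of_gt (by positivity)
  have h2abc2 : (2 * a * b * c ^ 2 : ℤ) ≠ 0 := ne_of_gt (by positivity)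
  have h2ac0 : (2 * a * c : ℤ) ≠ 0 := ne_of_gt (by positivity)
  have h4ac0 : (4 * a * c : ℤ) ≠ 0 := ne_of_gt (by positivity)
  constructor
  · -- FORWARD
    rintro ⟨hpell, hii, hiii, ⟨hbx, hby⟩, hv, hgcd⟩
    have hgcd6 : ∀ l : ℤ, Prime l → l ∣ x → l ∣ y →
        l ∣ ((x - μ * y) / (2 * a * b * c ^ 2)) → False := by
      intro l hl h1 h2 h3
      have h4 : l ∣ (Int.gcd x ↑(Int.gcd y ((x - μ * y) / (2 * a * b * c ^ 2))) : ℤ) :=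
        Int.dvd_coe_gcd h1 (Int.dvd_coe_gcd h2 h3)
      rw [hgcd] at h4
      exact hl.not_isUnit (isUnit_of_dvd_one (by exact_mod_cast h4))
    rcases eq_or_ne y 0 with rfl | hy0
    · -- special case y = 0
      have hxx : (x - 2 * a * b * c) * (x + 2 * a * b * c) = 0 := by linear_combination hpell
      obtain ⟨k, hk⟩ := hv
      have h2abc0 : (2 * a * b * c : ℤ) ≠ 0 := ne_of_gt (by positivity)
      have hack : ∀ hx1 : x = 2 * a * b * c ∨ x = -(2 * a * b * c), a = 1 ∧ c = 1 := by
        intro hx1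
        have hack1 : a * c * k = 1 ∨ a * c * k = -1 := by
          rcases hx1 with h | h
          · left
            apply mul_left_cancel₀ h2abc0
            linear_combination (-1) * hk + h
          · right
            apply mul_left_cancel₀ h2abc0
            linear_combination (-1) * hk + h
        have hdvd : (a * c) ∣ 1 := by
          rcases hack1 with h | h
          · exact Dvd.intro k h
          · exact ⟨-k, by linarith⟩
        have hac1 : a * c = 1 := by
          have h1 : a * c ≤ 1 := Int.le_of_dvd one_pos hdvd
          have h2 : 1 ≤ a * c := by nlinarith
          omega
        constructor <;> nlinarith
      rcases mul_eq_zero.mp hxx with h | h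
      · have hx1 : x = 2 * a * b * c := by linarith
        obtain ⟨ha1, hc1⟩ := hack (Or.inl hx1)
        subst ha1; subst hc1
        refine ⟨1, 1, 2, 0, Or.inl rfl, Or.inl rfl, by linarith, by ring, by norm_num,
          by norm_num, by simp [Int.gcd], ?_⟩
        intro l hl hlb hdvd
        have h2' : (2 : ℤ) - μ * 0 = 2 := by ring
        rw [h2'] at hdvd
        obtain ⟨k', hk'⟩ := hdvd
        have : l * k' = 1 := by linarith
        exact hl.not_isUnit (IsUnit.of_mul_eq_one _ this)
      · have hx1 : x = -(2 * a * b * c) := by linarith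
        obtain ⟨ha1, hc1⟩ := hack (Or.inr hx1)
        subst ha1; subst hc1
        refine ⟨-1, 1, 2, 0, Or.inr rfl, Or.inl rfl, by linarith, by ring, by norm_num,
          by norm_num, by simp [Int.gcd], ?_⟩
        intro l hl hlb hdvd
        have h2' : (2 : ℤ) - μ * 0 = 2 := by ring
        rw [h2'] at hdvd
        obtain ⟨k', hk'⟩ := hdvd
        have : l * k' = 1 := by linarith
        exact hl.not_isUnit (IsUnit.of_mul_eq_one _ this)
    -- main case y ≠ 0
    obtain ⟨ε, hε, hdx⟩ : ∃ ε : ℤ, (ε = 1 ∨ ε = -1) ∧ d ∣ ε * x - 2 * a * b * c := by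
      rcases hiii with h | h
      · exact ⟨1, Or.inl rfl, by simpa using h⟩
      · refine ⟨-1, Or.inr rfl, ?_⟩
        have he : (-1 : ℤ) * x - 2 * a * b * c = -(x + 2 * a * b * c) := by ring
        rw [he]; exact dvd_neg.mpr h
    have hε2 : ε ^ 2 = 1 := by rcases hε with rfl | rfl <;> ring
    obtain ⟨X, hX⟩ : ∃ X, ε * x = b * X := by
      obtain ⟨X, hX'⟩ := hbx; exact ⟨ε * X, by rw [hX']; ring⟩
    obtain ⟨Y, hY⟩ : ∃ Y, ε * y = b * Y := by
      obtain ⟨Y, hY'⟩ := hby; exact ⟨ε * Y, by rw [hY']; ring⟩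
    have hb2 : (b ^ 2 : ℤ) ≠ 0 := pow_ne_zero _ hb0
    have hXY : X ^ 2 - d * Y ^ 2 = 4 * a ^ 2 * c ^ 2 := by
      apply mul_left_cancel₀ hb2
      linear_combination (-(ε * x + b * X)) * hX + (d * (ε * y + b * Y)) * hY + hpell +
        (x ^ 2 - d * y ^ 2) * hε2
    have hxe : x = ε * (b * X) := by linear_combination ε * hX + (-x) * hε2
    have hye : y = ε * (b * Y) := by linear_combination ε * hY + (-y) * hε2
    obtain ⟨s, hs⟩ : ∃ s, X - 2 * a * c = d * s := by
      have h1 : d ∣ b * (X - 2 * a * c) := by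
        have he : b * (X - 2 * a * c) = ε * x - 2 * a * b * c := by
          linear_combination (-1) * hX
        rw [he]; exact hdx
      exact hcop_db.dvd_of_dvd_mul_left h1
    obtain ⟨m₁, hm⟩ : ∃ m, X - μ * Y = 2 * a ^ 2 * c ^ 2 * m := by
      obtain ⟨k0, hk0⟩ := hv
      refine ⟨ε * k0, ?_⟩
      apply mul_left_cancel₀ hb0
      linear_combination (-1) * hX + μ * hY + ε * hk0
    have hkey : m₁ * (X + μ * Y) = 2 - 2 * b * t * Y ^ 2 := by
      apply mul_left_cancel₀ h2a2c2
      linear_combination (-(X + μ * Y)) * hm + hXY + (-(Y ^ 2)) * ht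
    have hodd2 : ∀ l : ℤ, Prime l → l ∣ X → l ∣ Y → l ∣ 2 := by
      intro l hl h1 h2
      have h3 : l ∣ m₁ * (X + μ * Y) := (dvd_add h1 (h2.mul_left μ)).mul_left m₁
      rw [hkey] at h3
      obtain ⟨Yw, hYw⟩ := h2
      have h4 : (2 : ℤ) = (2 - 2 * b * t * Y ^ 2) + l * (2 * b * t * Yw * Y) := by
        linear_combination (2 * b * t * Y) * hYw
      rw [h4]; exact dvd_add h3 ⟨2 * b * t * Yw * Y, rfl⟩
    have hYne : Y ≠ 0 := by
      intro h
      apply hy0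
      have h1 : ε * y = 0 := by rw [hY, h, mul_zero]
      rcases hε with rfl | rfl <;> omega
    have hsX : s * (X + 2 * a * c) = Y ^ 2 := by
      apply mul_left_cancel₀ hd0
      linear_combination (-(X + 2 * a * c)) * hs + hXY
    have hs0 : s ≠ 0 := by
      intro h
      apply hYne
      have h1 : Y ^ 2 = 0 := by rw [← hsX, h]; ring
      exact pow_eq_zero_iff (by norm_num) |>.mp h1
    have hdoddO : Odd d := ⟨2 * k4, by omega⟩
    -- Structure of the even case
    have hEven : (2:ℤ) ∣ X → ∃ X0 Y1, X = 2 * X0 ∧ Y = 4 * Y1 ∧ ¬ (2:ℤ) ∣ X0 ∧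
        ¬ (2:ℤ) ∣ (a * c) := by
      intro h2X
      obtain ⟨X0, hX0⟩ := h2X
      have h2Y : (2:ℤ) ∣ Y := by
        rcases Int.even_or_odd Y with ⟨u, hu⟩ | ⟨u, hu⟩
        · exact ⟨u, by omega⟩
        · exfalso
          have hE : d * (4 * (u ^ 2 + u) + 1) = 4 * (X0 ^ 2 - a ^ 2 * c ^ 2) := by
            linear_combination (-1) * hXY + (X + 2 * X0) * hX0 + (-(d * (Y + 2 * u + 1))) * hu
          have hodd1 : Odd (d * (4 * (u ^ 2 + u) + 1)) :=
            hdoddO.mul ⟨2 * (u ^ 2 + u), by ring⟩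
          rw [hE] at hodd1
          exact (Int.not_odd_iff_even.mpr ⟨2 * (X0 ^ 2 - a ^ 2 * c ^ 2), by ring⟩) hodd1
      obtain ⟨Y0, hY0⟩ := h2Y
      have hsum : ¬ (2:ℤ) ∣ (X0 + μ * Y0) := by
        intro h2sum
        obtain ⟨z, hz⟩ := h2sum
        have hcon : 2 * (m₁ * z) = 1 - 4 * (b * t * Y0 ^ 2) := by
          apply mul_left_cancel₀ (two_ne_zero (α := ℤ))
          linear_combination hkey - m₁ * hX0 - (m₁ * μ + 2 * b * t * (Y + 2 * Y0)) * hY0 -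
            (2 * m₁) * hz
        obtain ⟨mm, hmm⟩ : ∃ mm : ℤ, mm = m₁ * z := ⟨_, rfl⟩
        obtain ⟨kk, hkk⟩ : ∃ kk : ℤ, kk = b * t * Y0 ^ 2 := ⟨_, rfl⟩
        rw [← hmm, ← hkk] at hcon
        omega
      have hX0odd : ¬ (2:ℤ) ∣ X0 := by
        intro h2X0
        obtain ⟨X1, hX1⟩ := h2X0
        have hY0odd : ¬ (2:ℤ) ∣ Y0 := by
          intro h2Y0
          obtain ⟨V, hVv⟩ := h2Y0
          exact hsum ⟨X1 + μ * V, by rw [hX1, hVv]; ring⟩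
        obtain ⟨n, hn⟩ : ∃ n, Y0 = 2 * n + 1 := by
          rcases Int.even_or_odd Y0 with ⟨u, hu⟩ | ⟨u, hu⟩
          · exact absurd ⟨u, by omega⟩ hY0odd
          · exact ⟨u, hu⟩
        -- 4*(a*c)^2 = 16*J - 4 : contradiction with squares mod 4
        obtain ⟨J, hJ⟩ : ∃ J : ℤ, 4 * (a * c) ^ 2 = 16 * J - 4 := by
          refine ⟨X1 ^ 2 - 4 * k4 * (n ^ 2 + n) - k4 - (n ^ 2 + n), ?_⟩
          linear_combination (-1) * hXY + (X + 2 * X0) * hX0 + 4 * (X0 + 2 * X1) * hX1 +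
            (-(d * (Y + 2 * Y0))) * hY0 + (-(4 * d * (Y0 + 2 * n + 1))) * hn +
            (-(4 * (2 * n + 1) ^ 2)) * hd4k
        obtain ⟨j, hj⟩ := exists_sq_form (a * c)
        rcases hj with hj | hj <;> (rw [hj] at hJ; omega)
      have hY0even : (2:ℤ) ∣ Y0 := by
        by_contra h2Y0
        obtain ⟨g, hg⟩ : ∃ g, X0 = 2 * g + 1 := by
          rcases Int.even_or_odd X0 with ⟨u, hu⟩ | ⟨u, hu⟩
          · exact absurd ⟨u, by omega⟩ hX0odd
          · exact ⟨u, hu⟩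
        obtain ⟨n, hn⟩ : ∃ n, Y0 = 2 * n + 1 := by
          rcases Int.even_or_odd Y0 with ⟨u, hu⟩ | ⟨u, hu⟩
          · exact absurd ⟨u, by omega⟩ h2Y0
          · exact ⟨u, hu⟩
        exact hsum ⟨g + μ0 * (2 * n + 1) + n + 1, by rw [hg, hn, hμ0]; ring⟩
      obtain ⟨Y1, hY1⟩ := hY0even
      have hacodd : ¬ (2:ℤ) ∣ (a * c) := by
        intro h2ac
        obtain ⟨hh, hhh⟩ := h2ac
        obtain ⟨g, hg⟩ : ∃ g, X0 = 2 * g + 1 := by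
          rcases Int.even_or_odd X0 with ⟨u, hu⟩ | ⟨u, hu⟩
          · exact absurd ⟨u, by omega⟩ hX0odd
          · exact ⟨u, hu⟩
        obtain ⟨J2, hJ2⟩ : ∃ J2 : ℤ, 16 * hh ^ 2 = 16 * J2 + 4 := by
          refine ⟨g ^ 2 + g - d * Y1 ^ 2, ?_⟩
          linear_combination (-1) * hXY + (X + 2 * X0) * hX0 + 4 * (X0 + 2 * g + 1) * hg +
            (-(d * (Y + 2 * Y0))) * hY0 + (-(4 * d * (Y0 + 2 * Y1))) * hY1 +
            (-(4 * (a * c + 2 * hh))) * hhh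
        obtain ⟨HH, hHH⟩ : ∃ z : ℤ, z = hh ^ 2 := ⟨_, rfl⟩
        rw [← hHH] at hJ2
        omega
      exact ⟨X0, Y1, hX0, by omega, hX0odd, hacodd⟩
    -- extraction of the square
    obtain ⟨q, hqs⟩ : ∃ q, s = q ^ 2 ∨ s = -q ^ 2 := by
      by_cases h2X : (2:ℤ) ∣ X
      · obtain ⟨X0, Y1, hX0, hY1, hX0odd, hacodd⟩ := hEven h2X
        obtain ⟨g, hg⟩ : ∃ g, X0 = 2 * g + 1 := by
          rcases Int.even_or_odd X0 with ⟨u, hu⟩ | ⟨u, hu⟩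
          · exact absurd ⟨u, by omega⟩ hX0odd
          · exact ⟨u, hu⟩
        obtain ⟨g2, hg2⟩ : ∃ g2, a * c = 2 * g2 + 1 := by
          rcases Int.even_or_odd (a * c) with ⟨u, hu⟩ | ⟨u, hu⟩
          · exact absurd ⟨u, by omega⟩ hacodd
          · exact ⟨u, hu⟩
        obtain ⟨u1, hu1⟩ : ∃ u1, X0 - a * c = 2 * u1 := ⟨g - g2, by omega⟩
        have hcop_d2 : IsCoprime d (2:ℤ) := isCoprime_of_forall_prime
          (fun l hl h1 h2 => hdodd (dvd_trans (two_dvd_of_prime_dvd_two hl h2) h1))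
        have hcop_d4 : IsCoprime d (4:ℤ) := by
          have h1 := hcop_d2.mul_right hcop_d2
          have h2 : (2 * 2 : ℤ) = 4 := by norm_num
          rwa [h2] at h1
        obtain ⟨S1, hS1⟩ : ∃ S1, u1 = d * S1 := by
          apply hcop_d4.dvd_of_dvd_mul_left
          exact ⟨s, by linear_combination (-2) * hu1 + (-1) * hX0 + hs⟩
        have hs4 : s = 4 * S1 := by
          apply mul_left_cancel₀ hd0
          linear_combination (-1) * hs + hX0 + 2 * hu1 + 4 * hS1
        have hYsq : S1 * (u1 + a * c) = Y1 ^ 2 := by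
          have h16 : (16 : ℤ) ≠ 0 := by norm_num
          apply mul_left_cancel₀ h16
          linear_combination hsX + (Y + 4 * Y1) * hY1 + (-(X + 2 * a * c)) * hs4 +
            (-(4 * S1)) * hX0 + (-(8 * S1)) * hu1
        have hcop2 : IsCoprime S1 (u1 + a * c) := by
          apply isCoprime_of_forall_prime
          intro l hl h1 h2
          have hlu1 : l ∣ u1 := by rw [hS1]; exact h1.mul_left d
          have hlX0 : l ∣ X0 := by
            have h3 := dvd_add hlu1 h2
            have h4 : u1 + (u1 + a * c) = X0 := by omega
            rwa [h4] at h3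
          have hlY1 : l ∣ Y1 := hl.dvd_of_dvd_pow (n := 2) (by rw [← hYsq]; exact h2.mul_left S1)
          have hlX : l ∣ X := by rw [hX0]; exact hlX0.mul_left 2
          have hlY : l ∣ Y := by rw [hY1]; exact hlY1.mul_left 4
          have h2l : (2:ℤ) ∣ l := two_dvd_of_prime_dvd_two hl (hodd2 l hl hlX hlY)
          exact hX0odd (dvd_trans h2l hlX0)
        obtain ⟨q1, hq1⟩ := Int.sq_of_isCoprime hcop2 hYsq
        refine ⟨2 * q1, ?_⟩
        rcases hq1 with h | h
        · exact Or.inl (by rw [hs4, h]; ring)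
        · exact Or.inr (by rw [hs4, h]; ring)
      · -- X odd
        have hsodd : ¬ (2:ℤ) ∣ s := by
          intro h2s
          apply h2X
          obtain ⟨v, hv'⟩ := h2s
          exact ⟨a * c + d * v, by linear_combination hs + d * hv'⟩
        have hcop : IsCoprime s (X + 2 * a * c) := by
          apply isCoprime_of_forall_prime
          intro l hl h1 h2
          have hlY : l ∣ Y := by
            apply hl.dvd_of_dvd_pow (n := 2)
            rw [← hsX]
            exact h2.mul_left s
          have hlX : l ∣ X := by
            have h3 : l ∣ d * s := h1.mul_left d
            rw [← hs] at h3
            have h4 := dvd_add h2 h3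
            have h5 : (X + 2 * a * c) + (X - 2 * a * c) = 2 * X := by ring
            rw [h5] at h4
            rcases hl.dvd_mul.mp h4 with h6 | h6
            · exact absurd (dvd_trans (two_dvd_of_prime_dvd_two hl h6) h1) hsodd
            · exact h6
          exact hsodd (dvd_trans (two_dvd_of_prime_dvd_two hl (hodd2 l hl hlX hlY)) h1)
        exact Int.sq_of_isCoprime hcop hsX
    obtain ⟨α, hα, hsq⟩ : ∃ α, (α = 1 ∨ α = -1) ∧ s = α * q ^ 2 := by
      rcases hqs with h | h
      · exact ⟨1, Or.inl rfl, by rw [h]; ring⟩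
      · exact ⟨-1, Or.inr rfl, by rw [h]; ring⟩
    have hα2 : α ^ 2 = 1 := by rcases hα with rfl | rfl <;> ring
    have hq0 : q ≠ 0 := by
      intro h
      apply hs0
      rw [hsq, h]; ring
    have hq2 : (q ^ 2 : ℤ) ≠ 0 := pow_ne_zero _ hq0
    have hqY : q ∣ Y := by
      have h1 : q ^ 2 ∣ Y ^ 2 :=
        ⟨α * (X + 2 * a * c), by linear_combination (-1) * hsX + (X + 2 * a * c) * hsq⟩
      exact (Int.pow_dvd_pow_iff (by norm_num)).mp h1
    obtain ⟨P, hP⟩ := hqY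
    obtain ⟨p, hpdef⟩ : ∃ p : ℤ, p = α * P := ⟨_, rfl⟩
    have hP2 : P ^ 2 = α * (X + 2 * a * c) := by
      apply mul_left_cancel₀ hq2
      linear_combination (-(Y + q * P)) * hP + (-1) * hsX + (X + 2 * a * c) * hsq
    have hppq : p ^ 2 - d * q ^ 2 = 4 * α * a * c := by
      linear_combination (p + α * P) * hpdef + α ^ 2 * hP2 + α * hs + d * α * hsq +
        (d * q ^ 2 + α * X + 2 * α * a * c) * hα2
    have hXform : X = 2 * a * c + α * d * q ^ 2 := by linear_combination hs + d * hsq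
    have hYform : Y = α * p * q := by
      linear_combination hP + (-(α * q)) * hpdef + (-(q * P)) * hα2
    -- condition (A) : 2ac ∣ p - μ q
    have hA' : (2 * a * c) ∣ (p - μ * q) := by
      have h1 : α * (μ * (q * (p - μ * q))) =
          2 * a * c * (1 - 2 * a * b * c * t * α * q ^ 2 - a * c * m₁) := by
        linear_combination (-1) * hm + hXform + (-μ) * hYform + (-(α * q ^ 2)) * ht
      have hdvd2 : (2 * a * c) ∣ μ * (q * (p - μ * q)) :=
        dvd_of_dvd_sign_mul hα ⟨1 - 2 * a * b * c * t * α * q ^ 2 - a * c * m₁, h1⟩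
      have hqu : (2 * a * c) ∣ q * (p - μ * q) :=
        (hcop_μ2ac.symm).dvd_of_dvd_mul_left hdvd2
      have hcop_q_ac : IsCoprime q (a * c) := by
        apply isCoprime_of_forall_prime
        intro l hl h1' h2'
        obtain ⟨v, hvq⟩ := h1'
        obtain ⟨u, huac⟩ := h2'
        have hlX : l ∣ X := ⟨2 * u + α * d * l * v ^ 2, by
          linear_combination hXform + 2 * huac + (α * d * (q + l * v)) * hvq⟩
        have hlY : l ∣ Y := ⟨α * p * v, by rw [hYform, hvq]; ring⟩
        have h2l : (2:ℤ) ∣ l := two_dvd_of_prime_dvd_two hl (hodd2 l hl hlX hlY)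
        have h2X : (2:ℤ) ∣ X := dvd_trans h2l hlX
        obtain ⟨_, _, _, _, _, hacodd⟩ := hEven h2X
        exact hacodd (dvd_trans h2l ⟨u, huac⟩)
      by_cases h2q : (2:ℤ) ∣ q
      · obtain ⟨v, hvq⟩ := h2q
        have h2X : (2:ℤ) ∣ X :=
          ⟨a * c + 2 * α * d * v ^ 2, by linear_combination hXform + (α * d * (q + 2 * v)) * hvq⟩
        obtain ⟨_, _, _, _, _, hacodd⟩ := hEven h2X
        have h2p : (2:ℤ) ∣ p := by
          apply Int.prime_two.dvd_of_dvd_pow (n := 2)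
          exact ⟨2 * d * v ^ 2 + 2 * α * a * c, by
            linear_combination hppq + (d * (q + 2 * v)) * hvq⟩
        have h2u : (2:ℤ) ∣ p - μ * q := by
          obtain ⟨pp, hpp⟩ := h2p
          exact ⟨pp - μ * v, by rw [hpp, hvq]; ring⟩
        have hacu : (a * c) ∣ (p - μ * q) := by
          have h3 : (a * c) ∣ q * (p - μ * q) := dvd_trans ⟨2, by ring⟩ hqu
          exact (hcop_q_ac.symm).dvd_of_dvd_mul_left h3
        have hcop2ac : IsCoprime (2:ℤ) (a * c) := isCoprime_of_forall_prime
          (fun l hl hh1 hh2 => hacodd (dvd_trans (two_dvd_of_prime_dvd_two hl hh1) hh2))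
        have h4 := hcop2ac.mul_dvd h2u hacu
        have h5 : (2 * (a * c) : ℤ) = 2 * a * c := by ring
        rwa [h5] at h4
      · have hcopq2 : IsCoprime q (2 * a * c) := by
          apply isCoprime_of_forall_prime
          intro l hl h1' h2'
          rcases hl.dvd_mul.mp h2' with h3 | h3
          · rcases hl.dvd_mul.mp h3 with h4 | h4
            · exact h2q (dvd_trans (two_dvd_of_prime_dvd_two hl h4) h1')
            · exact hl.not_isUnit (hcop_q_ac.isUnit_of_dvd' h1' (h4.mul_right c))
          · exact hl.not_isUnit (hcop_q_ac.isUnit_of_dvd' h1' (h3.mul_left a))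
        exact (hcopq2.symm).dvd_of_dvd_mul_left hqu
    obtain ⟨w, hw⟩ := hA'
    have hstar : a * b * c * t * q ^ 2 + μ * q * w + a * c * w ^ 2 = α := by
      apply mul_left_cancel₀ h4ac0
      linear_combination hppq - q ^ 2 * ht - (p + μ * q + 2 * a * c * w) * hw
    have hm₁eq : m₁ = α * (w ^ 2 - b * t * q ^ 2) := by
      apply mul_left_cancel₀ h2a2c2
      have hXmY2 : X - μ * Y = 2 * a ^ 2 * c ^ 2 * (α * (w ^ 2 - b * t * q ^ 2)) := by
        linear_combination hXform + (-μ) * hYform + (-(α * q ^ 2)) * ht +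
          (-(2 * a * c * α)) * hstar + (-(2 * a * c)) * hα2 + (-(μ * α * q)) * hw
      linear_combination (-1) * hm + hXmY2
    -- condition (B)
    have hB : Int.gcd a (Int.gcd p q) = 1 := by
      by_contra hg
      obtain ⟨l0, hl0, hld⟩ := Nat.exists_prime_and_dvd hg
      have hLp : Prime ((l0 : ℤ)) := Nat.prime_iff_prime_int.mp hl0
      have hL1 : (l0:ℤ) ∣ (Int.gcd a ↑(Int.gcd p q) : ℤ) := Int.natCast_dvd_natCast.mpr hld
      have hLa : (l0:ℤ) ∣ a := dvd_trans hL1 (Int.gcd_dvd_left _ _)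
      have hL2 : (l0:ℤ) ∣ ((Int.gcd p q : ℕ) : ℤ) := dvd_trans hL1 (Int.gcd_dvd_right _ _)
      have hLq : (l0:ℤ) ∣ q := dvd_trans hL2 (Int.gcd_dvd_right _ _)
      obtain ⟨A, hAa⟩ := hLa
      obtain ⟨V, hV⟩ := hLq
      have hLX : (l0:ℤ) ∣ X := ⟨2 * A * c + α * d * (l0:ℤ) * V ^ 2, by
        linear_combination hXform + (2 * c) * hAa + (α * d * (q + (l0:ℤ) * V)) * hV⟩
      have hLY : (l0:ℤ) ∣ Y := ⟨α * p * V, by rw [hYform, hV]; ring⟩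
      have h2l : (2:ℤ) ∣ (l0:ℤ) := two_dvd_of_prime_dvd_two hLp (hodd2 _ hLp hLX hLY)
      have h2X : (2:ℤ) ∣ X := dvd_trans h2l hLX
      obtain ⟨_, _, _, _, _, hacodd⟩ := hEven h2X
      exact hacodd (dvd_trans h2l ⟨A * c, by rw [hAa]; ring⟩)
    -- condition (C)
    have hxmand : x - μ * y = 2 * a * b * c ^ 2 * (ε * (a * m₁)) := by
      linear_combination ε * hX + (-(μ * ε)) * hY + (ε * b) * hm + (-(x - μ * y)) * hε2
    have hQval : (x - μ * y) / (2 * a * b * c ^ 2) = ε * (a * m₁) := by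
      rw [hxmand]
      exact Int.mul_ediv_cancel_left _ h2abc2
    have hC : ∀ l : ℤ, Prime l → l ∣ b → ¬ (2 * a * c * l) ∣ (p - μ * q) := by
      intro l hl hlb hcon
      obtain ⟨k, hk⟩ := hcon
      have hwlk : w = l * k := by
        apply mul_left_cancel₀ h2ac0
        linear_combination (-1) * hw + hk
      obtain ⟨B, hBb⟩ := hlb
      have hLm1 : l ∣ m₁ := ⟨α * (l * k ^ 2 - B * t * q ^ 2), by
        rw [hm₁eq, hwlk, hBb]; ring⟩
      have hlx : l ∣ x := ⟨ε * (B * X), by rw [hxe, hBb]; ring⟩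
      have hly : l ∣ y := ⟨ε * (B * Y), by rw [hye, hBb]; ring⟩
      have hlQ : l ∣ (x - μ * y) / (2 * a * b * c ^ 2) := by
        rw [hQval]
        obtain ⟨M, hM⟩ := hLm1
        exact ⟨ε * (a * M), by rw [hM]; ring⟩
      exact hgcd6 l hl hlx hly hlQ
    refine ⟨ε, α, p, q, hε, hα, ?_, ?_, hppq, ⟨w, hw⟩, hB, hC⟩
    · linear_combination hxe + (ε * b) * hXform
    · linear_combination hye + (ε * b) * hYform
  · -- BACKWARD
    rintro ⟨ε, α, p, q, hε, hα, hx, hy, hpq, hA, hB, hC⟩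
    obtain ⟨w, hw⟩ := hA
    have hε2 : ε ^ 2 = 1 := by rcases hε with rfl | rfl <;> ring
    have hα2 : α ^ 2 = 1 := by rcases hα with rfl | rfl <;> ring
    obtain ⟨X, hXdef⟩ : ∃ X : ℤ, X = 2 * a * c + α * d * q ^ 2 := ⟨_, rfl⟩
    obtain ⟨Y, hYdef⟩ : ∃ Y : ℤ, Y = α * p * q := ⟨_, rfl⟩
    have hXY : X ^ 2 - d * Y ^ 2 = 4 * a ^ 2 * c ^ 2 := by
      rw [hXdef, hYdef]
      linear_combination (-(d * q ^ 2 * α ^ 2)) * hpq + (-(4 * a * c * d * q ^ 2 * α)) * hα2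
    have hstar : a * b * c * t * q ^ 2 + μ * q * w + a * c * w ^ 2 = α := by
      apply mul_left_cancel₀ h4ac0
      linear_combination hpq - q ^ 2 * ht - (p + μ * q + 2 * a * c * w) * hw
    have hXmY : X - μ * Y = 2 * a ^ 2 * c ^ 2 * (α * (w ^ 2 - b * t * q ^ 2)) := by
      rw [hXdef, hYdef]
      linear_combination (-(α * q ^ 2)) * ht + (-(2 * a * c * α)) * hstar +
        (-(2 * a * c)) * hα2 + (-(μ * α * q)) * hw
    have hkey : (α * (w ^ 2 - b * t * q ^ 2)) * (X + μ * Y) = 2 - 2 * b * t * Y ^ 2 := by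
      apply mul_left_cancel₀ h2a2c2
      linear_combination (-(X + μ * Y)) * hXmY + hXY + (-(Y ^ 2)) * ht
    have hxmand : x - μ * y = 2 * a * b * c ^ 2 * (ε * (a * (α * (w ^ 2 - b * t * q ^ 2)))) := by
      linear_combination hx + (-μ) * hy + (ε * b) * hXmY + (-(ε * b)) * hXdef +
        (ε * b * μ) * hYdef
    have hxbX : x = ε * (b * X) := by
      linear_combination hx + (-(ε * b)) * hXdef
    have hybY : y = ε * (b * Y) := by
      linear_combination hy + (-(ε * b)) * hYdef
    refine ⟨?_, ?_, ?_, ⟨?_, ?_⟩, ?_, ?_⟩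
    · linear_combination (x + ε * (2 * a * b * c + α * b * d * q ^ 2)) * hx -
        d * (y + ε * (α * b * p * q)) * hy + (-(ε ^ 2 * α ^ 2 * b ^ 2 * d * q ^ 2)) * hpq +
        (4 * a ^ 2 * b ^ 2 * c ^ 2) * hε2 + (-(4 * ε ^ 2 * a * b ^ 2 * c * d * α * q ^ 2)) * hα2
    · exact ⟨ε * (a * (α * (w ^ 2 - b * t * q ^ 2))), by linear_combination hxmand⟩
    · rcases hε with rfl | rfl
      · exact Or.inl ⟨α * b * q ^ 2, by linear_combination hx⟩
      · exact Or.inr ⟨-(α * b * q ^ 2), by linear_combination hx⟩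
    · exact ⟨ε * (2 * a * c + α * d * q ^ 2), by linear_combination hx + (-ε) * hXdef + ε * hXdef⟩
    · exact ⟨ε * (α * p * q), by linear_combination hy⟩
    · exact ⟨ε * (α * (w ^ 2 - b * t * q ^ 2)), by linear_combination hxmand⟩
    · rw [hxmand, Int.mul_ediv_cancel_left _ h2abc2]
      by_contra hg
      obtain ⟨l0, hl0, hld⟩ := Nat.exists_prime_and_dvd hg
      have hLp : Prime ((l0 : ℤ)) := Nat.prime_iff_prime_int.mp hl0
      set L : ℤ := (l0 : ℤ) with hLdef
      have hL1 : L ∣ (Int.gcd x ↑(Int.gcd y (ε * (a * (α * (w ^ 2 - b * t * q ^ 2))))) : ℤ) :=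
        Int.natCast_dvd_natCast.mpr hld
      have hLx : L ∣ x := dvd_trans hL1 (Int.gcd_dvd_left _ _)
      have hL2 : L ∣ ((Int.gcd y (ε * (a * (α * (w ^ 2 - b * t * q ^ 2)))) : ℕ) : ℤ) :=
        dvd_trans hL1 (Int.gcd_dvd_right _ _)
      have hLy : L ∣ y := dvd_trans hL2 (Int.gcd_dvd_left _ _)
      have hLQ : L ∣ ε * (a * (α * (w ^ 2 - b * t * q ^ 2))) := dvd_trans hL2 (Int.gcd_dvd_right _ _)
      have hLm : L ∣ a * (α * (w ^ 2 - b * t * q ^ 2)) := dvd_of_dvd_sign_mul hε hLQ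
      rcases hLp.dvd_mul.mp hLm with hLa | hLm2
      · -- L ∣ a
        obtain ⟨A, hAa⟩ := hLa
        have hLbody : L ∣ 2 * a * b * c + α * b * d * q ^ 2 :=
          dvd_of_dvd_sign_mul hε (hx ▸ hLx)
        have hLbdq : L ∣ α * (b * d * q ^ 2) := by
          have h1 : (2 * a * b * c + α * b * d * q ^ 2) - L * (2 * A * b * c)
              = α * (b * d * q ^ 2) := by rw [hAa]; ring
          rw [← h1]
          exact dvd_sub hLbody ⟨2 * A * b * c, rfl⟩
        have hLbdq2 : L ∣ b * d * q ^ 2 := dvd_of_dvd_sign_mul hα hLbdq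
        rcases hLp.dvd_mul.mp hLbdq2 with hLbd | hLq2
        · rcases hLp.dvd_mul.mp hLbd with hLb | hLd
          · exact hLp.not_isUnit (hcop_ab.isUnit_of_dvd' ⟨A, hAa⟩ hLb)
          · have hLμ2 : L ∣ μ ^ 2 := by
              obtain ⟨D, hD⟩ := hLd
              exact ⟨D + 4 * L * A ^ 2 * b * c ^ 2 * t, by
                linear_combination ht + hD + (4 * b * c ^ 2 * t * (a + L * A)) * hAa⟩
            have hLμ : L ∣ μ := hLp.dvd_of_dvd_pow hLμ2
            exact hLp.not_isUnit (hcop_μ.isUnit_of_dvd' hLμ ⟨2 * A * b * c ^ 2, by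
              rw [hAa]; ring⟩)
        · have hLq : L ∣ q := hLp.dvd_of_dvd_pow hLq2
          obtain ⟨Q, hQq⟩ := hLq
          have hLpp : L ∣ p := by
            apply hLp.dvd_of_dvd_pow (n := 2)
            exact ⟨d * Q * q + 4 * α * A * c, by
              linear_combination hpq + (d * q) * hQq + (4 * α * c) * hAa⟩
          have hfin : L ∣ (Int.gcd a ↑(Int.gcd p q) : ℤ) :=
            Int.dvd_coe_gcd ⟨A, hAa⟩ (Int.dvd_coe_gcd hLpp ⟨Q, hQq⟩)
          rw [hB] at hfin
          exact hLp.not_isUnit (isUnit_of_dvd_one (by exact_mod_cast hfin))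
      · -- L ∣ α * (w^2 - b t q^2)
        have hLw2 : L ∣ w ^ 2 - b * t * q ^ 2 := dvd_of_dvd_sign_mul hα hLm2
        by_cases hLb : L ∣ b
        · obtain ⟨B, hBb⟩ := hLb
          have hLwsq : L ∣ w ^ 2 := by
            obtain ⟨V, hV⟩ := hLw2
            exact ⟨V + B * t * q ^ 2, by linear_combination hV + (t * q ^ 2) * hBb⟩
          obtain ⟨W, hW⟩ := hLp.dvd_of_dvd_pow hLwsq
          exact hC L hLp ⟨B, hBb⟩ ⟨W, by rw [hw, hW]; ring⟩
        · have hLbX : L ∣ b * X := dvd_of_dvd_sign_mul hε (hxbX ▸ hLx)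
          have hLX : L ∣ X := (hLp.dvd_mul.mp hLbX).resolve_left hLb
          have hLbY : L ∣ b * Y := dvd_of_dvd_sign_mul hε (hybY ▸ hLy)
          have hLY : L ∣ Y := (hLp.dvd_mul.mp hLbY).resolve_left hLb
          have hL2' : L ∣ 2 := by
            obtain ⟨Yw, hYw⟩ := hLY
            have h1 : L ∣ α * (w ^ 2 - b * t * q ^ 2) * (X + μ * Y) :=
              Dvd.dvd.mul_right hLm2 _
            rw [hkey] at h1
            have h2 : (2 : ℤ) = (2 - 2 * b * t * Y ^ 2) + L * (2 * b * t * Yw * Y) := by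
              linear_combination (2 * b * t * Y) * hYw
            rw [h2]
            exact dvd_add h1 ⟨2 * b * t * Yw * Y, rfl⟩
          have h2L : (2 : ℤ) ∣ L := two_dvd_of_prime_dvd_two hLp hL2'
          obtain ⟨X0, hX0⟩ := dvd_trans h2L hLX
          obtain ⟨Y0, hY0⟩ := dvd_trans h2L hLY
          obtain ⟨n, hn⟩ := dvd_trans h2L (dvd_of_dvd_sign_mul hα hLm2)
          have hcontra : 2 * (α * (n * (X0 + μ * Y0))) = 1 - 4 * (b * t * Y0 ^ 2) := by
            apply mul_left_cancel₀ (two_ne_zero (α := ℤ))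
            linear_combination hkey - (α * (X + μ * Y)) * hn - (2 * n * α) * hX0 -
              (2 * n * α * μ + 2 * b * t * (Y + 2 * Y0)) * hY0
          obtain ⟨m, hm'⟩ : ∃ m : ℤ, m = α * (n * (X0 + μ * Y0)) := ⟨_, rfl⟩
          obtain ⟨kk, hkk⟩ : ∃ kk : ℤ, kk = b * t * Y0 ^ 2 := ⟨_, rfl⟩
          rw [← hm', ← hkk] at hcontra
          omega
end

section
/- Fix integers a, b, c ≥ 1 with gcd(a,b) = 1, μ ∈ ℤ with gcd(μ, 2abc²) = 1, α ∈ {1, −1}, and an integer q ≥ 1. Then the set D_a^{μ,α}(q) is either empty or infinite; more precisely, it is nonempty if and only if there exists p ∈ ℤ with 2ac ∣ p − μq, 4abc²q² ∣ p² − 4αac − μ²q², and 2acl ∤ p − μq for every prime l with l² ∣ b. -/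
/-- The a-series set `𝒟(r,s;a)^{μ̄}_α(q)` of the paper (with `r = ac`, `s = bc`):
positive integers `d` with `d ≡ μ² (mod 4abc²)` such that there is `p ∈ ℤ` with
`p² − dq² = 4αac`, `2ac ∣ p − μq`, `gcd(a,p,q) = 1`, and `2acl ∤ p − μq` for every
prime `l` with `l² ∣ b`. -/
def DSet (a b c μ α q : ℤ) : Set ℤ :=
  {d : ℤ | 0 < d ∧ (4 * a * b * c ^ 2) ∣ (d - μ ^ 2) ∧
    ∃ p : ℤ, p ^ 2 - d * q ^ 2 = 4 * α * a * c ∧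
      (2 * a * c) ∣ (p - μ * q) ∧
      Int.gcd a (Int.gcd p q) = 1 ∧
      ∀ l : ℤ, Prime l → l ^ 2 ∣ b → ¬ (2 * a * c * l) ∣ (p - μ * q)}

/-- The a-series set `𝒟(r,s;a)^{μ̄}_α = ⋃_{q ≥ 1} 𝒟(r,s;a)^{μ̄}_α(q)`. -/
def DSetU (a b c μ α : ℤ) : Set ℤ :=
  ⋃ q ∈ {q : ℤ | 1 ≤ q}, DSet a b c μ α q

/-- Auxiliary: the congruence conditions force `gcd(a,q) = 1`. -/
lemma dSet_aux_gcd_aq (a b c : ℤ) (ha : 1 ≤ a) (hc : 1 ≤ c)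
    (μ α q : ℤ) (hα : α = 1 ∨ α = -1) (p : ℤ)
    (hp1 : (2 * a * c) ∣ (p - μ * q))
    (hp2 : (4 * a * b * c ^ 2 * q ^ 2) ∣ (p ^ 2 - 4 * α * a * c - μ ^ 2 * q ^ 2)) :
    Int.gcd a q = 1 := by
  obtain ⟨m, hm⟩ := hp1
  have hiden : p ^ 2 - 4 * α * a * c - μ ^ 2 * q ^ 2
      = (4 * a * c) * (m * μ * q + a * c * m ^ 2 - α) := by
    have hp : p = μ * q + 2 * a * c * m := by linarith
    rw [hp]; ring
  have h4ac : (4 * a * c) ≠ 0 := by positivity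
  have hX : (b * c * q ^ 2) ∣ (m * μ * q + a * c * m ^ 2 - α) := by
    have heq : 4 * a * b * c ^ 2 * q ^ 2 = (4 * a * c) * (b * c * q ^ 2) := by ring
    rwa [heq, hiden, mul_dvd_mul_iff_left h4ac] at hp2
  by_contra hne
  obtain ⟨ℓ, hℓp, hℓdvd⟩ := Nat.exists_prime_and_dvd hne
  have hgl : ((Int.gcd a q : ℤ)) ∣ a := Int.gcd_dvd_left a q
  have hgr : ((Int.gcd a q : ℤ)) ∣ q := Int.gcd_dvd_right a q
  have hla : (ℓ : ℤ) ∣ a := dvd_trans (Int.natCast_dvd_natCast.mpr hℓdvd) hgl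
  have hlq : (ℓ : ℤ) ∣ q := dvd_trans (Int.natCast_dvd_natCast.mpr hℓdvd) hgr
  have hlX : (ℓ : ℤ) ∣ (m * μ * q + a * c * m ^ 2 - α) :=
    dvd_trans (Dvd.dvd.mul_left (dvd_pow hlq two_ne_zero) (b * c)) hX
  have h1 : (ℓ : ℤ) ∣ m * μ * q := Dvd.dvd.mul_left hlq (m * μ)
  have h2 : (ℓ : ℤ) ∣ a * c * m ^ 2 := ((hla.mul_right c).mul_right (m ^ 2))
  have hlα : (ℓ : ℤ) ∣ α := by
    have h3 := dvd_sub (dvd_add h1 h2) hlX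
    have h4 : (m * μ * q + a * c * m ^ 2) - (m * μ * q + a * c * m ^ 2 - α) = α := by ring
    rwa [h4] at h3
  have hunit : IsUnit ((ℓ : ℤ)) := by
    rcases hα with h | h <;> subst h
    · exact isUnit_of_dvd_one hlα
    · exact isUnit_of_dvd_one ((dvd_neg).mp hlα)
  exact (Nat.prime_iff_prime_int.mp hℓp).not_unit hunit

/-- Auxiliary: from a `p` satisfying the congruence conditions, produce arbitrarily large
elements of `DSet`. -/
lemma dSet_aux_exists_large (a b c : ℤ) (ha : 1 ≤ a) (hb : 1 ≤ b) (hc : 1 ≤ c)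
    (μ α q : ℤ) (hα : α = 1 ∨ α = -1) (hq : 1 ≤ q) (p : ℤ)
    (hp1 : (2 * a * c) ∣ (p - μ * q))
    (hp2 : (4 * a * b * c ^ 2 * q ^ 2) ∣ (p ^ 2 - 4 * α * a * c - μ ^ 2 * q ^ 2))
    (hp3 : ∀ l : ℤ, Prime l → l ^ 2 ∣ b → ¬ (2 * a * c * l) ∣ (p - μ * q))
    (x : ℤ) : ∃ d ∈ DSet a b c μ α q, x < d := by
  obtain ⟨m, hm⟩ := hp1
  obtain ⟨t, htdef⟩ : ∃ t : ℤ, t = |x| * q ^ 2 + 4 * a * c + |p| + 1 := ⟨_, rfl⟩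
  obtain ⟨P, hPdef⟩ : ∃ P : ℤ, P = p + 2 * a * b * c ^ 2 * q ^ 2 * t := ⟨_, rfl⟩
  have hc2 : 1 ≤ c ^ 2 := by nlinarith
  have hq2 : 1 ≤ q ^ 2 := by nlinarith
  have hab1 : 1 ≤ a * b := by nlinarith
  have habc : 1 ≤ a * b * c ^ 2 := by nlinarith
  have habcq : 1 ≤ a * b * c ^ 2 * q ^ 2 := by nlinarith
  have hxabs : 0 ≤ |x| := abs_nonneg x
  have hxq : 0 ≤ |x| * q ^ 2 := by nlinarith
  have hac : 1 ≤ a * c := by nlinarith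
  have hpabs : -|p| ≤ p := neg_abs_le p
  have hpabs' : 0 ≤ |p| := abs_nonneg p
  have ht0 : 0 ≤ t := by rw [htdef]; linarith
  have hPge : p + 2 * t ≤ P := by rw [hPdef]; nlinarith
  have hP1 : |x| * q ^ 2 + 4 * a * c < P := by rw [htdef] at hPge; linarith
  have hPpos : 1 ≤ P := by linarith
  have hPsq : |x| * q ^ 2 + 4 * a * c < P ^ 2 := by nlinarith
  have hp1' : (2 * a * c) ∣ (P - μ * q) :=
    ⟨m + b * c * q ^ 2 * t, by linear_combination hPdef + hm⟩
  obtain ⟨K0, hK0⟩ := hp2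
  obtain ⟨K, hKdef⟩ : ∃ K : ℤ, K = K0 + t * p + a * b * c ^ 2 * q ^ 2 * t ^ 2 := ⟨_, rfl⟩
  have hK : P ^ 2 - 4 * α * a * c - μ ^ 2 * q ^ 2 = 4 * a * b * c ^ 2 * q ^ 2 * K := by
    linear_combination hK0 + (P + p + 2 * a * b * c ^ 2 * q ^ 2 * t) * hPdef
      - 4 * a * b * c ^ 2 * q ^ 2 * hKdef
  obtain ⟨d, hddef⟩ : ∃ d : ℤ, d = μ ^ 2 + 4 * a * b * c ^ 2 * K := ⟨_, rfl⟩
  have hdq : d * q ^ 2 = P ^ 2 - 4 * α * a * c := by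
    linear_combination q ^ 2 * hddef - hK
  have hdgt : |x| < d := by
    have h4 : |x| * q ^ 2 < d * q ^ 2 := by
      rcases hα with h | h <;> subst h <;> nlinarith
    exact lt_of_mul_lt_mul_right h4 (by positivity)
  refine ⟨d, ⟨by linarith, ⟨K, by linear_combination hddef⟩, P, by linarith, hp1', ?_, ?_⟩,
    by calc x ≤ |x| := le_abs_self x
         _ < d := hdgt⟩
  · -- gcd condition
    have hgaq : Int.gcd a q = 1 :=
      dSet_aux_gcd_aq a b c ha hc μ α q hα p ⟨m, hm⟩ ⟨K0, hK0⟩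
    have hgdl : ((Int.gcd a (Int.gcd P q) : ℤ)) ∣ a := Int.gcd_dvd_left _ _
    have hgdq : ((Int.gcd a (Int.gcd P q) : ℤ)) ∣ q :=
      dvd_trans (Int.gcd_dvd_right _ _) (Int.gcd_dvd_right _ _)
    have hdvd : ((Int.gcd a (Int.gcd P q) : ℤ)) ∣ (Int.gcd a q : ℤ) :=
      Int.dvd_coe_gcd hgdl hgdq
    rw [hgaq] at hdvd
    exact_mod_cast Nat.dvd_one.mp (by exact_mod_cast hdvd)
  · intro l hl hlb hcon
    apply hp3 l hl hlb
    obtain ⟨b', hb'⟩ : l ∣ b := dvd_trans (dvd_pow_self l two_ne_zero) hlb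
    have h2 : (2 * a * c * l) ∣ (2 * a * b * c ^ 2 * q ^ 2 * t) :=
      ⟨b' * c * q ^ 2 * t, by rw [hb']; ring⟩
    have h3 := dvd_sub hcon h2
    have h4 : (P - μ * q) - 2 * a * b * c ^ 2 * q ^ 2 * t = p - μ * q := by
      linear_combination hPdef
    rwa [h4] at h3

/-- Lemma 4.2.  Fix `a, b, c ≥ 1` with `gcd(a,b) = 1`, `μ` with
`gcd(μ, 2abc²) = 1`, `α = ±1` and `q ≥ 1`.  The set `𝒟(r,s;a)^{μ̄}_α(q)` is either
empty or infinite; more precisely, it is nonempty if and only if there exists `p ∈ ℤ`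
with `2ac ∣ p − μq`, `4abc²q² ∣ p² − 4αac − μ²q²`, and `2acl ∤ p − μq` for every prime
`l` with `l² ∣ b`. -/
theorem dSet_empty_or_infinite_and_nonempty_iff
    (a b c : ℤ) (ha : 1 ≤ a) (hb : 1 ≤ b) (hc : 1 ≤ c)
    (hab : Int.gcd a b = 1)
    (μ : ℤ) (hμ : Int.gcd μ (2 * a * b * c ^ 2) = 1)
    (α : ℤ) (hα : α = 1 ∨ α = -1)
    (q : ℤ) (hq : 1 ≤ q) :
    (DSet a b c μ α q = ∅ ∨ (DSet a b c μ α q).Infinite) ∧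
    ((DSet a b c μ α q).Nonempty ↔
      ∃ p : ℤ, (2 * a * c) ∣ (p - μ * q) ∧
        (4 * a * b * c ^ 2 * q ^ 2) ∣ (p ^ 2 - 4 * α * a * c - μ ^ 2 * q ^ 2) ∧
        ∀ l : ℤ, Prime l → l ^ 2 ∣ b → ¬ (2 * a * c * l) ∣ (p - μ * q)) := by
  have hiff : (DSet a b c μ α q).Nonempty ↔
      ∃ p : ℤ, (2 * a * c) ∣ (p - μ * q) ∧
        (4 * a * b * c ^ 2 * q ^ 2) ∣ (p ^ 2 - 4 * α * a * c - μ ^ 2 * q ^ 2) ∧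
        ∀ l : ℤ, Prime l → l ^ 2 ∣ b → ¬ (2 * a * c * l) ∣ (p - μ * q) := by
    constructor
    · rintro ⟨d, hd0, hddvd, p, he, h1, h2, h3⟩
      refine ⟨p, h1, ?_, h3⟩
      have heq : p ^ 2 - 4 * α * a * c - μ ^ 2 * q ^ 2 = (d - μ ^ 2) * q ^ 2 := by
        linear_combination he
      rw [heq]
      exact mul_dvd_mul_right hddvd (q ^ 2)
    · rintro ⟨p, h1, h2, h3⟩
      obtain ⟨d, hd, -⟩ := dSet_aux_exists_large a b c ha hb hc μ α q hα hq p h1 h2 h3 0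
      exact ⟨d, hd⟩
  refine ⟨?_, hiff⟩
  by_cases hne : (DSet a b c μ α q).Nonempty
  · right
    obtain ⟨p, h1, h2, h3⟩ := hiff.mp hne
    have hnb : ¬ BddAbove (DSet a b c μ α q) := by
      rintro ⟨x, hx⟩
      obtain ⟨d, hdmem, hdx⟩ := dSet_aux_exists_large a b c ha hb hc μ α q hα hq p h1 h2 h3 x
      exact absurd (hx hdmem) (not_le.mpr hdx)
    intro hfin
    exact hnb hfin.bddAbove
  · left
    exact Set.not_nonempty_iff_eq_empty.mp hne
end

section
/- Fix integers a, b, c ≥ 1 with gcd(a,b) = 1, μ ∈ ℤ with gcd(μ, 2abc²) = 1, α ∈ {1, −1}, and an integer q ≥ 1. Then the set D_a^{μ,α}(q) is nonempty if and only if there exists t ∈ ℤ with bcq² ∣ μqt + act² − α. Moreover, for every such solution t and every m ∈ ℤ, the rational number ((μq + 2ac(t + bcq²m))² − 4αac)/q² is an integer, and whenever it is positive it belongs to D_a^{μ,α}(q); in particular each solution t generates an infinite subset of D_a^{μ,α}(q), and these numbers over all solutions t give all elements of D_a^{μ,α}(q). -/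
lemma shift_dvd (a b c μ q t m α : ℤ)
    (ht : (b * c * q ^ 2) ∣ (μ * q * t + a * c * t ^ 2 - α)) :
    (b * c * q ^ 2) ∣
      (μ * q * (t + b * c * q ^ 2 * m) + a * c * (t + b * c * q ^ 2 * m) ^ 2 - α) := by
  obtain ⟨k, hk⟩ := ht
  exact ⟨k + m * (μ * q + 2 * a * c * t + a * c * (b * c * q ^ 2) * m),
    by linear_combination hk⟩

lemma key_mem (a b c μ α q : ℤ) (ha : 1 ≤ a) (hc : 1 ≤ c) (hq : 1 ≤ q)
    (hα : α = 1 ∨ α = -1) (T d : ℤ)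
    (hT : (b * c * q ^ 2) ∣ (μ * q * T + a * c * T ^ 2 - α))
    (hd : d * q ^ 2 = (μ * q + 2 * a * c * T) ^ 2 - 4 * α * a * c)
    (hpos : 0 < d) : d ∈ DSet a b c μ α q := by
  obtain ⟨k, hk⟩ := hT
  have hq2 : (q : ℤ) ^ 2 ≠ 0 := by positivity
  have h2ac : (2 * a * c : ℤ) ≠ 0 := by positivity
  have hαform : α = μ * q * T + a * c * T ^ 2 - b * c * q ^ 2 * k := by
    linear_combination -hk
  simp only [DSet, Set.mem_setOf_eq]
  refine ⟨hpos, ⟨k, ?_⟩, μ * q + 2 * a * c * T, by linear_combination -hd,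
    ⟨T, by ring⟩, ?_, ?_⟩
  · have h : (d - μ ^ 2) * q ^ 2 = (4 * a * b * c ^ 2 * k) * q ^ 2 := by
      linear_combination hd + 4 * a * c * hk
    exact mul_right_cancel₀ hq2 h
  · set p := μ * q + 2 * a * c * T with hp
    set g : ℤ := (Int.gcd a (Int.gcd p q) : ℤ) with hg
    have hga : g ∣ a := Int.gcd_dvd_left _ _
    have hgpq : g ∣ (Int.gcd p q : ℤ) := Int.gcd_dvd_right _ _
    have hgp : g ∣ p := hgpq.trans (Int.gcd_dvd_left _ _)
    have hgq : g ∣ q := hgpq.trans (Int.gcd_dvd_right _ _)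
    have hgα : g ∣ α := by
      rw [hαform]
      exact dvd_sub (dvd_add ((hgq.mul_left μ).mul_right T)
        ((hga.mul_right c).mul_right (T ^ 2)))
        ((((dvd_pow hgq two_ne_zero).mul_left (b * c))).mul_right k)
    have hg1 : g ∣ 1 := by
      rcases hα with rfl | rfl
      · exact hgα
      · exact (dvd_neg).mp hgα
    have h1 : g = 1 := Int.eq_one_of_dvd_one (Int.natCast_nonneg _) hg1
    rw [hg] at h1
    exact_mod_cast h1
  · intro l hl hlb hcon
    have hTl : l ∣ T := by
      have h2 : (2 * a * c) * l ∣ (2 * a * c) * T := by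
        have he : μ * q + 2 * a * c * T - μ * q = (2 * a * c) * T := by ring
        rw [← he]
        convert hcon using 2 <;> ring
      exact (mul_dvd_mul_iff_left h2ac).mp h2
    have hlb' : l ∣ b := (dvd_pow_self l two_ne_zero).trans hlb
    have hlα : l ∣ α := by
      rw [hαform]
      exact dvd_sub (dvd_add ((hTl.mul_left (μ * q)))
        ((dvd_pow hTl two_ne_zero).mul_left (a * c)))
        (((hlb'.mul_right c).mul_right (q ^ 2)).mul_right k)
    have : l ∣ 1 := by
      rcases hα with rfl | rfl
      · exact hlα
      · exact (dvd_neg).mp hlα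
    exact hl.not_unit (isUnit_of_dvd_one this)

set_option maxHeartbeats 1600000 in
/-- Lemma 4.3.  Fix `a, b, c ≥ 1` with `gcd(a,b) = 1`, `μ` with
`gcd(μ, 2abc²) = 1`, `α = ±1` and `q ≥ 1`.  Then `𝒟(r,s;a)^{μ̄}_α(q)` is nonempty if and
only if the congruence `μqt + act² ≡ α (mod bcq²)` has a solution `t ∈ ℤ`.  Moreover,
for every solution `t` and every `m ∈ ℤ`, the number
`((μq + 2ac(t + bcq²m))² − 4αac)/q²` is an integer, whenever positive it lies in
`𝒟(r,s;a)^{μ̄}_α(q)`; each solution `t` generates in this way an infinite subset of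
`𝒟(r,s;a)^{μ̄}_α(q)`, and these numbers over all solutions `t` exhaust
`𝒟(r,s;a)^{μ̄}_α(q)`. -/
theorem dSet_nonempty_iff_congruence_solvable
    (a b c : ℤ) (ha : 1 ≤ a) (hb : 1 ≤ b) (hc : 1 ≤ c)
    (hab : Int.gcd a b = 1)
    (μ : ℤ) (hμ : Int.gcd μ (2 * a * b * c ^ 2) = 1)
    (α : ℤ) (hα : α = 1 ∨ α = -1)
    (q : ℤ) (hq : 1 ≤ q) :
    ((DSet a b c μ α q).Nonempty ↔
      ∃ t : ℤ, (b * c * q ^ 2) ∣ (μ * q * t + a * c * t ^ 2 - α)) ∧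
    (∀ t : ℤ, (b * c * q ^ 2) ∣ (μ * q * t + a * c * t ^ 2 - α) →
      (∀ m : ℤ, (q ^ 2) ∣
          ((μ * q + 2 * a * c * (t + b * c * q ^ 2 * m)) ^ 2 - 4 * α * a * c)) ∧
      (∀ m d : ℤ,
          d * q ^ 2 = (μ * q + 2 * a * c * (t + b * c * q ^ 2 * m)) ^ 2 - 4 * α * a * c →
          0 < d → d ∈ DSet a b c μ α q) ∧
      {d ∈ DSet a b c μ α q | ∃ m : ℤ,
          d * q ^ 2 = (μ * q + 2 * a * c * (t + b * c * q ^ 2 * m)) ^ 2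
            - 4 * α * a * c}.Infinite) ∧
    (∀ d ∈ DSet a b c μ α q, ∃ t m : ℤ,
        (b * c * q ^ 2) ∣ (μ * q * t + a * c * t ^ 2 - α) ∧
        d * q ^ 2 = (μ * q + 2 * a * c * (t + b * c * q ^ 2 * m)) ^ 2
          - 4 * α * a * c) := by
  have conv : ∀ d ∈ DSet a b c μ α q, ∃ t : ℤ,
      (b * c * q ^ 2) ∣ (μ * q * t + a * c * t ^ 2 - α) ∧
      d * q ^ 2 = (μ * q + 2 * a * c * (t + b * c * q ^ 2 * 0)) ^ 2 - 4 * α * a * c := by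
    rintro d ⟨hpos, ⟨k, hk⟩, p, hp, ⟨t, hpt⟩, hg, hl⟩
    have h4ac : (4 * a * c : ℤ) ≠ 0 := by positivity
    refine ⟨t, ⟨k, ?_⟩, ?_⟩
    · have h : (4 * a * c) * (μ * q * t + a * c * t ^ 2 - α)
          = (4 * a * c) * (b * c * q ^ 2 * k) := by
        linear_combination hp + q ^ 2 * hk - (p + μ * q + 2 * a * c * t) * hpt
      exact mul_left_cancel₀ h4ac h
    · linear_combination -hp + (p + μ * q + 2 * a * c * t) * hpt
  have main : ∀ t : ℤ, (b * c * q ^ 2) ∣ (μ * q * t + a * c * t ^ 2 - α) →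
      (∀ m : ℤ, (q ^ 2) ∣
          ((μ * q + 2 * a * c * (t + b * c * q ^ 2 * m)) ^ 2 - 4 * α * a * c)) ∧
      (∀ m d : ℤ,
          d * q ^ 2 = (μ * q + 2 * a * c * (t + b * c * q ^ 2 * m)) ^ 2 - 4 * α * a * c →
          0 < d → d ∈ DSet a b c μ α q) ∧
      {d ∈ DSet a b c μ α q | ∃ m : ℤ,
          d * q ^ 2 = (μ * q + 2 * a * c * (t + b * c * q ^ 2 * m)) ^ 2
            - 4 * α * a * c}.Infinite := by
    intro t ht
    obtain ⟨k, hk⟩ := id ht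
    set D : ℤ → ℤ := fun m =>
      μ ^ 2 + 4 * a * b * c ^ 2 * (k + m * (μ * q + 2 * a * c * t + a * c * (b * c * q ^ 2) * m))
      with hD
    have hDq : ∀ m : ℤ,
        D m * q ^ 2 = (μ * q + 2 * a * c * (t + b * c * q ^ 2 * m)) ^ 2 - 4 * α * a * c := by
      intro m
      simp only [hD]
      linear_combination (-4 * a * c) * hk
    have hmem : ∀ m d : ℤ,
        d * q ^ 2 = (μ * q + 2 * a * c * (t + b * c * q ^ 2 * m)) ^ 2 - 4 * α * a * c →
        0 < d → d ∈ DSet a b c μ α q := by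
      intro m d hdm hdpos
      exact key_mem a b c μ α q ha hc hq hα (t + b * c * q ^ 2 * m) d
        (shift_dvd a b c μ q t m α ht) hdm hdpos
    refine ⟨fun m => ⟨D m, by linear_combination -hDq m⟩, hmem, ?_⟩
    -- infinitude
    set M : ℤ := |μ * q + 2 * a * c * t| + 2 * a * c + 1 with hM
    have habcq : (1 : ℤ) ≤ a * b := by nlinarith
    have habc2 : (1 : ℤ) ≤ a * b * c ^ 2 := by nlinarith
    have hA1 : (1 : ℤ) ≤ a * b * c ^ 2 * q ^ 2 := by nlinarith
    have hPbig : ∀ n : ℕ,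
        2 * a * c + 1 ≤ μ * q + 2 * a * c * (t + b * c * q ^ 2 * (M + n)) := by
      intro n
      have hn : (0 : ℤ) ≤ (n : ℤ) := Int.natCast_nonneg n
      have hMn : |μ * q + 2 * a * c * t| + 2 * a * c + 1 ≤ M + n := by
        rw [hM]; linarith
      have habs : -(|μ * q + 2 * a * c * t|) ≤ μ * q + 2 * a * c * t := neg_abs_le _
      have hexp : μ * q + 2 * a * c * (t + b * c * q ^ 2 * (M + n))
          = (μ * q + 2 * a * c * t) + (2 * (a * b * c ^ 2 * q ^ 2)) * (M + n) := by ring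
      rw [hexp]
      have hMn0 : (0 : ℤ) ≤ M + n := by positivity
      nlinarith [mul_nonneg (sub_nonneg.mpr hA1) hMn0]
    have hDpos : ∀ n : ℕ, 0 < D (M + n) := by
      intro n
      have h1 := hDq (M + n)
      have h2 := hPbig n
      have h3 : 4 * α * a * c ≤ 4 * a * c := by
        rcases hα with rfl | rfl <;> nlinarith
      have hq2 : (0 : ℤ) < q ^ 2 := by positivity
      have hP2 : (2 * a * c + 1) ^ 2
          ≤ (μ * q + 2 * a * c * (t + b * c * q ^ 2 * (M + n))) ^ 2 :=
        pow_le_pow_left₀ (by positivity) h2 2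
      have hnum : 0 < D (M + n) * q ^ 2 := by nlinarith
      rcases mul_pos_iff.mp hnum with ⟨h5, _⟩ | ⟨_, h6⟩
      · exact h5
      · linarith
    apply Set.infinite_of_injective_forall_mem
      (f := fun n : ℕ => D (M + n)) (s := _)
    · intro n1 n2 h
      simp only at h
      have h1 := hDq (M + n1)
      have h2 := hDq (M + n2)
      rw [h] at h1
      have hsq : (μ * q + 2 * a * c * (t + b * c * q ^ 2 * (M + n1))) ^ 2
          = (μ * q + 2 * a * c * (t + b * c * q ^ 2 * (M + n2))) ^ 2 := by linarith
      have hfac : ((μ * q + 2 * a * c * (t + b * c * q ^ 2 * (M + n1)))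
            - (μ * q + 2 * a * c * (t + b * c * q ^ 2 * (M + n2))))
          * ((μ * q + 2 * a * c * (t + b * c * q ^ 2 * (M + n1)))
            + (μ * q + 2 * a * c * (t + b * c * q ^ 2 * (M + n2)))) = 0 := by
        linear_combination hsq
      rcases mul_eq_zero.mp hfac with h0 | h0
      · have hz : (2 * (a * b * c ^ 2 * q ^ 2)) * ((n1 : ℤ) - n2) = 0 := by
          linear_combination h0
        have hAne : (2 * (a * b * c ^ 2 * q ^ 2) : ℤ) ≠ 0 := by positivity
        have : (n1 : ℤ) - n2 = 0 := by
          rcases mul_eq_zero.mp hz with h | h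
          · exact absurd h hAne
          · exact h
        have : (n1 : ℤ) = n2 := by linarith
        exact_mod_cast this
      · have := hPbig n1; have := hPbig n2
        have hac : (1 : ℤ) ≤ a * c := by nlinarith
        linarith
    · intro n
      refine ⟨hmem (M + n) (D (M + n)) (hDq (M + n)) (hDpos n), M + n, hDq (M + n)⟩
  refine ⟨⟨?_, ?_⟩, main, ?_⟩
  · rintro ⟨d, hd⟩
    obtain ⟨t, ht, -⟩ := conv d hd
    exact ⟨t, ht⟩
  · rintro ⟨t, ht⟩
    obtain ⟨-, -, hinf⟩ := main t ht
    obtain ⟨d, hd, -⟩ := hinf.nonempty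
    exact ⟨d, hd⟩
  · intro d hd
    obtain ⟨t, ht, heq⟩ := conv d hd
    exact ⟨t, 0, ht, heq⟩
end

section
/- Fix integers a, b, c ≥ 1 with gcd(a,b) = 1, μ ∈ ℤ with gcd(μ, 2abc²) = 1, and α ∈ {1, −1}. Then the set D_a^{μ,α}(1) is nonempty (and then infinite) if and only if there exists k ∈ ℤ with b ∣ ac²μ²k² + μ(μ² + 2αac)k + a. In particular, if b divides c², then D_a^{μ,α}(1) is nonempty and infinite. -/
private lemma isCoprime_of_forall_prime_s14 {x y : ℤ}
    (h : ∀ p : ℤ, Prime p → p ∣ x → p ∣ y → False) : IsCoprime x y := by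
  rw [Int.isCoprime_iff_gcd_eq_one]
  by_contra hg
  obtain ⟨p, hp, hpd⟩ := Nat.exists_prime_and_dvd hg
  have hpz : Prime (p : ℤ) := Nat.prime_iff_prime_int.mp hp
  exact h _ hpz ((Int.natCast_dvd_natCast.mpr hpd).trans (Int.gcd_dvd_left x y))
    ((Int.natCast_dvd_natCast.mpr hpd).trans (Int.gcd_dvd_right x y))

/-- Membership lemma: each `t` with `bc ∣ act² + μt − α` and positive discriminant value
gives an element of `DSet a b c μ α 1`. -/
private lemma mem_dSet_of_t (a b c μ α : ℤ) (ha : 1 ≤ a) (hc : 1 ≤ c)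
    (hα : α = 1 ∨ α = -1) (t : ℤ)
    (ht : (b * c) ∣ (a * c * t ^ 2 + μ * t - α))
    (hd : 0 < (μ + 2 * a * c * t) ^ 2 - 4 * α * a * c) :
    (μ + 2 * a * c * t) ^ 2 - 4 * α * a * c ∈ DSet a b c μ α 1 := by
  obtain ⟨w, hw⟩ := ht
  refine ⟨hd, ⟨w, by linear_combination (4 * a * c) * hw⟩,
    μ + 2 * a * c * t, by ring, ⟨t, by ring⟩, by simp, ?_⟩
  intro l hl hlb ⟨v, hv⟩
  -- hv : (μ + 2act) − μ·1 = 2ac·l·v, so t = l·v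
  have hac : (2 * a * c : ℤ) ≠ 0 := by positivity
  have htv : t = l * v := by
    have : 2 * a * c * t = 2 * a * c * (l * v) := by linear_combination hv
    exact mul_left_cancel₀ hac this
  have hlb' : l ∣ b := dvd_trans (dvd_pow_self l two_ne_zero) hlb
  obtain ⟨e, he⟩ := hlb'
  -- l divides α
  have hlα : l ∣ α := by
    refine ⟨a * c * l * v ^ 2 + μ * v - e * c * w, ?_⟩
    have := hw
    rw [he, htv] at this
    linear_combination -this
  have : IsUnit l := isUnit_of_dvd_one (by
    rcases hα with h1 | h1 <;> rw [h1] at hlα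
    · exact hlα
    · exact (dvd_neg.mp hlα))
  exact hl.not_unit this

/-- Extraction: an element of `DSet a b c μ α 1` yields `t` with `bc ∣ act² + μt − α`. -/
private lemma exists_t_of_mem (a b c μ α : ℤ) (ha : 1 ≤ a) (hc : 1 ≤ c) {d : ℤ}
    (hd : d ∈ DSet a b c μ α 1) :
    ∃ t : ℤ, (b * c) ∣ (a * c * t ^ 2 + μ * t - α) := by
  obtain ⟨hd0, ⟨w, hw⟩, p, hp, ⟨t, htp⟩, hg, hl⟩ := hd
  refine ⟨t, w, ?_⟩
  have hac : (4 * a * c : ℤ) ≠ 0 := by positivity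
  apply mul_left_cancel₀ hac
  -- 4ac (act² + μt − α) = d − μ² = 4abc² w = 4ac (bcw)
  have hpt : p = μ + 2 * a * c * t := by linear_combination htp
  calc 4 * a * c * (a * c * t ^ 2 + μ * t - α)
      = d - μ ^ 2 := by
        have : p ^ 2 - d = 4 * α * a * c := by linear_combination hp
        rw [hpt] at this
        linear_combination this
    _ = 4 * a * b * c ^ 2 * w := hw
    _ = 4 * a * c * (b * c * w) := by ring

/-- Key algebraic identity 1. -/
private lemma key1 (a b c μ α x m u : ℤ) (hα2 : α ^ 2 = 1) (hx : μ * x = 1 + b * c * m) :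
    a * c * (α * x + c * u) ^ 2 + μ * (α * x + c * u) - α
      = c * (a * x ^ 2 + 2 * α * a * c * x * u + a * c ^ 2 * u ^ 2 + α * b * m + μ * u) := by
  linear_combination (a * c * x ^ 2) * hα2 + α * hx

/-- Key algebraic identity 2. -/
private lemma key2 (a b c μ α x m u : ℤ) (hx : μ * x = 1 + b * c * m) :
    μ ^ 2 * (a * x ^ 2 + 2 * α * a * c * x * u + a * c ^ 2 * u ^ 2 + α * b * m + μ * u)
      = (a * c ^ 2 * μ ^ 2 * u ^ 2 + μ * (μ ^ 2 + 2 * α * a * c) * u + a)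
        + b * (a * c * m * (2 + b * c * m) + 2 * α * a * c ^ 2 * m * μ * u + α * m * μ ^ 2) := by
  linear_combination (a * μ * x + a + a * b * c * m + 2 * α * a * c * μ * u) * hx

/-- The congruence `bc ∣ act² + μt − α` is solvable iff the quadratic congruence mod `b` is. -/
private lemma exists_t_iff_exists_k (a b c μ α : ℤ) (ha : 1 ≤ a) (hb : 1 ≤ b) (hc : 1 ≤ c)
    (hμ : Int.gcd μ (2 * a * b * c ^ 2) = 1) (hα : α = 1 ∨ α = -1) :
    (∃ t : ℤ, (b * c) ∣ (a * c * t ^ 2 + μ * t - α)) ↔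
      (∃ k : ℤ, b ∣ (a * c ^ 2 * μ ^ 2 * k ^ 2 + μ * (μ ^ 2 + 2 * α * a * c) * k + a)) := by
  have hα2 : α ^ 2 = 1 := by rcases hα with h | h <;> simp [h]
  have hcz : (c : ℤ) ≠ 0 := by positivity
  have hμ2abc : IsCoprime μ (2 * a * b * c ^ 2) := Int.isCoprime_iff_gcd_eq_one.mpr hμ
  have hμbc : IsCoprime μ (b * c) :=
    hμ2abc.of_isCoprime_of_dvd_right ⟨2 * a * c, by ring⟩
  have hμc : IsCoprime μ c := hμ2abc.of_isCoprime_of_dvd_right ⟨2 * a * b * c, by ring⟩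
  have hμb : IsCoprime μ b := hμ2abc.of_isCoprime_of_dvd_right ⟨2 * a * c ^ 2, by ring⟩
  -- Bezout inverse of μ mod bc
  obtain ⟨x, y, hxy⟩ := hμbc
  have hx : μ * x = 1 + b * c * (-y) := by linear_combination hxy
  set m : ℤ := -y with hm
  constructor
  · rintro ⟨t, ht⟩
    -- c ∣ μt − α
    have h1 : c ∣ (μ * t - α) := by
      obtain ⟨w, hw⟩ := ht
      exact ⟨b * w - a * t ^ 2, by linear_combination hw⟩
    -- c ∣ t − αx
    obtain ⟨w1, hw1⟩ := h1
    have h2 : c ∣ μ * (t - α * x) := ⟨w1 - α * b * m, by linear_combination hw1 - α * hx⟩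
    have h3 : c ∣ (t - α * x) := (hμc.symm).dvd_of_dvd_mul_left h2
    obtain ⟨u, hu⟩ := h3
    have htu : t = α * x + c * u := by linarith [hu]
    rw [htu] at ht
    rw [key1 a b c μ α x m u hα2 hx] at ht
    obtain ⟨w, hw⟩ := ht
    have hG : a * x ^ 2 + 2 * α * a * c * x * u + a * c ^ 2 * u ^ 2 + α * b * m + μ * u
        = b * w := by
      apply mul_left_cancel₀ hcz
      linear_combination hw
    refine ⟨u, μ ^ 2 * w - (a * c * m * (2 + b * c * m) + 2 * α * a * c ^ 2 * m * μ * u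
      + α * m * μ ^ 2), ?_⟩
    have hk2 := key2 a b c μ α x m u hx
    rw [hG] at hk2
    linear_combination -hk2
  · rintro ⟨k, hk⟩
    refine ⟨α * x + c * k, ?_⟩
    rw [key1 a b c μ α x m k hα2 hx]
    -- b ∣ G since μ²G = Q k + bR and gcd(μ², b) = 1
    have hbG : b ∣ (a * x ^ 2 + 2 * α * a * c * x * k + a * c ^ 2 * k ^ 2 + α * b * m
        + μ * k) := by
      have hbμ2 : IsCoprime b (μ ^ 2) := (hμb.symm).pow_right
      apply hbμ2.dvd_of_dvd_mul_left
      obtain ⟨v, hv⟩ := hk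
      refine ⟨v + (a * c * m * (2 + b * c * m) + 2 * α * a * c ^ 2 * m * μ * k
        + α * m * μ ^ 2), ?_⟩
      have hk2 := key2 a b c μ α x m k hx
      rw [hv] at hk2
      linear_combination hk2
    obtain ⟨w, hw⟩ := hbG
    exact ⟨w, by rw [hw]; ring⟩

set_option maxHeartbeats 1000000 in
/-- Infinitude from a single solution of the `t`-congruence. -/
private lemma infinite_of_exists_t (a b c μ α : ℤ) (ha : 1 ≤ a) (hb : 1 ≤ b) (hc : 1 ≤ c)
    (hα : α = 1 ∨ α = -1)
    (h : ∃ t : ℤ, (b * c) ∣ (a * c * t ^ 2 + μ * t - α)) :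
    (DSet a b c μ α 1).Infinite := by
  obtain ⟨t, w0, hw0⟩ := h
  have hac1 : (1 : ℤ) ≤ a * c := by nlinarith
  have hbc1 : (1 : ℤ) ≤ b * c := by nlinarith
  have habc : (1 : ℤ) ≤ 2 * a * b * c ^ 2 := by
    nlinarith [mul_le_mul hac1 hbc1 one_pos.le (by linarith : (0 : ℤ) ≤ a * c)]
  set s0 : ℤ := μ + 2 * a * c * t with hs0
  set N0 : ℕ := (|s0| + 4 * a * c + 1).toNat with hN0
  have hsN : ∀ n : ℕ, 4 * a * c + 1 ≤ s0 + 2 * a * b * c ^ 2 * ((N0 : ℤ) + n) := by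
    intro n
    have h1 : (|s0| + 4 * a * c + 1 : ℤ) ≤ (N0 : ℤ) := by rw [hN0]; exact Int.self_le_toNat _
    have h2 : (0 : ℤ) ≤ (n : ℤ) := Int.natCast_nonneg n
    have h3 : -s0 ≤ |s0| := neg_le_abs s0
    have h5 : (0 : ℤ) ≤ |s0| := abs_nonneg s0
    have h4 : (0 : ℤ) ≤ (N0 : ℤ) + n := by linarith
    nlinarith [mul_nonneg (by linarith : (0 : ℤ) ≤ 2 * a * b * c ^ 2 - 1) h4]
  apply Set.infinite_of_injective_forall_mem
    (f := fun n : ℕ => (μ + 2 * a * c * (t + b * c * ((N0 : ℤ) + n))) ^ 2 - 4 * α * a * c)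
  · intro n1 n2 hEq
    simp only at hEq
    have h1 := hsN n1
    have h2 := hsN n2
    have hEq' : (s0 + 2 * a * b * c ^ 2 * ((N0 : ℤ) + n1)) ^ 2
        = (s0 + 2 * a * b * c ^ 2 * ((N0 : ℤ) + n2)) ^ 2 := by
      rw [hs0]; linear_combination hEq
    obtain ⟨S1, hS1⟩ : ∃ S : ℤ, s0 + 2 * a * b * c ^ 2 * ((N0 : ℤ) + n1) = S := ⟨_, rfl⟩
    obtain ⟨S2, hS2⟩ : ∃ S : ℤ, s0 + 2 * a * b * c ^ 2 * ((N0 : ℤ) + n2) = S := ⟨_, rfl⟩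
    rw [hS1] at hEq' h1
    rw [hS2] at hEq' h2
    have h0x : (0 : ℤ) ≤ S1 := by linarith
    have h0y : (0 : ℤ) ≤ S2 := by linarith
    have hle1 : S1 ≤ S2 := by nlinarith [hEq', h0x, h0y]
    have hle2 : S2 ≤ S1 := by nlinarith [hEq', h0x, h0y]
    have heq2 : 2 * a * b * c ^ 2 * ((N0 : ℤ) + n1) = 2 * a * b * c ^ 2 * ((N0 : ℤ) + n2) := by
      rw [← hS1, ← hS2] at hle1 hle2; linarith
    have hne : (2 * a * b * c ^ 2 : ℤ) ≠ 0 := by positivity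
    have hcast : (n1 : ℤ) = n2 := by
      have := mul_left_cancel₀ hne heq2
      linarith
    exact_mod_cast hcast
  · intro n
    have hdvd : (b * c) ∣ (a * c * (t + b * c * ((N0 : ℤ) + n)) ^ 2
        + μ * (t + b * c * ((N0 : ℤ) + n)) - α) :=
      ⟨w0 + 2 * a * c * t * ((N0 : ℤ) + n) + a * b * c ^ 2 * ((N0 : ℤ) + n) ^ 2
        + μ * ((N0 : ℤ) + n), by linear_combination hw0⟩
    have hpos : 0 < (μ + 2 * a * c * (t + b * c * ((N0 : ℤ) + n))) ^ 2 - 4 * α * a * c := by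
      have hs := hsN n
      have hexp : μ + 2 * a * c * (t + b * c * ((N0 : ℤ) + n))
          = s0 + 2 * a * b * c ^ 2 * ((N0 : ℤ) + n) := by rw [hs0]; ring
      rw [hexp]
      obtain ⟨S, hS⟩ : ∃ S : ℤ, s0 + 2 * a * b * c ^ 2 * ((N0 : ℤ) + n) = S := ⟨_, rfl⟩
      rw [hS] at hs ⊢
      have h0S : (0 : ℤ) ≤ S := by linarith
      rcases hα with h1 | h1 <;> rw [h1]
      · nlinarith [mul_nonneg (by linarith : (0 : ℤ) ≤ S - (4 * a * c + 1)) h0S,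
          mul_nonneg (by linarith : (0 : ℤ) ≤ S - (4 * a * c + 1))
            (by linarith : (0 : ℤ) ≤ 4 * a * c + 1),
          sq_nonneg (a * c)]
      · nlinarith [sq_nonneg S]
    exact mem_dSet_of_t a b c μ α ha hc hα _ hdvd hpos

/-- Lemma 4.4.  Fix `a, b, c ≥ 1` with `gcd(a,b) = 1`, `μ` with
`gcd(μ, 2abc²) = 1` and `α = ±1`.  Then `𝒟(r,s;a)^{μ̄}_α(1)` is nonempty (and then
infinite) if and only if the quadratic congruence
`ac²μ²k² + μ(μ² + 2αac)k + a ≡ 0 (mod b)` has a solution `k ∈ ℤ`.  In particular, if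
`b ∣ c²` then `𝒟(r,s;a)^{μ̄}_α(1)` is nonempty and infinite. -/
theorem dSet_one_nonempty_iff_quadratic_congruence
    (a b c : ℤ) (ha : 1 ≤ a) (hb : 1 ≤ b) (hc : 1 ≤ c)
    (hab : Int.gcd a b = 1)
    (μ : ℤ) (hμ : Int.gcd μ (2 * a * b * c ^ 2) = 1)
    (α : ℤ) (hα : α = 1 ∨ α = -1) :
    ((DSet a b c μ α 1).Nonempty ↔
      ∃ k : ℤ, b ∣ (a * c ^ 2 * μ ^ 2 * k ^ 2 + μ * (μ ^ 2 + 2 * α * a * c) * k + a)) ∧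
    ((DSet a b c μ α 1).Nonempty → (DSet a b c μ α 1).Infinite) ∧
    (b ∣ c ^ 2 → (DSet a b c μ α 1).Nonempty ∧ (DSet a b c μ α 1).Infinite) := by
  have hTK := exists_t_iff_exists_k a b c μ α ha hb hc hμ hα
  have hNT : (DSet a b c μ α 1).Nonempty → ∃ t : ℤ, (b * c) ∣ (a * c * t ^ 2 + μ * t - α) :=
    fun ⟨d, hd⟩ => exists_t_of_mem a b c μ α ha hc hd
  have hTI : (∃ t : ℤ, (b * c) ∣ (a * c * t ^ 2 + μ * t - α)) →
      (DSet a b c μ α 1).Infinite :=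
    infinite_of_exists_t a b c μ α ha hb hc hα
  have hIff : (DSet a b c μ α 1).Nonempty ↔
      ∃ k : ℤ, b ∣ (a * c ^ 2 * μ ^ 2 * k ^ 2 + μ * (μ ^ 2 + 2 * α * a * c) * k + a) := by
    constructor
    · exact fun h => hTK.mp (hNT h)
    · exact fun h => (hTI (hTK.mpr h)).nonempty
  refine ⟨hIff, fun h => hTI (hNT h), fun hbc2 => ?_⟩
  -- when b ∣ c², the quadratic congruence is solvable
  have hμ2abc : IsCoprime μ (2 * a * b * c ^ 2) := Int.isCoprime_iff_gcd_eq_one.mpr hμ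
  have hμb : IsCoprime μ b := hμ2abc.of_isCoprime_of_dvd_right ⟨2 * a * c ^ 2, by ring⟩
  have hbX : IsCoprime b (μ ^ 2 + 2 * α * a * c) := by
    apply isCoprime_of_forall_prime_s14
    intro p hp hpb hpX
    have hpc : p ∣ c := hp.dvd_of_dvd_pow (hpb.trans hbc2)
    have hpμ2 : p ∣ μ ^ 2 := by
      obtain ⟨e, he⟩ := hpc
      obtain ⟨f, hf⟩ := hpX
      exact ⟨f - 2 * α * a * e, by linear_combination hf - 2 * α * a * he⟩
    have hpμ : p ∣ μ := hp.dvd_of_dvd_pow hpμ2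
    have hpg : p ∣ (↑(Int.gcd μ (2 * a * b * c ^ 2)) : ℤ) :=
      Int.dvd_coe_gcd hpμ (hpb.trans ⟨2 * a * c ^ 2, by ring⟩)
    rw [hμ] at hpg
    exact hp.not_unit (isUnit_of_dvd_one (by exact_mod_cast hpg))
  have hbL : IsCoprime b (μ * (μ ^ 2 + 2 * α * a * c)) := (hμb.symm).mul_right hbX
  obtain ⟨x, y, hxy⟩ := hbL
  obtain ⟨e, he⟩ := hbc2
  have hk : ∃ k : ℤ, b ∣ (a * c ^ 2 * μ ^ 2 * k ^ 2 + μ * (μ ^ 2 + 2 * α * a * c) * k + a) := by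
    refine ⟨-(a * y), a * e * μ ^ 2 * (-(a * y)) ^ 2 + a * x, ?_⟩
    linear_combination (a * μ ^ 2 * (-(a * y)) ^ 2) * he - a * hxy
  have hInf := hTI (hTK.mpr hk)
  exact ⟨hInf.nonempty, hInf⟩
end

section
/- Fix integers a, b, c ≥ 1 with gcd(a,b) = 1 and α ∈ {1, −1}. Let θ, θ' ∈ ℤ satisfy θθ' ≡ 1 (mod 2abc²) and gcd(2b, θ'ac − θα) = 1, and set μ = θ'ac − θα. Then gcd(μ, 2abc²) = 1 and the set D_a^{μ,α}(1) is nonempty, hence infinite. -/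
/-!
Write `μ = θ'ac − θα` and look for `d = p² − 4αac` with `p = μ + 2act`, so that
`d − μ² = 4ac · (act² + μt − α)`. Modulo `bc` the quadratic `act² + μt − α` has the root
`t = −θθ'²`, because `θθ' ≡ 1`; shifting `t` by multiples of `bc` keeps it a root and makes `d`
arbitrarily large. For a prime `l ∣ b`, `l ∣ t` would force `l ∣ α = ±1`, which gives the
condition at the primes `l` with `l² ∣ b`.
-/

section CommRing

variable {R : Type*} [CommRing R]

/-- `θ'` is an inverse of `θ` modulo `r`, so `μ = θ'r − θα ≡ −θα` is a unit modulo `r`. -/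
theorem isCoprime_mul_sub_mul_of_dvd_mul_sub_one {r θ θ' α : R} (hα : α ^ 2 = 1)
    (h : r ∣ θ * θ' - 1) : IsCoprime (θ' * r - θ * α) r := by
  obtain ⟨n, hn⟩ := h
  exact ⟨-(α * θ'), α * θ' ^ 2 - n, by linear_combination θ * θ' * hα + hn⟩

theorem dvd_quadratic_at_neg_mul_sq_add_mul {s r θ θ' α : R} (h : s ∣ θ * θ' - 1) (k : R) :
    s ∣ r * (-(θ * θ' ^ 2) + s * k) ^ 2 + (θ' * r - θ * α) * (-(θ * θ' ^ 2) + s * k) - α := by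
  obtain ⟨n, hn⟩ := h
  refine ⟨n * (r * θ * θ' ^ 3 + α * (θ * θ' + 1))
    + k * (-2 * r * θ * θ' ^ 2 + r * s * k + θ' * r - θ * α), ?_⟩
  linear_combination (r * θ * θ' ^ 3 + α * (θ * θ' + 1)) * hn

end CommRing

theorem exists_lt_sq_add_mul (p₀ m N : ℤ) (hm : m ≠ 0) : ∃ k : ℤ, N < (p₀ + m * k) ^ 2 := by
  refine ⟨m * (|p₀| + |N| + 1), ?_⟩
  have hm2 : 1 ≤ m * m := by nlinarith [mul_self_pos.mpr hm]
  have hp : |N| + 1 ≤ p₀ + m * (m * (|p₀| + |N| + 1)) := by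
    nlinarith [neg_abs_le p₀, abs_nonneg p₀, abs_nonneg N]
  nlinarith [le_abs_self N, abs_nonneg N]

theorem mem_dSet_one {a b c μ α t : ℤ} (ha : a ≠ 0) (hc : c ≠ 0) (hα : IsUnit α)
    (hroot : b * c ∣ a * c * t ^ 2 + μ * t - α)
    (hpos : 0 < (μ + 2 * a * c * t) ^ 2 - 4 * α * a * c) :
    (μ + 2 * a * c * t) ^ 2 - 4 * α * a * c ∈ DSet a b c μ α 1 := by
  refine ⟨hpos, ?_, μ + 2 * a * c * t, by ring, ⟨t, by ring⟩, by simp, ?_⟩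
  · rw [show 4 * a * b * c ^ 2 = 4 * a * c * (b * c) by ring,
      show (μ + 2 * a * c * t) ^ 2 - 4 * α * a * c - μ ^ 2
        = 4 * a * c * (a * c * t ^ 2 + μ * t - α) by ring]
    exact mul_dvd_mul_left _ hroot
  · intro l hl hlb hdvd
    have hlt : l ∣ t := by
      rw [show μ + 2 * a * c * t - μ * 1 = 2 * a * c * t by ring] at hdvd
      exact (mul_dvd_mul_iff_left (by positivity)).mp hdvd
    have hlroot : l ∣ a * c * t ^ 2 + μ * t - α :=
      ((dvd_pow_self l two_ne_zero).trans hlb |>.mul_right c).trans hroot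
    have hlα : l ∣ α := by
      have := (hlt.mul_left (a * c * t + μ)).sub hlroot
      rwa [show (a * c * t + μ) * t - (a * c * t ^ 2 + μ * t - α) = α by ring] at this
    exact hl.not_isUnit (isUnit_of_dvd_unit hlα hα)

theorem dSet_one_nonempty_of_theta_general
    (a b c : ℤ) (ha : 1 ≤ a) (hb : 1 ≤ b) (hc : 1 ≤ c)
    (α : ℤ) (hα : α = 1 ∨ α = -1)
    (θ θ' : ℤ) (hθ : (2 * a * b * c ^ 2) ∣ (θ * θ' - 1))
    (hgcd : Int.gcd (2 * b) (θ' * a * c - θ * α) = 1)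
    (μ : ℤ) (hμdef : μ = θ' * a * c - θ * α) :
    Int.gcd μ (2 * a * b * c ^ 2) = 1 ∧
    (DSet a b c μ α 1).Nonempty ∧ (DSet a b c μ α 1).Infinite := by
  have hαu : IsUnit α := Int.isUnit_iff.mpr hα
  have hcop : IsCoprime μ (2 * b * (a * c) ^ 2) := by
    have hac : IsCoprime μ (a * c) := by
      rw [hμdef, show θ' * a * c = θ' * (a * c) by ring]
      exact isCoprime_mul_sub_mul_of_dvd_mul_sub_one (Int.isUnit_sq hαu)
        ((Dvd.intro (2 * b * c) (by ring)).trans hθ)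
    exact hμdef ▸ (Int.isCoprime_iff_gcd_eq_one.mpr hgcd).symm |>.mul_right hac.pow_right
  have hinf : (DSet a b c μ α 1).Infinite := by
    refine Set.infinite_of_forall_exists_gt fun N => ?_
    obtain ⟨k, hk⟩ := exists_lt_sq_add_mul (μ + 2 * a * c * -(θ * θ' ^ 2)) (2 * a * c * (b * c))
      (max N 0 + 4 * α * a * c) (by positivity)
    have hroot := dvd_quadratic_at_neg_mul_sq_add_mul (s := b * c) (r := a * c) (α := α)
      ((Dvd.intro (2 * a * c) (by ring)).trans hθ) k
    rw [← mul_assoc, ← hμdef] at hroot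
    refine ⟨_, mem_dSet_one (by positivity) (by positivity) hαu hroot ?_, ?_⟩ <;>
      nlinarith [le_max_left N 0, le_max_right N 0]
  refine ⟨Int.isCoprime_iff_gcd_eq_one.mp (hcop.of_isCoprime_of_dvd_right ?_), hinf.nonempty, hinf⟩
  exact ⟨a, by ring⟩

/-- first part of Theorem 4.5.  Fix `a, b, c ≥ 1` with `gcd(a,b) = 1`
and `α = ±1`.  Let `θ, θ'` satisfy `θθ' ≡ 1 (mod 2abc²)` and `gcd(2b, θ'ac − θα) = 1`,
and set `μ = θ'ac − θα`.  Then `gcd(μ, 2abc²) = 1` and `𝒟(r,s;a)^{μ̄}_α(1)` is nonempty,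
hence infinite. -/
theorem dSet_one_nonempty_of_theta
    (a b c : ℤ) (ha : 1 ≤ a) (hb : 1 ≤ b) (hc : 1 ≤ c)
    (hab : Int.gcd a b = 1)
    (α : ℤ) (hα : α = 1 ∨ α = -1)
    (θ θ' : ℤ) (hθ : (2 * a * b * c ^ 2) ∣ (θ * θ' - 1))
    (hgcd : Int.gcd (2 * b) (θ' * a * c - θ * α) = 1)
    (μ : ℤ) (hμdef : μ = θ' * a * c - θ * α) :
    Int.gcd μ (2 * a * b * c ^ 2) = 1 ∧
    (DSet a b c μ α 1).Nonempty ∧ (DSet a b c μ α 1).Infinite :=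
  dSet_one_nonempty_of_theta_general a b c ha hb hc α hα θ θ' hθ hgcd μ hμdef
end

section
/- Fix integers a, b, c ≥ 1 with gcd(a,b) = 1 and suppose ac is even. Then there exist α ∈ {1, −1} and μ ∈ ℤ with gcd(μ, 2abc²) = 1 such that the set D_a^{μ,α}(1) is nonempty, hence infinite. -/
set_option maxHeartbeats 1000000


/-- Chinese-remainder style lemma: if `f` is "polynomial-like" and for each prime `p ∣ n`
there is `t` with `p ∤ f t`, then there is a single `t` with `gcd (f t) n = 1`. -/
lemma crt_aux (f : ℤ → ℤ) (hf : ∀ s t : ℤ, (s - t) ∣ (f s - f t)) :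
    ∀ n : ℕ, 0 < n → (∀ p : ℕ, p.Prime → p ∣ n → ∃ t, ¬ (p : ℤ) ∣ f t) →
    ∃ t : ℤ, Int.gcd (f t) (n : ℤ) = 1 := by
  intro n
  induction n using Nat.strong_induction_on with
  | _ n ih =>
    intro hn h
    by_cases hn1 : n = 1
    · exact ⟨0, by simp [hn1]⟩
    · have hn0 : n ≠ 0 := hn.ne'
      set p := n.minFac with hp_def
      have hp : p.Prime := Nat.minFac_prime hn1
      have hpn : p ∣ n := n.minFac_dvd
      set k := n.factorization p with hk_def
      have hk : 0 < k := hp.factorization_pos_of_dvd hn0 hpn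
      set m := ordCompl[p] n with hm_def
      have hmdvd : m ∣ n := Nat.ordCompl_dvd n p
      have hmpos : 0 < m := Nat.ordCompl_pos p hn0
      have hmn : m < n := by
        have h1 : 1 < p ^ k := Nat.one_lt_pow hk.ne' hp.one_lt
        exact Nat.div_lt_self hn h1
      have hpm : ¬ p ∣ m := Nat.not_dvd_ordCompl hp hn0
      obtain ⟨t₁, ht₁⟩ := ih m hmn hmpos (fun q hq hqm => h q hq (hqm.trans hmdvd))
      obtain ⟨t₂, ht₂⟩ := h p hp hpn
      have hco : IsCoprime (p : ℤ) (m : ℤ) :=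
        Nat.Coprime.isCoprime (hp.coprime_iff_not_dvd.mpr hpm)
      obtain ⟨u, v, huv⟩ := hco
      refine ⟨t₂ * v * (m : ℤ) + t₁ * u * (p : ℤ), ?_⟩
      set t := t₂ * v * (m : ℤ) + t₁ * u * (p : ℤ) with ht_def
      by_contra hg
      have hgn : Int.gcd (f t) (n : ℤ) ∣ n := by
        have h' : (Int.gcd (f t) (n : ℤ) : ℤ) ∣ (n : ℤ) := Int.gcd_dvd_right _ _
        exact_mod_cast h'
      have hg0 : Int.gcd (f t) (n : ℤ) ≠ 0 := by
        intro h0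
        rw [Int.gcd_eq_zero_iff] at h0
        exact hn0 (by exact_mod_cast h0.2)
      set g := Int.gcd (f t) (n : ℤ) with hg_def
      have hq : g.minFac.Prime := Nat.minFac_prime hg
      set q := g.minFac with hq_def
      have hqg : q ∣ g := Nat.minFac_dvd g
      have hqft : (q : ℤ) ∣ f t :=
        dvd_trans (Int.natCast_dvd_natCast.mpr hqg) (Int.gcd_dvd_left _ _)
      have hqn : q ∣ n := hqg.trans hgn
      have hfact : p ^ k * m = n := Nat.ordProj_mul_ordCompl_eq_self n p
      have hqcases : q = p ∨ q ∣ m := by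
        rcases (Nat.Prime.dvd_mul hq).mp (hfact ▸ hqn) with h' | h'
        · exact Or.inl ((Nat.prime_dvd_prime_iff_eq hq hp).mp (hq.dvd_of_dvd_pow h'))
        · exact Or.inr h'
      rcases hqcases with hqp | hqm
      · rw [hqp] at hqft
        have hdt : ((p : ℕ) : ℤ) ∣ t - t₂ := ⟨u * (t₁ - t₂), by linear_combination t₂ * huv⟩
        have : ((p : ℕ) : ℤ) ∣ f t₂ := by
          have h2 : ((p : ℕ) : ℤ) ∣ f t - f t₂ := hdt.trans (hf t t₂)
          have := dvd_sub hqft h2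
          simpa using this
        exact ht₂ this
      · have hdt : (m : ℤ) ∣ t - t₁ := ⟨v * (t₂ - t₁), by linear_combination t₁ * huv⟩
        have hqt1 : (q : ℤ) ∣ f t₁ := by
          have h2 : (q : ℤ) ∣ f t - f t₁ :=
            ((Int.natCast_dvd_natCast.mpr hqm).trans hdt).trans (hf t t₁)
          have := dvd_sub hqft h2
          simpa using this
        have : (q : ℤ) ∣ (Int.gcd (f t₁) (m : ℤ) : ℤ) :=
          Int.dvd_coe_gcd hqt1 (Int.natCast_dvd_natCast.mpr hqm)
        rw [ht₁] at this
        have hq1 : q ∣ 1 := by exact_mod_cast this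
        exact hq.ne_one (Nat.dvd_one.mp hq1)

lemma gcd_natAbs_right' (x y : ℤ) : Int.gcd x ((y.natAbs : ℕ) : ℤ) = Int.gcd x y := by
  unfold Int.gcd
  rw [Int.natAbs_natCast]

/-- second part of Theorem 4.5.  Fix `a, b, c ≥ 1` with `gcd(a,b) = 1`
and suppose `ac` is even.  Then there exist `α = ±1` and `μ` with `gcd(μ, 2abc²) = 1`
such that `𝒟(r,s;a)^{μ̄}_α(1)` is nonempty, hence infinite. -/
theorem dSet_one_nonempty_of_ac_even
    (a b c : ℤ) (ha : 1 ≤ a) (hb : 1 ≤ b) (hc : 1 ≤ c)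
    (hab : Int.gcd a b = 1) (hac : 2 ∣ a * c) :
    ∃ α μ : ℤ, (α = 1 ∨ α = -1) ∧ Int.gcd μ (2 * a * b * c ^ 2) = 1 ∧
      (DSet a b c μ α 1).Nonempty ∧ (DSet a b c μ α 1).Infinite := by
  have ha0 : 0 < a := ha
  have hb0 : 0 < b := hb
  have hc0 : 0 < c := hc
  set α : ℤ := if (a * c) % 3 = 1 then -1 else 1 with hα_def
  have hα : α = 1 ∨ α = -1 := by
    rw [hα_def]; split <;> simp
  have hα_unit : ∀ p : ℤ, Prime p → ¬ p ∣ α := by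
    intro p hp hdvd
    rcases hα with h1 | h1 <;> rw [h1] at hdvd
    · exact hp.not_dvd_one hdvd
    · exact hp.not_dvd_one ((dvd_neg).mp hdvd)
  -- Step 1: find t with gcd(t * (a*c*t^2 - α), b*c) = 1
  have hbc0 : 0 < b * c := by positivity
  have hbcn : 0 < (b * c).natAbs := Int.natAbs_pos.mpr hbc0.ne'
  have hstep1 : ∃ t : ℤ, Int.gcd (t * (a * c * t ^ 2 - α)) (((b * c).natAbs : ℕ) : ℤ) = 1 := by
    apply crt_aux (fun t => t * (a * c * t ^ 2 - α))
      (fun s t => ⟨a * c * (s ^ 2 + s * t + t ^ 2) - α, by ring⟩) _ hbcn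
    intro p hp hpn
    have hpz : (p : ℤ) ∣ b * c :=
      dvd_trans (Int.natCast_dvd_natCast.mpr hpn) (Int.natAbs_dvd.mpr dvd_rfl)
    have hpP : Prime (p : ℤ) := Nat.prime_iff_prime_int.mp hp
    by_cases hpac : (p : ℤ) ∣ a * c
    · refine ⟨1, fun hdvd => ?_⟩
      have h1 : (p : ℤ) ∣ a * c - α := by
        have : (1 : ℤ) * (a * c * 1 ^ 2 - α) = a * c - α := by ring
        rwa [this] at hdvd
      exact hα_unit _ hpP (by simpa using dvd_sub hpac h1)
    · have hp2 : p ≠ 2 := by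
        rintro rfl
        exact hpac (by exact_mod_cast hac)
    -- p is odd, p ∤ a*c, p ∣ b*c
      by_cases h1 : (p : ℤ) ∣ a * c - α
      · refine ⟨2, fun hdvd => ?_⟩
        have h2 : (p : ℤ) ∣ 2 * (4 * (a * c) - α) := by
          have : (2 : ℤ) * (a * c * 2 ^ 2 - α) = 2 * (4 * (a * c) - α) := by ring
          rwa [this] at hdvd
        have hpnot2 : ¬ (p : ℤ) ∣ 2 := by
          intro hdv
          have hd2 : p ∣ 2 := by exact_mod_cast hdv
          exact hp2 ((Nat.prime_dvd_prime_iff_eq hp Nat.prime_two).mp hd2)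
        have h3 : (p : ℤ) ∣ 4 * (a * c) - α := ((hpP.dvd_mul).mp h2).resolve_left hpnot2
        have h4 : (p : ℤ) ∣ 3 * (a * c) := by
          have := dvd_sub h3 h1
          have heq : 4 * (a * c) - α - (a * c - α) = 3 * (a * c) := by ring
          rwa [heq] at this
        have h5 : (p : ℤ) ∣ 3 := ((hpP.dvd_mul).mp h4).resolve_right hpac
        have hp3 : p = 3 := by
          have hd3 : p ∣ 3 := by exact_mod_cast h5
          exact (Nat.prime_dvd_prime_iff_eq hp Nat.prime_three).mp hd3
        rw [hp3] at h1 hpac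
        push_cast at h1 hpac
        rcases hα with hv | hv <;> rw [hv] at h1 <;>
        · rw [hα_def] at hv
          by_cases hm : (a * c) % 3 = 1 <;> simp [hm] at hv <;> omega
      · exact ⟨1, fun hdvd => h1 (by
          have heq : (1 : ℤ) * (a * c * 1 ^ 2 - α) = a * c - α := by ring
          rw [heq] at hdvd; exact hdvd)⟩
  obtain ⟨t, ht⟩ := hstep1
  rw [gcd_natAbs_right'] at ht
  have hco : IsCoprime (t * (a * c * t ^ 2 - α)) (b * c) := Int.isCoprime_iff_gcd_eq_one.mpr ht
  have hco_t : IsCoprime t (b * c) := hco.of_mul_left_left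
  have hco_X : IsCoprime (a * c * t ^ 2 - α) (b * c) := hco.of_mul_left_right
  obtain ⟨u, v, huv⟩ := id hco_t
  set μ₀ : ℤ := u * (α - a * c * t ^ 2) with hμ₀_def
  have hμ₀t : t * μ₀ = (α - a * c * t ^ 2) + (b * c) * (-(v * (α - a * c * t ^ 2))) := by
    rw [hμ₀_def]; linear_combination (α - a * c * t ^ 2) * huv
  have hcoμt : IsCoprime (t * μ₀) (b * c) := by
    rw [hμ₀t]
    have hbase : IsCoprime (α - a * c * t ^ 2) (b * c) := by
      have := hco_X.neg_left
      rwa [neg_sub] at this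
    exact hbase.add_mul_left_left _
  have hcoμ₀ : IsCoprime μ₀ (b * c) := hcoμt.of_mul_left_right
  -- Step 2: lift μ₀ to μ coprime to 2*a*b*c^2
  have hN0 : 0 < 2 * a * b * c ^ 2 := by positivity
  have hNn : 0 < (2 * a * b * c ^ 2).natAbs := Int.natAbs_pos.mpr hN0.ne'
  have hstep2 : ∃ kk : ℤ, Int.gcd (μ₀ + (b * c) * kk) (((2 * a * b * c ^ 2).natAbs : ℕ) : ℤ) = 1 := by
    apply crt_aux (fun kk => μ₀ + (b * c) * kk) (fun s t => ⟨b * c, by ring⟩) _ hNn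
    intro p hp hpn
    have hpz : (p : ℤ) ∣ 2 * a * b * c ^ 2 :=
      dvd_trans (Int.natCast_dvd_natCast.mpr hpn) (Int.natAbs_dvd.mpr dvd_rfl)
    have hpP : Prime (p : ℤ) := Nat.prime_iff_prime_int.mp hp
    by_cases hpbc : (p : ℤ) ∣ b * c
    · refine ⟨0, fun hdvd => ?_⟩
      have : (p : ℤ) ∣ μ₀ := by simpa using hdvd
      exact hpP.not_unit (hcoμ₀.isUnit_of_dvd' this hpbc)
    · have hcop : IsCoprime ((p : ℤ)) (b * c) := hpP.coprime_iff_not_dvd.mpr hpbc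
      obtain ⟨s, e, hse⟩ := hcop
      refine ⟨e * (1 - μ₀), fun hdvd => ?_⟩
      have heq : μ₀ + (b * c) * (e * (1 - μ₀)) = 1 + (p : ℤ) * (-(s * (1 - μ₀))) := by
        linear_combination (1 - μ₀) * hse
      rw [heq] at hdvd
      have : (p : ℤ) ∣ 1 := by
        have hd2 : (p : ℤ) ∣ (p : ℤ) * (-(s * (1 - μ₀))) := Dvd.intro _ rfl
        have := dvd_sub hdvd hd2
        simpa using this
      exact hpP.not_dvd_one this
  obtain ⟨kk, hkk⟩ := hstep2
  rw [gcd_natAbs_right'] at hkk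
  set μ : ℤ := μ₀ + (b * c) * kk with hμ_def
  have hμgcd : Int.gcd μ (2 * a * b * c ^ 2) = 1 := hkk
  have hcoμ : IsCoprime μ (2 * a * b * c ^ 2) := Int.isCoprime_iff_gcd_eq_one.mpr hkk
  -- membership of the family
  have h2ac0 : (2 : ℤ) * a * c ≠ 0 := by positivity
  have key : ∀ m : ℤ, 4 * a * c < (μ + 2 * a * c * (t + b * c * m)) ^ 2 →
      ((μ + 2 * a * c * (t + b * c * m)) ^ 2 - 4 * α * a * c) ∈ DSet a b c μ α 1 := by
    intro m hbig
    set t' : ℤ := t + b * c * m with ht'_def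
    set P : ℤ := μ + 2 * a * c * t' with hP_def
    set d : ℤ := P ^ 2 - 4 * α * a * c with hd_def
    refine ⟨?_, ?_, P, by rw [hd_def]; ring, ⟨t', by ring⟩, by simp [Int.gcd], ?_⟩
    · -- positivity
      rcases hα with hv | hv <;> rw [hd_def, hv] <;> nlinarith [sq_nonneg P]
    · -- divisibility of d - μ^2
      have hX : (b * c) ∣ (t' * μ + a * c * t' ^ 2 - α) := by
        refine ⟨-(v * (α - a * c * t ^ 2)) + t * kk + m * μ₀ + (b * c) * m * kk
          + 2 * a * c * t * m + a * c * (b * c) * m ^ 2, ?_⟩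
        rw [ht'_def, hμ_def]
        linear_combination hμ₀t
      obtain ⟨W, hW⟩ := hX
      refine ⟨W, ?_⟩
      rw [hd_def, hP_def]
      linear_combination 4 * (a * c) * hW
    · -- squarefull condition
      intro l hl hl2 hdvd
      have hlt' : l ∣ t' := by
        have heq : P - μ * 1 = 2 * a * c * t' := by rw [hP_def]; ring
        rw [heq] at hdvd
        exact (mul_dvd_mul_iff_left h2ac0).mp hdvd
      have hlb : l ∣ b * c := (dvd_trans (dvd_pow_self l two_ne_zero) hl2).mul_right c
      have hlt : l ∣ t := by
        have : l ∣ t' - b * c * m := (hlt').sub (hlb.mul_right m)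
        simpa [ht'_def] using this
      exact hl.not_unit (hco_t.isUnit_of_dvd' hlt hlb)
  -- unboundedness
  have hbig : ∀ B : ℤ, ∃ d ∈ DSet a b c μ α 1, B < d := by
    intro B
    set base : ℤ := μ + 2 * a * c * t with hbase_def
    set s : ℤ := 2 * a * c * (b * c) with hs_def
    have hac1 : 1 ≤ a * c := by nlinarith
    have hbc1 : 1 ≤ b * c := by nlinarith
    have hs2 : 2 ≤ s := by rw [hs_def]; nlinarith
    set m : ℤ := |base| + |B| + 4 * a * c + 1 with hm_def
    have hmnn : |base| + |B| + 4 * a * c + 1 ≤ m := le_of_eq hm_def.symm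
    have hP : μ + 2 * a * c * (t + b * c * m) = base + s * m := by
      rw [hbase_def, hs_def]; ring
    have hPbig : |B| + 4 * a * c + 1 ≤ base + s * m := by
      have h1 : -|base| ≤ base := neg_abs_le base
      have h2 : 0 ≤ |base| + |B| + 4 * a * c + 1 := by positivity
      nlinarith [abs_nonneg base, abs_nonneg B]
    have hPpos : 1 ≤ base + s * m := by
      have : 0 ≤ |B| + 4 * a * c := by positivity
      linarith
    have hsq : 4 * a * c < (base + s * m) ^ 2 := by nlinarith [abs_nonneg B]
    have hmem := key m (by rwa [hP])
    refine ⟨(μ + 2 * a * c * (t + b * c * m)) ^ 2 - 4 * α * a * c, hmem, ?_⟩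
    rw [hP]
    have hBabs : B ≤ |B| := le_abs_self B
    rcases hα with hv | hv <;> rw [hv] <;> nlinarith
  obtain ⟨d0, hd0, _⟩ := hbig 0
  refine ⟨α, μ, hα, hμgcd, ⟨d0, hd0⟩, ?_⟩
  intro hfin
  obtain ⟨B, hB⟩ := hfin.bddAbove
  obtain ⟨d, hd, hdB⟩ := hbig B
  exact absurd (hB hd) (not_le.mpr hdB)
end

section
/- Fix integers a, b, c ≥ 1 with gcd(a,b) = 1 such that abc is odd, and fix α ∈ {1, −1}. (1) If θ, θ' ∈ ℤ satisfy θθ' ≡ 1 (mod abc²) and gcd(b, θ'ac − θα) = 1, and μ ∈ ℤ satisfies gcd(μ, 2abc²) = 1 and μ ≡ θ'ac − θα (mod abc²), then the set D_a^{μ,α}(1) is nonempty, hence infinite. (2) There exist α ∈ {1, −1} and μ ∈ ℤ with gcd(μ, 2abc²) = 1 such that D_a^{μ,α}(1) is nonempty. -/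
/-- Auxiliary: an integer is coprime to `y` provided no prime divisor of `y` divides it. -/
lemma gcd_eq_one_of_forall_prime (x y : ℤ)
    (h : ∀ q : ℤ, Prime q → q ∣ y → ¬ q ∣ x) : Int.gcd x y = 1 := by
  by_contra hne
  have hq : (Int.gcd x y).minFac.Prime := Nat.minFac_prime hne
  have hd : ((Int.gcd x y).minFac : ℤ) ∣ (Int.gcd x y : ℤ) :=
    Int.natCast_dvd_natCast.mpr (Nat.minFac_dvd _)
  exact h _ (Nat.prime_iff_prime_int.mp hq) (hd.trans (Int.gcd_dvd_right x y))
    (hd.trans (Int.gcd_dvd_left x y))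

/-- Auxiliary CRT-style construction: there is `t` such that for every prime `p ∣ n`,
`p ∤ t`, and moreover `p ∤ act² − α` whenever `p ∣ b`, `p ∤ c`. -/
lemma exists_good_t (a b c α : ℤ) (hα : α = 1 ∨ α = -1)
    (h3 : ¬ (3:ℤ) ∣ (a * c - α)) :
    ∀ n : ℕ, Odd n → ∃ t : ℤ, ∀ p : ℕ, p.Prime → p ∣ n →
      ¬ (p:ℤ) ∣ t ∧ ((p:ℤ) ∣ b → ¬ (p:ℤ) ∣ c → ¬ (p:ℤ) ∣ (a * c * t ^ 2 - α)) := by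
  have transfer : ∀ q t1 t2 : ℤ, q ∣ t1 - t2 →
      (¬ q ∣ t2 ∧ (q ∣ b → ¬ q ∣ c → ¬ q ∣ (a * c * t2 ^ 2 - α))) →
      (¬ q ∣ t1 ∧ (q ∣ b → ¬ q ∣ c → ¬ q ∣ (a * c * t1 ^ 2 - α))) := by
    rintro q t1 t2 hcong ⟨h1, h2⟩
    constructor
    · intro hd; exact h1 (by simpa using dvd_sub hd hcong)
    · intro hb' hc' hcon
      apply h2 hb' hc'
      have h1' := dvd_sub hcon (hcong.mul_right (a * c * (t1 + t2)))
      have e : a * c * t1 ^ 2 - α - (t1 - t2) * (a * c * (t1 + t2)) = a * c * t2 ^ 2 - α := by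
        ring
      rwa [e] at h1'
  intro n
  induction n using Nat.strong_induction_on with
  | _ n IH =>
  intro hn
  have hn0 : n ≠ 0 := by rintro rfl; simp [Nat.odd_iff] at hn
  by_cases h1 : n = 1
  · exact ⟨1, fun p hp hdp => absurd (Nat.dvd_one.mp (h1 ▸ hdp)) hp.ne_one⟩
  · set p₀ := n.minFac with hp₀def
    have hp₀ : p₀.Prime := Nat.minFac_prime h1
    have hp₀n : p₀ ∣ n := Nat.minFac_dvd n
    have hp₀ℤ : Prime (p₀ : ℤ) := Nat.prime_iff_prime_int.mp hp₀
    have hp2 : p₀ ≠ 2 := by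
      rintro he
      obtain ⟨k, hk⟩ := he ▸ hp₀n
      have := Nat.odd_iff.mp hn
      omega
    have hqα : ¬ (p₀:ℤ) ∣ α := by
      intro hd
      rcases hα with rfl | rfl
      · exact hp₀ℤ.not_unit (isUnit_of_dvd_one hd)
      · exact hp₀ℤ.not_unit (isUnit_of_dvd_one (dvd_neg.mp hd))
    -- single-prime choice
    have hsingle : ∃ r : ℤ, ¬ (p₀:ℤ) ∣ r ∧
        ((p₀:ℤ) ∣ b → ¬ (p₀:ℤ) ∣ c → ¬ (p₀:ℤ) ∣ (a * c * r ^ 2 - α)) := by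
      have hnot1 : ¬ (p₀:ℤ) ∣ 1 := fun hd => hp₀ℤ.not_unit (isUnit_of_dvd_one hd)
      by_cases hd1 : (p₀:ℤ) ∣ (a * c - α)
      · have hp3 : p₀ ≠ 3 := by
          rintro he
          exact h3 (by exact_mod_cast he ▸ hd1)
        refine ⟨2, ?_, ?_⟩
        · intro hd
          have : (p₀:ℤ) ∣ ((2:ℕ):ℤ) := by exact_mod_cast hd
          exact hp2 ((Nat.prime_dvd_prime_iff_eq hp₀ Nat.prime_two).mp
            (Int.natCast_dvd_natCast.mp this))
        · intro hb' hc' hcon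
          have hd3α : (p₀:ℤ) ∣ 3 * α := by
            have := dvd_sub hcon (hd1.mul_right 4)
            have e : a * c * 2 ^ 2 - α - (a * c - α) * 4 = 3 * α := by ring
            rwa [e] at this
          rcases hp₀ℤ.dvd_mul.mp hd3α with h | h
          · have : (p₀:ℤ) ∣ ((3:ℕ):ℤ) := by exact_mod_cast h
            have := Int.natCast_dvd_natCast.mp this
            exact hp3 ((Nat.prime_dvd_prime_iff_eq hp₀ (by norm_num)).mp this)
          · exact hqα h
      · exact ⟨1, hnot1, fun _ _ hcon => hd1 (by simpa using hcon)⟩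
    obtain ⟨r, hr⟩ := hsingle
    set m := ordCompl[p₀] n with hm
    have hmdvd : m ∣ n := Nat.ordCompl_dvd n p₀
    have hp₀m : ¬ p₀ ∣ m := Nat.not_dvd_ordCompl hp₀ hn0
    have hmlt : m < n :=
      lt_of_le_of_ne (Nat.le_of_dvd (Nat.pos_of_ne_zero hn0) hmdvd)
        (fun he => hp₀m (he ▸ hp₀n))
    have hmodd : Odd m := by
      rcases Nat.even_or_odd m with he | ho
      · exfalso
        obtain ⟨k, hk⟩ := he
        have h2m : (2:ℕ) ∣ m := ⟨k, by omega⟩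
        have h2n : 2 ∣ n := h2m.trans hmdvd
        obtain ⟨j, hj⟩ := h2n
        have := Nat.odd_iff.mp hn
        omega
      · exact ho
    obtain ⟨t', ht'⟩ := IH m hmlt hmodd
    have hcop : IsCoprime ((p₀:ℕ) : ℤ) ((m:ℕ) : ℤ) :=
      Nat.isCoprime_iff_coprime.mpr (Nat.coprime_ordCompl hp₀ hn0)
    obtain ⟨u, v, huv⟩ := hcop
    refine ⟨r * v * (m:ℤ) + t' * u * (p₀:ℤ), fun p hp hpn => ?_⟩
    have hcongp₀ : (p₀:ℤ) ∣ (r * v * (m:ℤ) + t' * u * (p₀:ℤ)) - r :=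
      ⟨u * (t' - r), by linear_combination r * huv⟩
    have hcongm : (m:ℤ) ∣ (r * v * (m:ℤ) + t' * u * (p₀:ℤ)) - t' :=
      ⟨v * (r - t'), by linear_combination t' * huv⟩
    have hpn' : p ∣ p₀ ^ n.factorization p₀ * m := by
      rwa [Nat.ordProj_mul_ordCompl_eq_self n p₀]
    rcases (Nat.Prime.dvd_mul hp).mp hpn' with h | h
    · have hpp₀ : p = p₀ :=
        (Nat.prime_dvd_prime_iff_eq hp hp₀).mp (hp.dvd_of_dvd_pow h)
      subst hpp₀
      exact transfer _ _ _ hcongp₀ hr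
    · exact transfer _ _ _ ((Int.natCast_dvd_natCast.mpr h).trans hcongm) (ht' p hp h)

/-- Auxiliary: a residue coprime to `M` lifts to a residue coprime to any multiple `N`. -/
lemma lift_coprime (M N : ℤ) (hM : 0 < M) (hN : 0 < N) (hMN : M ∣ N) (x : ℤ)
    (hx : Int.gcd x M = 1) : ∃ y : ℤ, Int.gcd y N = 1 ∧ M ∣ y - x := by
  set m := M.toNat with hm
  set n := N.toNat with hn
  have hmM : (m : ℤ) = M := Int.toNat_of_nonneg hM.le
  have hnN : (n : ℤ) = N := Int.toNat_of_nonneg hN.le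
  have hdvd : m ∣ n := by
    rw [← Int.natCast_dvd_natCast, hmM, hnN]; exact hMN
  haveI : NeZero n := ⟨by omega⟩
  obtain ⟨u, v, huv⟩ := Int.isCoprime_iff_gcd_eq_one.mpr hx
  have hM0 : ((M : ℤ) : ZMod m) = 0 := by
    rw [← hmM]; push_cast; exact ZMod.natCast_self m
  have hunit : IsUnit ((x : ℤ) : ZMod m) := by
    apply IsUnit.of_mul_eq_one ((u : ℤ) : ZMod m)
    have := congrArg (fun z : ℤ => ((z : ZMod m) : ZMod m)) huv
    push_cast at this
    rw [hM0] at this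
    simpa [mul_comm] using this
  obtain ⟨W, hW⟩ := ZMod.unitsMap_surjective hdvd hunit.unit
  refine ⟨((W : ZMod n).val : ℤ), ?_, ?_⟩
  · have hcop : Nat.Coprime (ZMod.val (W : ZMod n)) n := ZMod.val_coe_unit_coprime W
    have he : Int.gcd ((ZMod.val (W : ZMod n) : ℕ) : ℤ) N = Nat.gcd (ZMod.val (W : ZMod n)) n := by
      unfold Int.gcd
      rw [Int.natAbs_natCast]
      congr 1
      omega
    rw [he]
    exact hcop
  · rw [← hmM, ← ZMod.intCast_zmod_eq_zero_iff_dvd]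
    push_cast
    rw [sub_eq_zero]
    have h1 : ((ZMod.val (W : ZMod n) : ℕ) : ZMod m) = ZMod.castHom hdvd (ZMod m) (W : ZMod n) := by
      rw [ZMod.castHom_apply, ← ZMod.natCast_val]
    have h2 : (ZMod.castHom hdvd (ZMod m) (W : ZMod n) : ZMod m)
        = ((hunit.unit : (ZMod m)ˣ) : ZMod m) :=
      congrArg (fun z : (ZMod m)ˣ => (z : ZMod m)) hW
    rw [h1, h2, IsUnit.unit_spec]

/-- The key construction: given `t` with `bc ∣ tμ + act² − α` and `l ∤ t` for all primes
`l` with `l² ∣ b`, the numbers `(μ + 2ac(t + bck))² − 4αac` for large `k` all lie in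
`𝒟(r,s;a)^{μ̄}_α(1)`, which is therefore infinite. -/
lemma key_construction (a b c μ α t : ℤ) (ha : 1 ≤ a) (hb : 1 ≤ b) (hc : 1 ≤ c)
    (hα : α = 1 ∨ α = -1)
    (hdvd : b * c ∣ t * μ + a * c * t ^ 2 - α)
    (hl : ∀ l : ℤ, Prime l → l ^ 2 ∣ b → ¬ l ∣ t) :
    (DSet a b c μ α 1).Nonempty ∧ (DSet a b c μ α 1).Infinite := by
  have hα1 : α ≤ 1 := by rcases hα with rfl | rfl <;> norm_num
  have hac : (1:ℤ) ≤ a * c := by nlinarith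
  have hbc : (1:ℤ) ≤ b * c := by nlinarith
  set k₀ : ℕ := (2 * a * c + 1 - (μ + 2 * a * c * t)).toNat with hk₀
  set s : ℕ → ℤ := fun k => t + b * c * ((k₀ : ℤ) + k) with hs
  set P : ℕ → ℤ := fun k => μ + 2 * a * c * s k with hP
  have habc2 : (1:ℤ) ≤ 2 * a * b * c ^ 2 := by nlinarith
  have hPlb : ∀ k : ℕ, 2 * a * c + 1 ≤ P k := by
    intro k
    have h1 : (2 * a * c + 1 - (μ + 2 * a * c * t)) ≤ (k₀ : ℤ) := Int.self_le_toNat _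
    have h3 : (0:ℤ) ≤ (k₀ : ℤ) + (k : ℤ) := by positivity
    have h4 : 2 * a * b * c ^ 2 * ((k₀:ℤ) + k) ≥ 1 * ((k₀:ℤ) + k) := by
      apply mul_le_mul_of_nonneg_right habc2 h3
    have hPe : P k = μ + 2 * a * c * t + 2 * a * b * c ^ 2 * ((k₀:ℤ) + k) := by
      simp only [hP, hs]; ring
    rw [hPe]
    nlinarith
  have hmem : ∀ k : ℕ, P k ^ 2 - 4 * α * a * c ∈ DSet a b c μ α 1 := by
    intro k
    have hPk := hPlb k
    have hsdvd : b * c ∣ s k * μ + a * c * (s k) ^ 2 - α := by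
      obtain ⟨w, hw⟩ := hdvd
      refine ⟨w + ((k₀:ℤ) + k) * (μ + a * c * (s k + t)), ?_⟩
      simp only [hs]
      linear_combination hw
    refine ⟨by nlinarith, ?_, P k, by ring, ⟨s k, by simp only [hP]; ring⟩, ?_, ?_⟩
    · obtain ⟨w, hw⟩ := hsdvd
      exact ⟨w, by simp only [hP]; linear_combination 4 * a * c * hw⟩
    · simp
    · intro l hlp hl2 hcon
      have hlt := hl l hlp hl2
      have hlb : l ∣ b := dvd_trans (dvd_pow_self l two_ne_zero) hl2
      have hPμ : P k - μ * 1 = (2 * a * c) * s k := by simp only [hP]; ring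
      rw [hPμ] at hcon
      have hac0 : (2 * a * c : ℤ) ≠ 0 := by nlinarith
      have hls : l ∣ s k := (mul_dvd_mul_iff_left hac0).mp hcon
      have hlst : l ∣ s k - t := by
        have : l ∣ b * c := hlb.mul_right c
        exact this.trans ⟨(k₀:ℤ) + k, by simp only [hs]; ring⟩
      exact hlt (by simpa using dvd_sub hls hlst)
  have hinj : StrictMono fun k : ℕ => P k ^ 2 - 4 * α * a * c := by
    apply strictMono_nat_of_lt_succ
    intro k
    have h1 := hPlb k
    have h2 : P (k + 1) = P k + 2 * a * b * c ^ 2 := by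
      simp only [hP, hs]; push_cast; ring
    rw [h2]
    nlinarith
  exact ⟨⟨_, hmem 0⟩, Set.infinite_of_injective_forall_mem hinj.injective hmem⟩

/-- Existence part: for a suitable `α` (determined by `ac mod 3`) there is `μ` coprime to
`2abc²` with `𝒟(r,s;a)^{μ̄}_α(1)` nonempty. -/
lemma part2_main (a b c : ℤ) (ha : 1 ≤ a) (hb : 1 ≤ b) (hc : 1 ≤ c)
    (hodd : Odd (a * b * c)) (α : ℤ) (hα : α = 1 ∨ α = -1)
    (h3 : ¬ (3:ℤ) ∣ (a * c - α)) :
    ∃ μ : ℤ, Int.gcd μ (2 * a * b * c ^ 2) = 1 ∧ (DSet a b c μ α 1).Nonempty := by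
  have hbc0 : (0:ℤ) < b * c := by nlinarith
  have hbcodd : Odd (b * c) := by
    obtain ⟨h1, h2⟩ := Int.odd_mul.mp hodd
    exact Int.odd_mul.mpr ⟨(Int.odd_mul.mp h1).2, h2⟩
  obtain ⟨t, ht⟩ := exists_good_t a b c α hα h3 (b * c).natAbs (Int.natAbs_odd.mpr hbcodd)
  have htrans : ∀ q : ℤ, Prime q → q ∣ b * c →
      ¬ q ∣ t ∧ (q ∣ b → ¬ q ∣ c → ¬ q ∣ (a * c * t ^ 2 - α)) := by
    intro q hq hqbc
    obtain ⟨h1, h2⟩ := ht q.natAbs (Int.prime_iff_natAbs_prime.mp hq)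
      (Int.natAbs_dvd_natAbs.mpr hqbc)
    exact ⟨fun hd => h1 (Int.natAbs_dvd.mpr hd),
      fun hb' hc' hd => h2 (Int.natAbs_dvd.mpr hb')
        (fun hx => hc' (Int.natAbs_dvd.mp hx)) (Int.natAbs_dvd.mpr hd)⟩
  have hgcdt : Int.gcd t (b * c) = 1 :=
    gcd_eq_one_of_forall_prime t (b * c) (fun q hq hqy hqx => (htrans q hq hqy).1 hqx)
  obtain ⟨u, v, huv⟩ := Int.isCoprime_iff_gcd_eq_one.mpr hgcdt
  set μ₀ := u * (α - a * c * t ^ 2) with hμ₀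
  have hdvd₀ : b * c ∣ t * μ₀ + a * c * t ^ 2 - α :=
    ⟨-(v * (α - a * c * t ^ 2)), by simp only [hμ₀]; linear_combination (α - a * c * t ^ 2) * huv⟩
  have hμ₀gcd : Int.gcd μ₀ (b * c) = 1 := by
    apply gcd_eq_one_of_forall_prime
    intro q hq hqbc hqμ₀
    obtain ⟨h1, h2⟩ := htrans q hq hqbc
    have hqα : ¬ q ∣ α := fun hd => hq.not_unit (by
      rcases hα with rfl | rfl
      exacts [isUnit_of_dvd_one hd, isUnit_of_dvd_one (dvd_neg.mp hd)])
    have hqact : q ∣ a * c * t ^ 2 - α := by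
      have hq1 := dvd_sub (hqbc.trans hdvd₀) (hqμ₀.mul_left t)
      have e : t * μ₀ + a * c * t ^ 2 - α - t * μ₀ = a * c * t ^ 2 - α := by ring
      rwa [e] at hq1
    have hcase : q ∣ c → False := by
      intro hqc
      apply hqα
      have hqact2 : q ∣ a * c * t ^ 2 := by
        have := (hqc.mul_left a).mul_right (t ^ 2)
        simpa [mul_assoc] using this
      have hq2 := dvd_sub hqact2 hqact
      have e : a * c * t ^ 2 - (a * c * t ^ 2 - α) = α := by ring
      rwa [e] at hq2
    rcases hq.dvd_mul.mp hqbc with hqb | hqc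
    · by_cases hqc : q ∣ c
      · exact hcase hqc
      · exact h2 hqb hqc hqact
    · exact hcase hqc
  have hNpos : (0:ℤ) < 2 * a * b * c ^ 2 := by
    have h1 : (0:ℤ) < a * b := by nlinarith
    nlinarith [mul_pos h1 (mul_pos (show (0:ℤ) < c by linarith) (show (0:ℤ) < c by linarith))]
  obtain ⟨μ, hμgcd, hμcong⟩ := lift_coprime (b * c) (2 * a * b * c ^ 2) hbc0 hNpos
    ⟨2 * a * c, by ring⟩ μ₀ hμ₀gcd
  refine ⟨μ, hμgcd, ?_⟩
  have hdvdμ : b * c ∣ t * μ + a * c * t ^ 2 - α := by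
    have h1 : t * μ + a * c * t ^ 2 - α = (t * μ₀ + a * c * t ^ 2 - α) + t * (μ - μ₀) := by ring
    rw [h1]; exact dvd_add hdvd₀ (hμcong.mul_left t)
  have hl : ∀ l : ℤ, Prime l → l ^ 2 ∣ b → ¬ l ∣ t := fun l hlp hl2 =>
    (htrans l hlp ((dvd_trans (dvd_pow_self l two_ne_zero) hl2).mul_right c)).1
  exact (key_construction a b c μ α t ha hb hc hα hdvdμ hl).1

/-- Theorem 4.6, the case `abc` odd.  Fix `a, b, c ≥ 1` with
`gcd(a,b) = 1` and `abc` odd, and fix `α = ±1`.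
(1) If `θθ' ≡ 1 (mod abc²)`, `gcd(b, θ'ac − θα) = 1`, and `μ` satisfies
`gcd(μ, 2abc²) = 1` and `μ ≡ θ'ac − θα (mod abc²)`, then `𝒟(r,s;a)^{μ̄}_α(1)` is
nonempty, hence infinite.
(2) There exist `α' = ±1` and `μ` with `gcd(μ, 2abc²) = 1` such that
`𝒟(r,s;a)^{μ̄}_{α'}(1)` is nonempty. -/
theorem dSet_one_nonempty_of_abc_odd
    (a b c : ℤ) (ha : 1 ≤ a) (hb : 1 ≤ b) (hc : 1 ≤ c)
    (hab : Int.gcd a b = 1) (hodd : Odd (a * b * c))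
    (α : ℤ) (hα : α = 1 ∨ α = -1) :
    (∀ θ θ' μ : ℤ, (a * b * c ^ 2) ∣ (θ * θ' - 1) →
      Int.gcd b (θ' * a * c - θ * α) = 1 →
      Int.gcd μ (2 * a * b * c ^ 2) = 1 →
      (a * b * c ^ 2) ∣ (μ - (θ' * a * c - θ * α)) →
      (DSet a b c μ α 1).Nonempty ∧ (DSet a b c μ α 1).Infinite) ∧
    (∃ α' μ : ℤ, (α' = 1 ∨ α' = -1) ∧ Int.gcd μ (2 * a * b * c ^ 2) = 1 ∧
      (DSet a b c μ α' 1).Nonempty) := by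
  constructor
  · intro θ θ' μ hθθ' hgb hgμ hμcong
    apply key_construction a b c μ α (-θ') ha hb hc hα
    · have hd1 : (b * c : ℤ) ∣ a * b * c ^ 2 := ⟨a * c, by ring⟩
      refine dvd_trans hd1 ?_
      have e : (-θ') * μ + a * c * (-θ') ^ 2 - α
          = (-θ') * (μ - (θ' * a * c - θ * α)) + α * (θ * θ' - 1) := by ring
      rw [e]
      exact dvd_add (hμcong.mul_left _) (hθθ'.mul_left _)
    · intro l hlp hl2 hlt
      have hlb : l ∣ b := dvd_trans (dvd_pow_self l two_ne_zero) hl2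
      have h1 : l ∣ a * b * c ^ 2 := hlb.trans ⟨a * c ^ 2, by ring⟩
      have h2 : l ∣ θ * θ' - 1 := h1.trans hθθ'
      have h3 : l ∣ θ * θ' := (dvd_neg.mp hlt).mul_left θ
      have h4 : l ∣ (1:ℤ) := by simpa using dvd_sub h3 h2
      exact hlp.not_unit (isUnit_of_dvd_one h4)
  · by_cases h : (3:ℤ) ∣ (a * c - 1)
    · obtain ⟨μ, h1, h2⟩ := part2_main a b c ha hb hc hodd (-1) (Or.inr rfl) (by
        intro hcon
        have hd := dvd_sub hcon h
        have e : a * c - (-1) - (a * c - 1) = 2 := by ring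
        rw [e] at hd
        norm_num at hd)
      exact ⟨-1, μ, Or.inr rfl, h1, h2⟩
    · obtain ⟨μ, h1, h2⟩ := part2_main a b c ha hb hc hodd 1 (Or.inl rfl) h
      exact ⟨1, μ, Or.inl rfl, h1, h2⟩
end

section
/- Let a, b, c ≥ 1 be integers with gcd(a,b) = 1, let ν ∈ ℤ with gcd(ν, 2ab) = 1, and let d be an integer with d ≡ ν² (mod 4ab). Let l be a prime and x, y ∈ ℤ satisfy x² − d·y² = 4a²b²c², l ∣ x, l ∣ y, and 2ab·l ∣ x − νy. Then l² ∣ abc². -/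
/-!
Write `x = l x'`, `y = l y'`. Then `2ab ∣ x' − νy'`, and together with `4ab ∣ d − ν²` this gives
`4ab ∣ x'² − dy'²`. Hence `4a²b²c² = l² (x'² − dy'²)` is divisible by `4ab·l²`, i.e. `l² ∣ abc²`.
-/

theorem four_mul_dvd_sq_sub_mul_sq {R : Type*} [CommRing R] {n x y ν d : R}
    (hxy : 2 * n ∣ x - ν * y) (hd : 4 * n ∣ d - ν ^ 2) : 4 * n ∣ x ^ 2 - d * y ^ 2 := by
  obtain ⟨k, hk⟩ := hxy
  obtain ⟨e, he⟩ := hd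
  exact ⟨n * k ^ 2 + ν * y * k - e * y ^ 2, by
    linear_combination (x + ν * y + 2 * n * k) * hk - y ^ 2 * he⟩

theorem nu_divisible_prime_sq_dvd_general
    (a b c : ℤ) (ha : 1 ≤ a) (hb : 1 ≤ b) (ν d : ℤ)
    (hd : (4 * a * b) ∣ (d - ν ^ 2))
    (l : ℤ) (hl : Prime l) (x y : ℤ)
    (hxy : x ^ 2 - d * y ^ 2 = 4 * a ^ 2 * b ^ 2 * c ^ 2)
    (hlx : l ∣ x) (hly : l ∣ y)
    (hcong : (2 * a * b * l) ∣ (x - ν * y)) :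
    l ^ 2 ∣ a * b * c ^ 2 := by
  obtain ⟨x', rfl⟩ := hlx
  obtain ⟨y', rfl⟩ := hly
  have hcong' : 2 * (a * b) ∣ x' - ν * y' := by
    rw [← mul_dvd_mul_iff_right hl.ne_zero, ← mul_assoc, sub_mul, mul_assoc ν]
    simpa only [mul_comm l] using hcong
  obtain ⟨t, ht⟩ := four_mul_dvd_sq_sub_mul_sq hcong' (by rwa [← mul_assoc])
  refine ⟨t, mul_left_cancel₀ (by positivity : 4 * a * b ≠ 0) ?_⟩
  linear_combination -hxy + l ^ 2 * ht

/-- divisibility claim of Proposition 5.3.  Let `a, b, c ≥ 1` with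
`gcd(a,b) = 1`, `ν` with `gcd(ν, 2ab) = 1`, and `d ≡ ν² (mod 4ab)`.  If a prime `l` and
integers `x, y` satisfy `x² − dy² = 4a²b²c²`, `l ∣ x`, `l ∣ y` and `2ab·l ∣ x − νy`,
then `l² ∣ abc²`. -/
theorem nu_divisible_prime_sq_dvd
    (a b c : ℤ) (ha : 1 ≤ a) (hb : 1 ≤ b) (hc : 1 ≤ c)
    (hab : Int.gcd a b = 1) (ν d : ℤ)
    (hν : Int.gcd ν (2 * a * b) = 1)
    (hd : (4 * a * b) ∣ (d - ν ^ 2))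
    (l : ℤ) (hl : Prime l) (x y : ℤ)
    (hxy : x ^ 2 - d * y ^ 2 = 4 * a ^ 2 * b ^ 2 * c ^ 2)
    (hlx : l ∣ x) (hly : l ∣ y)
    (hcong : (2 * a * b * l) ∣ (x - ν * y)) :
    l ^ 2 ∣ a * b * c ^ 2 :=
  nu_divisible_prime_sq_dvd_general a b c ha hb ν d hd l hl x y hxy hlx hly hcong
end
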